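/- arXiv:2405.18169 — 6 statements merged into one kernel-verified Lean document; each statement's English description precedes it below -/
import Mathlib

section
/- Let d ≥ 3 and let w_t(o,r) denote the number of walks of length t in the d-regular tree starting at a fixed root o and ending at distance r from o. Then for all integers t, y, r ≥ 0 with t/2 ≤ y ≤ t and r = 2y − t, one has w_t(o,r) ≥ (1/t)·C(t,y)·(d−1)^y (for t ≥ 1). -/
open SimpleGraph Walk

open SimpleGraph Walk Finset

section Helpers

/-- Count of `true`s of `g` below `i`. -/
def bcount (g : ℕ → Bool) (i : ℕ) : ℕ := ((Finset.range i).filter (fun j => g j = true)).card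

@[simp] lemma bcount_zero (g : ℕ → Bool) : bcount g 0 = 0 := by simp [bcount]

lemma bcount_succ (g : ℕ → Bool) (i : ℕ) :
    bcount g (i + 1) = bcount g i + if g i then 1 else 0 := by
  unfold bcount
  rw [Finset.range_add_one, Finset.filter_insert]
  split
  · rw [Finset.card_insert_of_notMem (fun hmem => by
      simpa using (Finset.mem_filter.1 hmem).1)]
  · simp

variable {V : Type*} {G : SimpleGraph V}

/-- Build a walk from a sequence of vertices that are successively adjacent. -/
def mkWalk (G : SimpleGraph V) : (n : ℕ) → (f : ℕ → V) → (∀ i < n, G.Adj (f i) (f (i+1))) →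
    G.Walk (f 0) (f n)
  | 0, _, _ => Walk.nil
  | (n+1), f, h => Walk.cons (h 0 (Nat.succ_pos n))
      (mkWalk G n (fun i => f (i+1)) (fun i hi => h (i+1) (by omega)))

lemma mkWalk_length (n : ℕ) (f : ℕ → V) (h : ∀ i < n, G.Adj (f i) (f (i+1))) :
    (mkWalk G n f h).length = n := by
  induction n generalizing f with
  | zero => rfl
  | succ n ih => simp [mkWalk, ih]

lemma mkWalk_getVert (n : ℕ) (f : ℕ → V) (h : ∀ i < n, G.Adj (f i) (f (i+1)))
    {i : ℕ} (hi : i ≤ n) : (mkWalk G n f h).getVert i = f i := by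
  induction n generalizing f i with
  | zero => interval_cases i; rfl
  | succ n ih =>
    cases i with
    | zero => simp [mkWalk]
    | succ i => simpa [mkWalk, Walk.getVert_cons_succ] using ih _ _ (by omega)

lemma walk_ext {u v : V} (p : G.Walk u v) : ∀ (q : G.Walk u v), p.length = q.length →
    (∀ i, p.getVert i = q.getVert i) → p = q := by
  induction p with
  | nil =>
    intro q hl _
    cases q with
    | nil => rfl
    | cons h' q' => simp at hl
  | cons h p ih =>
    intro q hl hg
    cases q with
    | nil => simp at hl
    | cons h' q' =>
      have hb := hg 1
      rw [Walk.getVert_cons_succ (n := 0), Walk.getVert_cons_succ (n := 0), Walk.getVert_zero,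
        Walk.getVert_zero] at hb
      subst hb
      obtain rfl := ih q' (by simpa using hl)
        (fun i => by simpa [Walk.getVert_cons_succ] using hg (i+1))
      rfl

end Helpers

section Rot

lemma kmin_exists (u : ℕ → ℕ) (t : ℕ) (ht : 1 ≤ t) (h0 : u 0 = 0) (hty : t ≤ 2 * u t) :
    ∃ k, k < t ∧ ∀ m ≤ t, 2 * u k + m ≤ 2 * u m + k := by
  obtain ⟨k, hk, hmin⟩ := Finset.exists_min_image (Finset.range t)
    (fun m => 2 * u m + (t - m)) ⟨0, Finset.mem_range.2 ht⟩
  rw [Finset.mem_range] at hk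
  refine ⟨k, hk, fun m hm => ?_⟩
  rcases eq_or_lt_of_le hm with rfl | hmt
  · have h00 := hmin 0 (Finset.mem_range.2 ht)
    simp only [h0] at h00
    omega
  · have := hmin m (Finset.mem_range.2 hmt)
    omega

lemma rot_lemma (t y k : ℕ) (hty : t ≤ 2 * y) (Sn : Finset ℕ)
    (hsub : ∀ j ∈ Sn, j < t) (hcard : Sn.card = y) (hk : k < t)
    (hmin : ∀ m ≤ t, 2 * bcount (fun j => decide (j ∈ Sn)) k + m ≤
      2 * bcount (fun j => decide (j ∈ Sn)) m + k) :
    (∀ i ≤ t, i ≤ 2 * bcount (fun i => decide ((k + i) % t ∈ Sn)) i) ∧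
      bcount (fun i => decide ((k + i) % t ∈ Sn)) t = y := by
  set u : ℕ → ℕ := bcount (fun j => decide (j ∈ Sn)) with hu
  set cnt : ℕ → ℕ := bcount (fun i => decide ((k + i) % t ∈ Sn)) with hcnt
  have hustep : ∀ m, u (m+1) = u m + if m ∈ Sn then 1 else 0 := by
    intro m
    rw [hu, bcount_succ]
    by_cases hm : m ∈ Sn <;> simp [hm]
  have hut : u t = y := by
    rw [hu, ← hcard, bcount]
    congr 1
    ext j
    simp only [Finset.mem_filter, Finset.mem_range, decide_eq_true_eq]
    exact ⟨fun h => h.2, fun h => ⟨hsub j h, h⟩⟩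
  have F1 : ∀ i, k + i ≤ t → cnt i + u k = u (k + i) := by
    intro i
    induction i with
    | zero => simp [hcnt]
    | succ i ih =>
      intro hi
      have hmod : (k + i) % t = k + i := Nat.mod_eq_of_lt (by omega)
      rw [hcnt, bcount_succ, ← hcnt, show k + (i+1) = (k+i) + 1 by omega, hustep, hmod]
      have := ih (by omega)
      by_cases hm : k + i ∈ Sn <;> simp [hm] <;> omega
  have F2 : ∀ j, j ≤ k → cnt (t - k + j) + u k = y + u j := by
    intro j
    induction j with
    | zero =>
      intro _
      have := F1 (t - k) (by omega)
      rw [show k + (t - k) = t by omega, hut] at this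
      simpa [hu, bcount] using this
    | succ j ih =>
      intro hj
      have hjt : j < t := by omega
      rw [show t - k + (j+1) = (t - k + j) + 1 by omega, hcnt, bcount_succ, ← hcnt,
        show k + (t - k + j) = t + j by omega, Nat.add_mod_left, Nat.mod_eq_of_lt hjt,
        hustep]
      have := ih (by omega)
      by_cases hm : j ∈ Sn <;> simp [hm] <;> omega
  constructor
  · intro i hi
    rcases le_or_gt (k + i) t with h | h
    · have hf := F1 i h
      have hm := hmin (k + i) h
      omega
    · have hj : i = t - k + (k + i - t) := by omega
      have hf := F2 (k + i - t) (by omega)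
      rw [← hj] at hf
      have hm := hmin (k + i - t) (by omega)
      omega
  · have := F2 k le_rfl
    rw [show t - k + k = t by omega] at this
    omega

lemma exists_rot_index {t k j : ℕ} (hk : k < t) (hj : j < t) :
    ∃ i, i < t ∧ (k + i) % t = j := by
  rcases le_or_gt k j with h | h
  · exact ⟨j - k, by omega, by rw [show k + (j - k) = j by omega]; exact Nat.mod_eq_of_lt hj⟩
  · exact ⟨t + j - k, by omega, by
      rw [show k + (t + j - k) = t + j by omega, Nat.add_mod_left]
      exact Nat.mod_eq_of_lt hj⟩

end Rot

section Tree

variable {V : Type*} {G : SimpleGraph V}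

lemma isPath_concat' {u v w : V} {p : G.Walk u v} (hp : p.IsPath) (h : G.Adj v w)
    (hw : w ∉ p.support) : (p.concat h).IsPath := by
  rw [← Walk.isPath_reverse_iff, Walk.reverse_concat]
  exact hp.reverse.cons (by simpa using hw)

lemma tree_path_length (hconn : G.Connected) (hacyc : G.IsAcyclic) {a b : V}
    (p : G.Walk a b) (hp : p.IsPath) : p.length = G.dist a b := by
  classical
  obtain ⟨w, hw⟩ := hconn.exists_walk_length_eq_dist a b
  have h1 : G.dist a b ≤ p.length := SimpleGraph.dist_le p
  have h2 : (⟨p, hp⟩ : G.Path a b) = ⟨w.bypass, w.bypass_isPath⟩ := hacyc.path_unique _ _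
  have h3 : p = w.bypass := congrArg Subtype.val h2
  have h4 : w.bypass.length ≤ w.length := Walk.length_bypass_le w
  have h5 : p.length = w.bypass.length := by rw [h3]
  omega

lemma tree_adj_dist (hconn : G.Connected) (hacyc : G.IsAcyclic) (o : V) {u v : V}
    (h : G.Adj u v) : G.dist o v = G.dist o u + 1 ∨ G.dist o u = G.dist o v + 1 := by
  classical
  obtain ⟨p, hp, hlen⟩ := (hconn o u).exists_path_of_dist
  by_cases hv : v ∈ p.support
  · right
    have h1 := tree_path_length hconn hacyc _ (hp.takeUntil hv)
    have h2 := tree_path_length hconn hacyc _ (hp.dropUntil hv)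
    have h3 : G.dist v u = 1 := SimpleGraph.dist_eq_one_iff_adj.2 h.symm
    have h4 : (p.takeUntil v hv).length + (p.dropUntil v hv).length = p.length := by
      rw [← Walk.length_append, p.take_spec hv]
    omega
  · left
    have hcp : (p.concat h).IsPath := isPath_concat' hp h hv
    have := tree_path_length hconn hacyc _ hcp
    rw [Walk.length_concat] at this
    omega

lemma tree_parent_unique (hconn : G.Connected) (hacyc : G.IsAcyclic) (o : V) {v w₁ w₂ : V}
    (h₁ : G.Adj v w₁) (h₂ : G.Adj v w₂) (hd₁ : G.dist o w₁ + 1 = G.dist o v)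
    (hd₂ : G.dist o w₂ + 1 = G.dist o v) : w₁ = w₂ := by
  classical
  obtain ⟨p₁, hp₁, hl₁⟩ := (hconn o w₁).exists_path_of_dist
  obtain ⟨p₂, hp₂, hl₂⟩ := (hconn o w₂).exists_path_of_dist
  have hv₁ : v ∉ p₁.support := by
    intro hmem
    have t1 := tree_path_length hconn hacyc _ (hp₁.takeUntil hmem)
    have t2 : (p₁.takeUntil v hmem).length + (p₁.dropUntil v hmem).length = p₁.length := by
      rw [← Walk.length_append, p₁.take_spec hmem]
    omega
  have hv₂ : v ∉ p₂.support := by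
    intro hmem
    have t1 := tree_path_length hconn hacyc _ (hp₂.takeUntil hmem)
    have t2 : (p₂.takeUntil v hmem).length + (p₂.dropUntil v hmem).length = p₂.length := by
      rw [← Walk.length_append, p₂.take_spec hmem]
    omega
  have hq₁ : (p₁.concat h₁.symm).IsPath := isPath_concat' hp₁ h₁.symm hv₁
  have hq₂ : (p₂.concat h₂.symm).IsPath := isPath_concat' hp₂ h₂.symm hv₂
  have huniq := hacyc.path_unique (⟨p₁.concat h₁.symm, hq₁⟩ : G.Path o v) ⟨p₂.concat h₂.symm, hq₂⟩
  obtain ⟨hv, -⟩ := Walk.concat_inj (congrArg Subtype.val huniq)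
  exact hv

lemma tree_children [G.LocallyFinite] {d : ℕ} (hreg : G.IsRegularOfDegree d)
    (hconn : G.Connected) (hacyc : G.IsAcyclic) (o : V) (v : V) :
    ∃ e : Fin (d - 1) ↪ V, ∀ i, G.Adj v (e i) ∧ G.dist o (e i) = G.dist o v + 1 := by
  classical
  have hsplit := Finset.card_filter_add_card_filter_not
    (s := G.neighborFinset v) (p := fun w => G.dist o w = G.dist o v + 1)
  have hP1 : ((G.neighborFinset v).filter
      (fun w => ¬ G.dist o w = G.dist o v + 1)).card ≤ 1 := by
    apply Finset.card_le_one.2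
    intro a ha b hb
    simp only [Finset.mem_filter, SimpleGraph.mem_neighborFinset] at ha hb
    have hda : G.dist o a + 1 = G.dist o v := by
      rcases tree_adj_dist hconn hacyc o ha.1 with h | h
      · exact absurd h ha.2
      · omega
    have hdb : G.dist o b + 1 = G.dist o v := by
      rcases tree_adj_dist hconn hacyc o hb.1 with h | h
      · exact absurd h hb.2
      · omega
    exact tree_parent_unique hconn hacyc o ha.1 hb.1 hda hdb
  have hdeg : (G.neighborFinset v).card = d := hreg v
  have hcard : d - 1 ≤ ((G.neighborFinset v).filter (fun w => G.dist o w = G.dist o v + 1)).card := by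
    omega
  obtain ⟨C', hsub, hcard'⟩ := Finset.exists_subset_card_eq hcard
  refine ⟨⟨fun i => ((C'.equivFinOfCardEq hcard').symm i : V), ?_⟩, ?_⟩
  · intro i j hij
    apply (C'.equivFinOfCardEq hcard').symm.injective
    exact Subtype.ext hij
  · intro i
    have hmem : ((C'.equivFinOfCardEq hcard').symm i : V) ∈
        (G.neighborFinset v).filter (fun w => G.dist o w = G.dist o v + 1) :=
      hsub ((C'.equivFinOfCardEq hcard').symm i).2
    rw [Finset.mem_filter, SimpleGraph.mem_neighborFinset] at hmem
    exact hmem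

lemma tree_parent (hconn : G.Connected) (hacyc : G.IsAcyclic) (o v : V) :
    ∃ w : V, 0 < G.dist o v → G.Adj v w ∧ G.dist o w + 1 = G.dist o v := by
  by_cases h : 0 < G.dist o v
  · obtain ⟨p, hp, hl⟩ := (hconn v o).exists_path_of_dist
    cases p with
    | nil => rw [SimpleGraph.dist_comm, SimpleGraph.dist_self] at h; omega
    | @cons _ b _ hadj q =>
      refine ⟨b, fun _ => ⟨hadj, ?_⟩⟩
      have hq := tree_path_length hconn hacyc q (hp.of_cons)
      rw [Walk.length_cons] at hl
      have e1 : G.dist o b = G.dist b o := SimpleGraph.dist_comm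
      have e2 : G.dist o v = G.dist v o := SimpleGraph.dist_comm
      omega
  · exact ⟨v, fun h' => absurd h' h⟩

end Tree
section Fseq

variable {V κ : Type*}

def fseq (ch : V → κ → V) (par : V → V) (o : V) (ε : ℕ → Bool) (col : ℕ → κ) : ℕ → V
  | 0 => o
  | (i+1) => if ε i then ch (fseq ch par o ε col i) (col i) else par (fseq ch par o ε col i)

@[simp] lemma fseq_zero (ch : V → κ → V) (par : V → V) (o : V) (ε : ℕ → Bool) (col : ℕ → κ) :
    fseq ch par o ε col 0 = o := rfl

lemma fseq_succ (ch : V → κ → V) (par : V → V) (o : V) (ε : ℕ → Bool) (col : ℕ → κ) (i : ℕ) :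
    fseq ch par o ε col (i + 1) =
      if ε i then ch (fseq ch par o ε col i) (col i) else par (fseq ch par o ε col i) := rfl

variable {G : SimpleGraph V} {o : V} {ch : V → κ → V} {par : V → V}

lemma fseq_spec (hch : ∀ v i, G.Adj v (ch v i) ∧ G.dist o (ch v i) = G.dist o v + 1)
    (hpar : ∀ v, 0 < G.dist o v → G.Adj v (par v) ∧ G.dist o (par v) + 1 = G.dist o v)
    (ε : ℕ → Bool) (col : ℕ → κ) (n : ℕ) (hnn : ∀ i ≤ n, i ≤ 2 * bcount ε i) :
    (∀ i ≤ n, G.dist o (fseq ch par o ε col i) = 2 * bcount ε i - i) ∧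
    (∀ i < n, G.Adj (fseq ch par o ε col i) (fseq ch par o ε col (i + 1))) := by
  have hh : ∀ i ≤ n, G.dist o (fseq ch par o ε col i) = 2 * bcount ε i - i := by
    intro i
    induction i with
    | zero => intro _; simp [SimpleGraph.dist_self]
    | succ i ih =>
      intro hi
      have hih := ih (by omega)
      have hb := bcount_succ ε i
      have hni := hnn i (by omega)
      cases hε : ε i with
      | true =>
        rw [fseq_succ, hε, if_pos rfl]
        rw [hε, if_pos rfl] at hb
        rw [(hch (fseq ch par o ε col i) (col i)).2, hih]
        omega
      | false =>
        rw [hε] at hb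
        simp only [Bool.false_eq_true, if_false] at hb
        have hni1 := hnn (i+1) hi
        have hpos : 0 < G.dist o (fseq ch par o ε col i) := by omega
        rw [fseq_succ, hε]
        simp only [Bool.false_eq_true, if_false]
        have := (hpar _ hpos).2
        omega
  refine ⟨hh, fun i hi => ?_⟩
  cases hε : ε i with
  | true =>
    rw [fseq_succ, hε, if_pos rfl]
    exact (hch _ _).1
  | false =>
    have hb := bcount_succ ε i
    rw [hε] at hb
    simp only [Bool.false_eq_true, if_false] at hb
    have hni1 := hnn (i+1) hi
    have hih := hh i (by omega)
    have hpos : 0 < G.dist o (fseq ch par o ε col i) := by omega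
    rw [fseq_succ, hε]
    simp only [Bool.false_eq_true, if_false]
    exact (hpar _ hpos).1

end Fseq

section Fin

variable {V : Type*} {G : SimpleGraph V}

noncomputable def nbrIdx (G : SimpleGraph V) [G.LocallyFinite] {d : ℕ} (hreg : G.IsRegularOfDegree d)
    (v w : V) (h : G.Adj v w) : Fin d :=
  finCongr (hreg v) ((G.neighborFinset v).equivFin ⟨w, (G.mem_neighborFinset v w).2 h⟩)

lemma nbrIdx_inj' [G.LocallyFinite] {d : ℕ} (hreg : G.IsRegularOfDegree d)
    {v₁ v₂ w₁ w₂ : V} (h₁ : G.Adj v₁ w₁) (h₂ : G.Adj v₂ w₂) (hv : v₁ = v₂)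
    (he : nbrIdx G hreg v₁ w₁ h₁ = nbrIdx G hreg v₂ w₂ h₂) : w₁ = w₂ := by
  subst hv
  unfold nbrIdx at he
  have h3 := (finCongr (hreg v₁)).injective he
  have h4 := ((G.neighborFinset v₁).equivFin).injective h3
  exact congrArg Subtype.val h4

lemma walks_finite (G : SimpleGraph V) [G.LocallyFinite] {d : ℕ}
    (hreg : G.IsRegularOfDegree d) (o : V) (t : ℕ) (P : V → Prop) :
    Finite {q : Σ v : V, G.Walk o v // q.2.length = t ∧ P q.1} := by
  classical
  have hadj : ∀ (q : {q : Σ v : V, G.Walk o v // q.2.length = t ∧ P q.1}) (i : ℕ), i < t →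
      G.Adj (q.1.2.getVert i) (q.1.2.getVert (i+1)) := by
    intro q i hi
    exact q.1.2.adj_getVert_succ (by rw [q.2.1]; exact hi)
  apply Finite.of_injective (f := fun q => (fun i : Fin t =>
    nbrIdx G hreg (q.1.2.getVert i.1) (q.1.2.getVert (i.1+1)) (hadj q i.1 i.2)))
  intro q₁ q₂ heq
  have hgv : ∀ i, i ≤ t → q₁.1.2.getVert i = q₂.1.2.getVert i := by
    intro i
    induction i with
    | zero => intro _; rw [Walk.getVert_zero, Walk.getVert_zero]
    | succ i ih =>
      intro hi
      have h0 := ih (by omega)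
      have h1 := congrFun heq ⟨i, by omega⟩
      exact nbrIdx_inj' hreg _ _ h0 h1
  -- endpoints are equal
  obtain ⟨⟨v₁, w₁⟩, hq₁⟩ := q₁
  obtain ⟨⟨v₂, w₂⟩, hq₂⟩ := q₂
  simp only at hgv hq₁ hq₂
  have hv : v₁ = v₂ := by
    have e1 : w₁.getVert t = v₁ := by rw [← hq₁.1]; exact w₁.getVert_length
    have e2 : w₂.getVert t = v₂ := by rw [← hq₂.1]; exact w₂.getVert_length
    rw [← e1, ← e2]
    exact hgv t le_rfl
  subst hv
  have hw : w₁ = w₂ := by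
    apply walk_ext
    · rw [hq₁.1, hq₂.1]
    · intro i
      rcases le_or_gt i t with h | h
      · exact hgv i h
      · rw [Walk.getVert_of_length_le _ (le_of_eq_of_le hq₁.1 h.le),
          Walk.getVert_of_length_le _ (le_of_eq_of_le hq₂.1 h.le)]
  subst hw
  rfl

end Fin
/-- Lower bound: in a `d`-regular tree (`d ≥ 3`), the number `w_t(o,r)` of walks of length `t`
from the root `o` ending at distance `r = 2y−t` from `o` satisfies
`w_t(o,r) ≥ (1/t)·C(t,y)·(d−1)^y` (stated as `C(t,y)·(d−1)^y ≤ t · w_t(o,r)`). -/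
theorem walk_count_lower_bound (d : ℕ) (hd : 3 ≤ d) {V : Type*} (G : SimpleGraph V)
    [G.LocallyFinite] (hreg : G.IsRegularOfDegree d) (hconn : G.Connected)
    (hacyc : G.IsAcyclic) (o : V) (t y : ℕ) (ht : 1 ≤ t) (h1 : t ≤ 2 * y) (h2 : y ≤ t) :
    t.choose y * (d - 1) ^ y ≤
      t * Nat.card {q : Σ v : V, G.Walk o v //
        q.2.length = t ∧ G.dist o q.1 = 2 * y - t} := by
  classical
  choose ch hch using fun v => tree_children hreg hconn hacyc o v
  choose par hpar using fun v => tree_parent hconn hacyc o v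
  let chf : V → Fin (d - 1) → V := fun v i => ch v i
  have hch' : ∀ (v : V) (i : Fin (d - 1)),
      G.Adj v (chf v i) ∧ G.dist o (chf v i) = G.dist o v + 1 := fun v i => hch v i
  -- the data type we inject from
  let A := ({S : Finset (Fin t) // S.card = y} × (Fin y → Fin (d - 1)))
  let Sn : A → Finset ℕ := fun a => a.1.1.map Fin.valEmbedding
  have hSnsub : ∀ (a : A) (j : ℕ), j ∈ Sn a → j < t := by
    intro a j hj
    simp only [Sn, Finset.mem_map, Fin.valEmbedding_apply] at hj
    obtain ⟨x, _, rfl⟩ := hj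
    exact x.2
  have hSncard : ∀ a : A, (Sn a).card = y := by
    intro a
    simp only [Sn, Finset.card_map]
    exact a.1.2
  have hut : ∀ a : A, bcount (fun j => decide (j ∈ Sn a)) t = y := by
    intro a
    rw [bcount, show (Finset.range t).filter (fun j => decide (j ∈ Sn a) = true) = Sn a from ?_]
    · exact hSncard a
    · ext j
      simp only [Finset.mem_filter, Finset.mem_range, decide_eq_true_eq]
      exact ⟨fun h => h.2, fun h => ⟨hSnsub a j h, h⟩⟩
  have hmain : ∀ a : A, ∃ k, k < t ∧ ∀ m ≤ t,
      2 * bcount (fun j => decide (j ∈ Sn a)) k + m ≤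
        2 * bcount (fun j => decide (j ∈ Sn a)) m + k := by
    intro a
    apply kmin_exists _ _ ht (by simp)
    rw [hut a]
    omega
  choose kk hklt hkmin using hmain
  let E : A → ℕ → Bool := fun a i => decide ((kk a + i) % t ∈ Sn a)
  let C : A → ℕ → Fin (d - 1) := fun a i =>
    if h : (kk a + i) % t ∈ Sn a then
      a.2 (((Sn a).orderIsoOfFin (hSncard a)).symm ⟨(kk a + i) % t, h⟩)
    else ⟨0, by omega⟩
  have hrot : ∀ a : A, (∀ i ≤ t, i ≤ 2 * bcount (E a) i) ∧ bcount (E a) t = y :=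
    fun a => rot_lemma t y (kk a) h1 (Sn a) (hSnsub a) (hSncard a) (hklt a) (hkmin a)
  have hspec : ∀ a : A,
      (∀ i ≤ t, G.dist o (fseq chf par o (E a) (C a) i) = 2 * bcount (E a) i - i) ∧
      (∀ i < t, G.Adj (fseq chf par o (E a) (C a) i) (fseq chf par o (E a) (C a) (i + 1))) :=
    fun a => fseq_spec hch' hpar (E a) (C a) t (hrot a).1
  haveI hWfin : Finite {q : Σ v : V, G.Walk o v //
      q.2.length = t ∧ G.dist o q.1 = 2 * y - t} :=
    walks_finite G hreg o t (fun v => G.dist o v = 2 * y - t)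
  -- the injection
  let Φ : A → Fin t × {q : Σ v : V, G.Walk o v //
      q.2.length = t ∧ G.dist o q.1 = 2 * y - t} := fun a =>
    (⟨kk a, hklt a⟩,
     ⟨⟨fseq chf par o (E a) (C a) t, mkWalk G t (fseq chf par o (E a) (C a)) (hspec a).2⟩,
      mkWalk_length t _ _,
      by
        have hd' := (hspec a).1 t le_rfl
        rw [(hrot a).2] at hd'
        exact hd'⟩)
  have hinj : Function.Injective Φ := by
    rintro a₁ a₂ heq
    have hk : kk a₁ = kk a₂ := by
      have := congrArg (fun p => (p.1 : ℕ)) heq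
      simpa [Φ] using this
    have hsub : (⟨fseq chf par o (E a₁) (C a₁) t,
        mkWalk G t (fseq chf par o (E a₁) (C a₁)) (hspec a₁).2⟩ : Σ v : V, G.Walk o v) =
        ⟨fseq chf par o (E a₂) (C a₂) t,
        mkWalk G t (fseq chf par o (E a₂) (C a₂)) (hspec a₂).2⟩ :=
      congrArg (fun p => (p.2 : {q : Σ v : V, G.Walk o v //
        q.2.length = t ∧ G.dist o q.1 = 2 * y - t}).val) heq
    have hgv : ∀ i ≤ t, fseq chf par o (E a₁) (C a₁) i = fseq chf par o (E a₂) (C a₂) i := by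
      intro i hi
      have e₁ := mkWalk_getVert t (fseq chf par o (E a₁) (C a₁)) (hspec a₁).2 hi
      have e₂ := mkWalk_getVert t (fseq chf par o (E a₂) (C a₂)) (hspec a₂).2 hi
      have e₃ := congrArg (fun (q : Σ v : V, G.Walk o v) => q.2.getVert i) hsub
      simp only at e₃
      exact e₁.symm.trans (e₃.trans e₂)
    have hstep : ∀ i < t, E a₁ i = E a₂ i ∧ (E a₁ i = true → C a₁ i = C a₂ i) := by
      intro i hi
      have hv : fseq chf par o (E a₁) (C a₁) i = fseq chf par o (E a₂) (C a₂) i := hgv i hi.le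
      have hv1 := hgv (i+1) hi
      have d₁ := (hspec a₁).1 i hi.le
      have d₂ := (hspec a₂).1 i hi.le
      have d₁' := (hspec a₁).1 (i+1) hi
      have d₂' := (hspec a₂).1 (i+1) hi
      rw [hv] at d₁
      rw [hv1] at d₁'
      have hb₁ := bcount_succ (E a₁) i
      have hb₂ := bcount_succ (E a₂) i
      have hnn₁ := (hrot a₁).1 (i+1) hi
      have hnn₂ := (hrot a₂).1 (i+1) hi
      have hnn₁' := (hrot a₁).1 i hi.le
      have hnn₂' := (hrot a₂).1 i hi.le
      by_cases hε₁ : E a₁ i = true <;> by_cases hε₂ : E a₂ i = true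
      · -- both up-steps
        refine ⟨by rw [hε₁, hε₂], fun _ => ?_⟩
        have e1 := fseq_succ chf par o (E a₁) (C a₁) i
        have e2 := fseq_succ chf par o (E a₂) (C a₂) i
        rw [if_pos hε₁] at e1
        rw [if_pos hε₂] at e2
        have e3 : chf (fseq chf par o (E a₁) (C a₁) i) (C a₁ i) =
            chf (fseq chf par o (E a₂) (C a₂) i) (C a₂ i) := by
          rw [← e1, ← e2]; exact hv1
        rw [hv] at e3
        have e4 : (ch (fseq chf par o (E a₂) (C a₂) i)) (C a₁ i) =
            (ch (fseq chf par o (E a₂) (C a₂) i)) (C a₂ i) := e3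
        exact (ch _).injective e4
      · exfalso
        rw [if_pos hε₁] at hb₁
        rw [if_neg hε₂] at hb₂
        omega
      · exfalso
        rw [if_neg hε₁] at hb₁
        rw [if_pos hε₂] at hb₂
        omega
      · refine ⟨?_, fun h => absurd h hε₁⟩
        rw [Bool.not_eq_true] at hε₁ hε₂
        rw [hε₁, hε₂]
    -- recover the subset
    obtain ⟨⟨S₁, hS₁⟩, c₁⟩ := a₁
    obtain ⟨⟨S₂, hS₂⟩, c₂⟩ := a₂
    have hSn : Sn ⟨⟨S₁, hS₁⟩, c₁⟩ = Sn ⟨⟨S₂, hS₂⟩, c₂⟩ := by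
      ext j
      by_cases hj : j < t
      · obtain ⟨i, hit, hmod⟩ := exists_rot_index (hklt ⟨⟨S₁, hS₁⟩, c₁⟩) hj
        have h' : decide ((kk ⟨⟨S₁, hS₁⟩, c₁⟩ + i) % t ∈ Sn ⟨⟨S₁, hS₁⟩, c₁⟩) =
            decide ((kk ⟨⟨S₂, hS₂⟩, c₂⟩ + i) % t ∈ Sn ⟨⟨S₂, hS₂⟩, c₂⟩) := (hstep i hit).1
        rw [← hk, hmod] at h'
        rw [decide_eq_decide] at h'
        exact h'
      · constructor <;> intro hmem <;> exact absurd (hSnsub _ _ hmem) hj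
    have hS : S₁ = S₂ := by
      have : S₁.map Fin.valEmbedding = S₂.map Fin.valEmbedding := hSn
      exact Finset.map_injective Fin.valEmbedding this
    subst hS
    have hc : c₁ = c₂ := by
      funext b
      have hjmem : ((((Sn ⟨⟨S₁, hS₁⟩, c₁⟩).orderIsoOfFin (hSncard ⟨⟨S₁, hS₁⟩, c₁⟩)) b : Sn ⟨⟨S₁, hS₁⟩, c₁⟩) : ℕ) ∈ Sn ⟨⟨S₁, hS₁⟩, c₁⟩ :=
        ((((Sn ⟨⟨S₁, hS₁⟩, c₁⟩).orderIsoOfFin (hSncard ⟨⟨S₁, hS₁⟩, c₁⟩)) b)).2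
      have hjt : ((((Sn ⟨⟨S₁, hS₁⟩, c₁⟩).orderIsoOfFin (hSncard ⟨⟨S₁, hS₁⟩, c₁⟩)) b : Sn ⟨⟨S₁, hS₁⟩, c₁⟩) : ℕ) < t :=
        hSnsub _ _ hjmem
      obtain ⟨i, hit, hmod⟩ := exists_rot_index (hklt ⟨⟨S₁, hS₁⟩, c₁⟩) hjt
      have hmem₁ : (kk ⟨⟨S₁, hS₁⟩, c₁⟩ + i) % t ∈ Sn ⟨⟨S₁, hS₁⟩, c₁⟩ := by rw [hmod]; exact hjmem
      have hε : E ⟨⟨S₁, hS₁⟩, c₁⟩ i = true := by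
        show decide ((kk ⟨⟨S₁, hS₁⟩, c₁⟩ + i) % t ∈ Sn ⟨⟨S₁, hS₁⟩, c₁⟩) = true
        simpa using hmem₁
      have hcol := (hstep i hit).2 hε
      have hmem₂ : (kk ⟨⟨S₁, hS₂⟩, c₂⟩ + i) % t ∈ Sn ⟨⟨S₁, hS₂⟩, c₂⟩ := by
        rw [← hk]; exact hmem₁
      have hC1 : C ⟨⟨S₁, hS₁⟩, c₁⟩ i =
          c₁ (((Sn ⟨⟨S₁, hS₁⟩, c₁⟩).orderIsoOfFin (hSncard ⟨⟨S₁, hS₁⟩, c₁⟩)).symm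
            ⟨(kk ⟨⟨S₁, hS₁⟩, c₁⟩ + i) % t, hmem₁⟩) := dif_pos hmem₁
      have hC2 : C ⟨⟨S₁, hS₂⟩, c₂⟩ i =
          c₂ (((Sn ⟨⟨S₁, hS₂⟩, c₂⟩).orderIsoOfFin (hSncard ⟨⟨S₁, hS₂⟩, c₂⟩)).symm
            ⟨(kk ⟨⟨S₁, hS₂⟩, c₂⟩ + i) % t, hmem₂⟩) := dif_pos hmem₂
      rw [hC1, hC2] at hcol
      have hsubeq₁ : (⟨(kk ⟨⟨S₁, hS₁⟩, c₁⟩ + i) % t, hmem₁⟩ : Sn ⟨⟨S₁, hS₁⟩, c₁⟩) =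
          ((Sn ⟨⟨S₁, hS₁⟩, c₁⟩).orderIsoOfFin (hSncard ⟨⟨S₁, hS₁⟩, c₁⟩)) b := by
        apply Subtype.ext
        show (kk ⟨⟨S₁, hS₁⟩, c₁⟩ + i) % t = _
        rw [hmod]
      have hsubeq₂ : (⟨(kk ⟨⟨S₁, hS₂⟩, c₂⟩ + i) % t, hmem₂⟩ : Sn ⟨⟨S₁, hS₂⟩, c₂⟩) =
          ((Sn ⟨⟨S₁, hS₂⟩, c₂⟩).orderIsoOfFin (hSncard ⟨⟨S₁, hS₂⟩, c₂⟩)) b := by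
        apply Subtype.ext
        show (kk ⟨⟨S₁, hS₂⟩, c₂⟩ + i) % t = _
        rw [← hk, hmod]
      rw [hsubeq₁, hsubeq₂] at hcol
      simp only [OrderIso.symm_apply_apply] at hcol
      exact hcol
    subst hc
    rfl
  -- count
  have hle := Nat.card_le_card_of_injective Φ hinj
  have hAcard : Nat.card A = t.choose y * (d - 1) ^ y := by
    rw [Nat.card_eq_fintype_card]
    simp [A, Fintype.card_finset_len]
  have hPcard : Nat.card (Fin t × {q : Σ v : V, G.Walk o v //
      q.2.length = t ∧ G.dist o q.1 = 2 * y - t}) =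
      t * Nat.card {q : Σ v : V, G.Walk o v //
        q.2.length = t ∧ G.dist o q.1 = 2 * y - t} := by
    rw [Nat.card_prod, Nat.card_eq_fintype_card, Fintype.card_fin]
  rw [hAcard, hPcard] at hle
  exact hle
end

section
/- Let d ≥ 3. There is a constant c > 0 such that for all integers t, y, r ≥ 0 with t/2 ≤ y ≤ t and r = 2y − t ≥ 3, the number w_t(o,r) of walks of length t in the d-regular tree from the root o ending at distance r from o satisfies w_t(o,r) ≤ c·C(t,y)·(d−1)^y. -/
open SimpleGraph

namespace WCUB

variable {V : Type*} {G : SimpleGraph V}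

private lemma path_length (hacyc : G.IsAcyclic) (hconn : G.Connected)
    {u v : V} {p : G.Walk u v} (hp : p.IsPath) : p.length = G.dist u v := by
  obtain ⟨q, hq, hql⟩ := hconn.exists_path_of_dist u v
  have h := hacyc.path_unique ⟨p, hp⟩ ⟨q, hq⟩
  rw [← hql]
  exact congrArg Walk.length (congrArg Subtype.val h)

private lemma isPath_concat {u v w : V} {p : G.Walk u v} (hp : p.IsPath) (h : G.Adj v w)
    (hw : w ∉ p.support) : (p.concat h).IsPath := by
  rw [Walk.isPath_def] at *
  rw [Walk.support_concat]
  simp [List.concat_eq_append, List.nodup_append, hp, hw]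
  intro a ha hae
  exact hw (hae ▸ ha)

private lemma exists_concat_of_length_pos {a b : V} (w : G.Walk a b) (hw : 0 < w.length) :
    ∃ (u : V) (p : G.Walk a u) (h : G.Adj u b), w = p.concat h := by
  cases w with
  | nil => simp at hw
  | cons h p =>
    obtain ⟨x, q, h', hq⟩ := Walk.exists_cons_eq_concat h p
    exact ⟨x, q, h', hq⟩

private lemma adj_dist (hacyc : G.IsAcyclic) (hconn : G.Connected) (o : V) {u v : V}
    (h : G.Adj u v) :
    G.dist o v = G.dist o u + 1 ∨ G.dist o u = G.dist o v + 1 := by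
  classical
  obtain ⟨p, hp, hpl⟩ := hconn.exists_path_of_dist o u
  by_cases hv : v ∈ p.support
  · right
    have h1 : (p.takeUntil v hv).IsPath := hp.takeUntil hv
    have h2 : (p.dropUntil v hv).IsPath := hp.dropUntil hv
    have hsingle : (Walk.cons h.symm Walk.nil : G.Walk v u).IsPath := by
      simp [Walk.isPath_def, h.ne']
    have heq := hacyc.path_unique ⟨p.dropUntil v hv, h2⟩ ⟨Walk.cons h.symm Walk.nil, hsingle⟩
    have hlen : (p.dropUntil v hv).length = 1 := by
      have := congrArg (fun q : G.Path v u => q.1.length) heq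
      simpa using this
    have hsum : (p.takeUntil v hv).length + (p.dropUntil v hv).length = p.length := by
      rw [← Walk.length_append, p.take_spec hv]
    rw [← hpl, ← path_length hacyc hconn h1]
    omega
  · left
    have hcp : (p.concat h).IsPath := isPath_concat hp h hv
    rw [← path_length hacyc hconn hcp, Walk.length_concat, hpl]

private lemma exists_parent (hacyc : G.IsAcyclic) (hconn : G.Connected) (o : V) {u : V}
    (hu : G.dist o u ≠ 0) :
    ∃ z : V, G.Adj u z ∧ G.dist o z + 1 = G.dist o u ∧
      ∀ v : V, G.Adj u v → G.dist o v + 1 = G.dist o u → v = z := by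
  classical
  obtain ⟨p, hp, hpl⟩ := hconn.exists_path_of_dist o u
  have hlen : 0 < p.length := by omega
  obtain ⟨z, q, hzq, hpq⟩ := exists_concat_of_length_pos p hlen
  have hqpath : q.IsPath := by
    refine Walk.IsPath.of_append_left (q := Walk.cons hzq Walk.nil) ?_
    rwa [← Walk.concat_eq_append, ← hpq]
  have hqlen : q.length + 1 = p.length := by
    rw [hpq, Walk.length_concat]
  have hdz : G.dist o z + 1 = G.dist o u := by
    rw [← path_length hacyc hconn hqpath, ← hpl]; exact hqlen
  refine ⟨z, hzq.symm, hdz, ?_⟩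
  intro v hv hdv
  obtain ⟨P, hP, hPl⟩ := hconn.exists_path_of_dist o v
  have hunotm : u ∉ P.support := by
    intro hm
    have h1 : (P.takeUntil u hm).IsPath := hP.takeUntil hm
    have h2 := path_length hacyc hconn h1
    have h3 := P.length_takeUntil_le hm
    omega
  have hQ : (P.concat hv.symm).IsPath := isPath_concat hP hv.symm hunotm
  have heq := hacyc.path_unique ⟨P.concat hv.symm, hQ⟩ ⟨q.concat hzq, by rwa [← hpq]⟩
  have heq' : P.concat hv.symm = q.concat hzq := congrArg Subtype.val heq
  obtain ⟨hvz, -⟩ := Walk.concat_inj heq'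
  exact hvz

noncomputable def par (hacyc : G.IsAcyclic) (hconn : G.Connected) (o u : V) : V :=
  if h : G.dist o u ≠ 0 then (exists_parent hacyc hconn o h).choose else o

private lemma par_spec (hacyc : G.IsAcyclic) (hconn : G.Connected) (o : V) {u : V}
    (h : G.dist o u ≠ 0) :
    G.Adj u (par hacyc hconn o u) ∧ G.dist o (par hacyc hconn o u) + 1 = G.dist o u ∧
      ∀ v : V, G.Adj u v → G.dist o v + 1 = G.dist o u → v = par hacyc hconn o u := by
  simp only [par, dif_pos h]
  exact (exists_parent hacyc hconn o h).choose_spec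

/-- the set of "children" (at distance `r`) of a vertex -/
private def X (G : SimpleGraph V) (o u : V) (r : ℕ) : Type _ :=
  {v : V // G.Adj u v ∧ G.dist o v = r}

private instance finX [G.LocallyFinite] (o u : V) (r : ℕ) : Finite (X G o u r) :=
  Finite.of_injective (fun v => (⟨v.1, v.2.1⟩ : G.neighborSet u))
    (fun a b hab => by
      apply Subtype.ext
      simpa [Subtype.ext_iff] using hab)

private lemma cardX_le_d [G.LocallyFinite] {d : ℕ} (hreg : G.IsRegularOfDegree d)
    (o u : V) (r : ℕ) : Nat.card (X G o u r) ≤ d := by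
  have h1 : Nat.card (X G o u r) ≤ Nat.card (G.neighborSet u) :=
    Nat.card_le_card_of_injective (fun v => (⟨v.1, v.2.1⟩ : G.neighborSet u))
      (fun a b hab => by apply Subtype.ext; simpa [Subtype.ext_iff] using hab)
  rwa [Nat.card_eq_fintype_card (α := ↥(G.neighborSet u)), card_neighborSet_eq_degree, hreg u] at h1

private lemma cardX_le (hacyc : G.IsAcyclic) (hconn : G.Connected) [G.LocallyFinite]
    {d : ℕ} (hreg : G.IsRegularOfDegree d) (o : V) {u : V} {r : ℕ}
    (hu : G.dist o u ≠ 0) (hr : G.dist o u + 1 = r) :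
    Nat.card (X G o u r) ≤ d - 1 := by
  obtain ⟨hadj, hdz, -⟩ := par_spec hacyc hconn o hu
  set z := par hacyc hconn o u with hz
  have hinj : Function.Injective
      (fun x : X G o u r ⊕ Unit => (Sum.elim (fun v : X G o u r => (⟨v.1, v.2.1⟩ : G.neighborSet u))
        (fun _ => (⟨z, hadj⟩ : G.neighborSet u))) x) := by
    rintro (a | a) (b | b) hab
    · apply congrArg Sum.inl
      apply Subtype.ext
      simpa [Subtype.ext_iff] using hab
    · exfalso
      have hx : a.1 = z := by simpa [Subtype.ext_iff] using hab
      have h2 : G.dist o z = r := hx ▸ a.2.2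
      omega
    · exfalso
      have hx : b.1 = z := by simpa [Subtype.ext_iff] using hab.symm
      have h2 : G.dist o z = r := hx ▸ b.2.2
      omega
    · simp
  have h1 : Nat.card (X G o u r ⊕ Unit) ≤ Nat.card (G.neighborSet u) :=
    Nat.card_le_card_of_injective _ hinj
  rw [Nat.card_sum, Nat.card_eq_fintype_card (α := G.neighborSet u),
    card_neighborSet_eq_degree, hreg u] at h1
  simp at h1
  omega

private lemma inj_of_cover {A B : Type*} (g : B → Option A)
    (h : ∀ a : A, ∃ b, g b = some a) :
    Function.Injective (fun a : A => (h a).choose) := by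
  intro a a' he
  have h1 := (h a).choose_spec
  have h2 := (h a').choose_spec
  simp only at he
  rw [he, h2] at h1
  exact (Option.some_injective A h1).symm

private lemma card_le_of_cover {A B : Type*} [Finite B] (g : B → Option A)
    (h : ∀ a : A, ∃ b, g b = some a) : Nat.card A ≤ Nat.card B :=
  Nat.card_le_card_of_injective _ (inj_of_cover g h)

private lemma finite_of_cover {A B : Type*} [Finite B] (g : B → Option A)
    (h : ∀ a : A, ∃ b, g b = some a) : Finite A :=
  Finite.of_injective _ (inj_of_cover g h)

/-- surjection-onto-`Option` from `Fin m` for a finite type of card ≤ m -/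
noncomputable def sfun (Y : Type*) [Finite Y] (m : ℕ) (i : Fin m) : Option Y :=
  if h : i.val < Nat.card Y then some ((Finite.equivFin Y).symm ⟨i.val, h⟩) else none

private lemma sfun_spec {Y : Type*} [Finite Y] {m : ℕ} (hm : Nat.card Y ≤ m) (y : Y) :
    ∃ i : Fin m, sfun Y m i = some y := by
  refine ⟨⟨(Finite.equivFin Y y).val, lt_of_lt_of_le (Finite.equivFin Y y).isLt hm⟩, ?_⟩
  rw [sfun, dif_pos ((Finite.equivFin Y y).isLt)]
  simp

private abbrev Tt (G : SimpleGraph V) (o : V) (t : ℕ) : Type _ :=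
  {q : Σ v : V, G.Walk o v // q.2.length = t}

private abbrev Tr (G : SimpleGraph V) (o : V) (t r : ℕ) : Type _ :=
  {q : Σ v : V, G.Walk o v // q.2.length = t ∧ G.dist o q.1 = r}

private lemma sigma_eq_of_length_zero {o v : V} (w : G.Walk o v) (h : w.length = 0) :
    (⟨v, w⟩ : Σ x : V, G.Walk o x) = ⟨o, Walk.nil⟩ := by
  cases w with
  | nil => rfl
  | cons h p => simp at h

private lemma finTt [G.LocallyFinite] (o : V) : ∀ t : ℕ, Finite (Tt G o t)
  | 0 => by
    have : Subsingleton (Tt G o 0) := by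
      constructor
      rintro ⟨⟨v, w⟩, hw⟩ ⟨⟨v', w'⟩, hw'⟩
      apply Subtype.ext
      exact (sigma_eq_of_length_zero w hw).trans (sigma_eq_of_length_zero w' hw').symm
    exact Finite.of_subsingleton
  | (t + 1) => by
    have : Finite (Tt G o t) := finTt o t
    refine finite_of_cover
      (fun b : Σ x : Tt G o t, ↥(G.neighborSet x.1.1) =>
        some (⟨⟨b.2.1, b.1.1.2.concat b.2.2⟩, by exact (Walk.length_concat _ _).trans (congrArg (· + 1) b.1.2)⟩ : Tt G o (t+1)))
      ?_
    rintro ⟨⟨v, w⟩, hw⟩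
    have hw' : w.length = t + 1 := hw
    obtain ⟨u, p, hadj, hpq⟩ := exists_concat_of_length_pos w (by omega)
    have hplen : p.length = t := by
      rw [hpq, Walk.length_concat] at hw'
      omega
    refine ⟨⟨⟨⟨u, p⟩, hplen⟩, ⟨v, hadj⟩⟩, ?_⟩
    apply congrArg some
    apply Subtype.ext
    show (⟨v, p.concat hadj⟩ : Σ x : V, G.Walk o x) = ⟨v, w⟩
    rw [hpq]

private lemma finTr [G.LocallyFinite] (o : V) (t r : ℕ) : Finite (Tr G o t r) := by
  have : Finite (Tt G o t) := finTt o t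
  exact Finite.of_injective (fun a : Tr G o t r => (⟨a.1, a.2.1⟩ : Tt G o t))
    (fun a b hab => Subtype.ext (by simpa [Subtype.ext_iff] using hab))

private lemma card_step [G.LocallyFinite] {d : ℕ} (hacyc : G.IsAcyclic) (hconn : G.Connected)
    (o : V) (t r m : ℕ) (hr : r ≠ 0)
    (hm : ∀ u : V, G.dist o u + 1 = r → Nat.card (X G o u r) ≤ m) :
    Nat.card (Tr G o (t+1) r) ≤ Nat.card (Tr G o t (r-1)) * m + Nat.card (Tr G o t (r+1)) := by
  haveI := finTr (G := G) o t (r-1)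
  haveI := finTr (G := G) o t (r+1)
  have key := card_le_of_cover (A := Tr G o (t+1) r)
    (B := (Tr G o t (r-1) × Fin m) ⊕ Tr G o t (r+1))
    (fun b => match b with
      | Sum.inl (x, i) =>
        (sfun (X G o x.1.1 r) m i).map (fun v =>
          (⟨⟨v.1, x.1.2.concat v.2.1⟩, by rw [Walk.length_concat, x.2.1], v.2.2⟩ : Tr G o (t+1) r))
      | Sum.inr x =>
        some (⟨⟨par hacyc hconn o x.1.1,
            x.1.2.concat (par_spec hacyc hconn o
              (show G.dist o x.1.1 ≠ 0 by rw [x.2.2]; omega)).1⟩,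
          by rw [Walk.length_concat, x.2.1],
          by show G.dist o (par hacyc hconn o x.1.1) = r
             have h2 := (par_spec hacyc hconn o
               (show G.dist o x.1.1 ≠ 0 by rw [x.2.2]; omega)).2.1
             have h3 := x.2.2
             omega⟩ : Tr G o (t+1) r))
    ?_
  · rw [Nat.card_sum, Nat.card_prod, Nat.card_eq_fintype_card (α := Fin m),
      Fintype.card_fin] at key
    exact key
  rintro ⟨⟨v, w⟩, hw, hdist⟩
  have hw' : w.length = t + 1 := hw
  have hdist' : G.dist o v = r := hdist
  obtain ⟨u, p, hadj, hpq⟩ := exists_concat_of_length_pos w (by omega)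
  have hplen : p.length = t := by rw [hpq, Walk.length_concat] at hw'; omega
  rcases adj_dist hacyc hconn o hadj with hcase | hcase
  · have hu : G.dist o u + 1 = r := by omega
    have hx2 : G.dist o u = r - 1 := by omega
    obtain ⟨i, hi⟩ := sfun_spec (hm u hu) (⟨v, hadj, hdist'⟩ : X G o u r)
    refine ⟨Sum.inl (⟨⟨u, p⟩, hplen, hx2⟩, i), ?_⟩
    show (sfun (X G o u r) m i).map _ = _
    rw [hi]
    apply congrArg some
    apply Subtype.ext
    show (⟨v, p.concat hadj⟩ : Σ x : V, G.Walk o x) = ⟨v, w⟩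
    rw [hpq]
  · have hu : G.dist o u = r + 1 := by omega
    have hne : G.dist o u ≠ 0 := by omega
    have hspec := par_spec hacyc hconn o hne
    have hvpar : v = par hacyc hconn o u := hspec.2.2 v hadj (by omega)
    refine ⟨Sum.inr ⟨⟨u, p⟩, hplen, hu⟩, ?_⟩
    apply congrArg some
    apply Subtype.ext
    show (⟨par hacyc hconn o u, p.concat _⟩ : Σ x : V, G.Walk o x) = ⟨v, w⟩
    rw [hpq]
    cases hvpar
    rfl

private lemma card_step0 [G.LocallyFinite] (hacyc : G.IsAcyclic) (hconn : G.Connected)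
    (o : V) (t : ℕ) :
    Nat.card (Tr G o (t+1) 0) ≤ Nat.card (Tr G o t 1) := by
  haveI := finTr (G := G) o t 1
  refine card_le_of_cover
    (fun x : Tr G o t 1 =>
      some (⟨⟨par hacyc hconn o x.1.1,
          x.1.2.concat (par_spec hacyc hconn o
            (show G.dist o x.1.1 ≠ 0 by rw [x.2.2]; omega)).1⟩,
        by rw [Walk.length_concat, x.2.1],
        by show G.dist o (par hacyc hconn o x.1.1) = 0
           have h2 := (par_spec hacyc hconn o
             (show G.dist o x.1.1 ≠ 0 by rw [x.2.2]; omega)).2.1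
           have h3 := x.2.2
           omega⟩ : Tr G o (t+1) 0))
    ?_
  rintro ⟨⟨v, w⟩, hw, hdist⟩
  have hw' : w.length = t + 1 := hw
  have hdist' : G.dist o v = 0 := hdist
  obtain ⟨u, p, hadj, hpq⟩ := exists_concat_of_length_pos w (by omega)
  have hplen : p.length = t := by rw [hpq, Walk.length_concat] at hw'; omega
  have hu : G.dist o u = 1 := by
    rcases adj_dist hacyc hconn o hadj with hcase | hcase <;> omega
  have hne : G.dist o u ≠ 0 := by omega
  have hspec := par_spec hacyc hconn o hne
  have hvpar : v = par hacyc hconn o u := hspec.2.2 v hadj (by omega)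
  refine ⟨⟨⟨u, p⟩, hplen, hu⟩, ?_⟩
  apply congrArg some
  apply Subtype.ext
  show (⟨par hacyc hconn o u, p.concat _⟩ : Σ x : V, G.Walk o x) = ⟨v, w⟩
  rw [hpq]
  cases hvpar
  rfl

private lemma card_empty (o : V) {t r : ℕ} (h : t < r) : Nat.card (Tr G o t r) = 0 := by
  have : IsEmpty (Tr G o t r) := by
    constructor
    rintro ⟨⟨v, w⟩, hw, hdist⟩
    have h1 : G.dist o v ≤ w.length := SimpleGraph.dist_le w
    have hw' : w.length = t := hw
    have hdist' : G.dist o v = r := hdist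
    omega
  exact Nat.card_of_isEmpty

private lemma card_base (o : V) : Nat.card (Tr G o 0 0) ≤ 1 := by
  have hsub : Subsingleton (Tr G o 0 0) := by
    constructor
    rintro ⟨⟨v, w⟩, hw, -⟩ ⟨⟨v', w'⟩, hw', -⟩
    apply Subtype.ext
    exact (sigma_eq_of_length_zero w hw).trans (sigma_eq_of_length_zero w' hw').symm
  have := Nat.card_le_card_of_injective (fun _ : Tr G o 0 0 => (() : Unit))
    (fun a b _ => Subsingleton.elim a b)
  simpa using this

private lemma main_bound [G.LocallyFinite] {d : ℕ} (hd : 3 ≤ d)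
    (hreg : G.IsRegularOfDegree d) (hconn : G.Connected) (hacyc : G.IsAcyclic) (o : V) :
    ∀ t y : ℕ, t ≤ 2 * y →
      2 * Nat.card (Tr G o t (2 * y - t)) ≤
        (if 2 * y = t then 2 else 3) * t.choose y * (d - 1) ^ y := by
  intro t
  induction t with
  | zero =>
    intro y hy
    rcases Nat.eq_zero_or_pos y with rfl | hy1
    · simpa using card_base (G := G) o
    · rw [card_empty (G := G) o (by omega : 0 < 2 * y - 0)]
      simp
  | succ t ih =>
    intro y hy
    have hy1 : 1 ≤ y := by omega
    obtain ⟨y', rfl⟩ : ∃ y', y = y' + 1 := ⟨y - 1, by omega⟩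
    by_cases h0 : 2 * (y' + 1) = t + 1
    · -- r = 0
      rw [if_pos h0, show 2 * (y' + 1) - (t + 1) = 0 by omega]
      have s0 := card_step0 hacyc hconn o t
      have hIH := ih (y' + 1) (by omega)
      rw [if_neg (by omega), show 2 * (y' + 1) - t = 1 by omega] at hIH
      have hsymm : t.choose y' = t.choose (y' + 1) := by
        have h1 : t - (y' + 1) = y' := by omega
        have := Nat.choose_symm (show y' + 1 ≤ t by omega)
        rw [h1] at this
        exact this
      have hpas : (t + 1).choose (y' + 1) = t.choose y' + t.choose (y' + 1) :=
        Nat.choose_succ_succ t y'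
      have h4 : t.choose y' * (d - 1) ^ (y' + 1) = t.choose (y' + 1) * (d - 1) ^ (y' + 1) := by
        rw [hsymm]
      rw [hpas]
      nlinarith [s0, hIH, h4]
    · by_cases h1 : 2 * (y' + 1) = t + 2
      · -- r = 1
        rw [if_neg h0, show 2 * (y' + 1) - (t + 1) = 1 by omega]
        have s1 := card_step (d := d) hacyc hconn o t 1 d (by omega)
          (fun u _ => cardX_le_d hreg o u 1)
        rw [show (1 : ℕ) - 1 = 0 from rfl] at s1
        have hIH0 := ih y' (by omega)
        rw [if_pos (by omega), show 2 * y' - t = 0 by omega] at hIH0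
        have hIH2 := ih (y' + 1) (by omega)
        rw [if_neg (by omega), show 2 * (y' + 1) - t = 2 by omega] at hIH2
        have hpas : (t + 1).choose (y' + 1) = t.choose y' + t.choose (y' + 1) :=
          Nat.choose_succ_succ t y'
        have hdd : 2 * d ≤ 3 * (d - 1) := by omega
        have hpow : (d - 1) ^ (y' + 1) = (d - 1) ^ y' * (d - 1) := pow_succ _ _
        rw [show (1 : ℕ) + 1 = 2 from rfl] at s1
        have e1 : 2 * Nat.card (Tr G o t 0) * d ≤ 2 * t.choose y' * (d - 1) ^ y' * d :=
          Nat.mul_le_mul_right d hIH0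
        have e2 : t.choose y' * (d - 1) ^ y' * (2 * d) ≤
            t.choose y' * (d - 1) ^ y' * (3 * (d - 1)) :=
          Nat.mul_le_mul_left _ hdd
        rw [hpas, hpow]
        nlinarith [s1, e1, e2, hIH2]
      · -- r ≥ 2
        have hr2 : 2 ≤ 2 * (y' + 1) - (t + 1) := by omega
        set r := 2 * (y' + 1) - (t + 1) with hrdef
        rw [if_neg h0]
        have s2 := card_step (d := d) hacyc hconn o t r (d - 1) (by omega)
          (fun u hu => cardX_le hacyc hconn hreg o (by omega) hu)
        have hIH0 := ih y' (by omega)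
        rw [if_neg (by omega), show 2 * y' - t = r - 1 by omega] at hIH0
        have hIH2 := ih (y' + 1) (by omega)
        rw [if_neg (by omega), show 2 * (y' + 1) - t = r + 1 by omega] at hIH2
        have hpas : (t + 1).choose (y' + 1) = t.choose y' + t.choose (y' + 1) :=
          Nat.choose_succ_succ t y'
        have hpow : (d - 1) ^ (y' + 1) = (d - 1) ^ y' * (d - 1) := pow_succ _ _
        have e1 : 2 * Nat.card (Tr G o t (r - 1)) * (d - 1) ≤
            3 * t.choose y' * (d - 1) ^ y' * (d - 1) :=
          Nat.mul_le_mul_right _ hIH0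
        rw [hpas, hpow]
        nlinarith [s2, e1, hIH2]

end WCUB

/-- Upper bound: in a `d`-regular tree (`d ≥ 3`), there is a constant `c > 0` so that for all
`t, y` with `t/2 ≤ y ≤ t` and `r = 2y−t ≥ 3`, the number of walks of length `t` from the
root `o` ending at distance `r` from `o` is at most `c·C(t,y)·(d−1)^y`. -/
theorem walk_count_upper_bound (d : ℕ) (hd : 3 ≤ d) {V : Type*} (G : SimpleGraph V)
    [G.LocallyFinite] (hreg : G.IsRegularOfDegree d) (hconn : G.Connected)
    (hacyc : G.IsAcyclic) (o : V) :
    ∃ c : ℝ, 0 < c ∧ ∀ t y : ℕ, t ≤ 2 * y → y ≤ t → 3 ≤ 2 * y - t →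
      (Nat.card {q : Σ v : V, G.Walk o v //
          q.2.length = t ∧ G.dist o q.1 = 2 * y - t} : ℝ) ≤
        c * (t.choose y : ℝ) * ((d : ℝ) - 1) ^ y := by
  refine ⟨3 / 2, by norm_num, ?_⟩
  intro t y h1 h2 h3
  have hmain := WCUB.main_bound hd hreg hconn hacyc o t y h1
  rw [if_neg (by omega)] at hmain
  have hcast : ((2 * Nat.card (WCUB.Tr G o t (2 * y - t)) : ℕ) : ℝ) ≤
      ((3 * t.choose y * (d - 1) ^ y : ℕ) : ℝ) := Nat.cast_le.2 hmain
  have hd1 : ((d - 1 : ℕ) : ℝ) = (d : ℝ) - 1 := by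
    have h : (1 : ℕ) ≤ d := by omega
    push_cast [Nat.cast_sub h]
    ring
  push_cast [hd1] at hcast
  show ((Nat.card (WCUB.Tr G o t (2 * y - t)) : ℕ) : ℝ) ≤ _
  linarith
end

section
/- Let d = 2r with r ≥ 2, and let S ⊆ F_r be the set of proper powers (elements of the form u^q with q ≥ 2) in the free group F_r. Viewing the Cayley graph of F_r with respect to a free basis as the 2r-regular tree rooted at the identity, the exponential growth rate α(S) = limsup_t a_t(S)^{1/t} of the number of elements of S of reduced word length t equals √(2r−1). -/
open List FreeGroup

namespace PPG

variable {r : ℕ}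

abbrev A (r : ℕ) := Fin r × Bool

def inv' (a : A r) : A r := (a.1, !a.2)

@[simp] lemma inv'_inv' (a : A r) : inv' (inv' a) = a := by simp [inv']

def R : A r → A r → Prop := fun a b => b ≠ inv' a

lemma R_iff {a b : A r} : R a b ↔ ¬(a.1 = b.1 ∧ a.2 = !b.2) := by
  unfold R inv'
  constructor
  · rintro h ⟨h1, h2⟩
    exact h (by ext <;> simp [h1, h2])
  · rintro h rfl
    exact h ⟨rfl, by simp⟩

lemma R_inv' {a b : A r} (h : R a b) : R (inv' b) (inv' a) := by
  intro hc
  rw [inv'_inv'] at hc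
  exact h hc.symm

lemma reduce_eq_self {l : List (A r)} (h : Chain' R l) : reduce l = l := by
  induction l with
  | nil => rfl
  | cons a l ih =>
    have hl : Chain' R l := h.tail
    rw [reduce.cons, ih hl]
    cases l with
    | nil => rfl
    | cons b m =>
      have hab : R a b := List.isChain_cons_cons.mp h |>.1
      rw [R_iff] at hab
      simp [hab]

lemma chain'_reduce (l : List (A r)) : Chain' R (reduce l) := by
  induction l with
  | nil => simp [List.Chain']
  | cons a l ih =>
    rw [reduce.cons]
    cases hr : reduce l with
    | nil => simp [List.Chain']
    | cons b m =>
      rw [hr] at ih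
      by_cases hc : a.1 = b.1 ∧ a.2 = !b.2
      · simp only [hc, if_true]
        exact ih.tail
      · simp only [hc, if_false]
        exact List.isChain_cons_cons.mpr ⟨R_iff.mpr hc, ih⟩

lemma chain'_toWord (x : FreeGroup (Fin r)) : Chain' R (toWord x) := by
  classical
  rw [← FreeGroup.reduce_toWord]
  exact chain'_reduce _

lemma toWord_mk_of_chain' {l : List (A r)} (h : Chain' R l) : toWord (FreeGroup.mk l) = l := by
  classical
  rw [FreeGroup.toWord_mk, reduce_eq_self h]

lemma chain'_invRev {l : List (A r)} (h : Chain' R l) : Chain' R (invRev l) := by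
  unfold FreeGroup.invRev
  unfold List.Chain'
  rw [List.isChain_reverse, List.isChain_map]
  exact List.IsChain.imp (fun a b hab => R_inv' hab) h

end PPG
open List FreeGroup

namespace PPG

variable {r : ℕ}

lemma invRev_cons (a : A r) (l : List (A r)) :
    invRev (a :: l) = invRev l ++ [inv' a] := by
  simp [FreeGroup.invRev, inv']

@[simp] lemma inv'_ne_self (a : A r) : inv' a ≠ a := by
  simp [inv', Prod.ext_iff]

@[simp] lemma R_self (a : A r) : R a a := fun h => inv'_ne_self a h.symm

def cSplit : List (A r) → List (A r) × List (A r)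
  | [] => ([], [])
  | a :: l =>
    if l.getLast? = some (inv' a) then
      ((a :: (cSplit l.dropLast).1), (cSplit l.dropLast).2)
    else ([], a :: l)
termination_by l => l.length
decreasing_by
  simp only [List.length_dropLast, List.length_cons]
  omega

lemma cSplit_spec : ∀ (n : ℕ) (l : List (A r)), l.length ≤ n → Chain' R l →
    l = (cSplit l).1 ++ (cSplit l).2 ++ invRev (cSplit l).1
    ∧ Chain' R ((cSplit l).2 ++ (cSplit l).2)
    ∧ ((cSplit l).2 = [] → l = []) := by
  intro n
  induction n with
  | zero =>
    intro l hl _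
    rw [List.length_eq_zero_iff.mp (Nat.le_zero.mp hl)]
    rw [cSplit]
    exact ⟨by simp [invRev], by simp [List.Chain'], fun _ => rfl⟩
  | succ n ih =>
    intro l hl hc
    cases l with
    | nil =>
      rw [cSplit]
      exact ⟨by simp [invRev], by simp [List.Chain'], fun _ => rfl⟩
    | cons a l =>
      by_cases h : l.getLast? = some (inv' a)
      · have hlen : l.dropLast.length ≤ n := by
          simp only [List.length_dropLast]
          simp only [List.length_cons] at hl
          omega
        have hld : l = l.dropLast ++ [inv' a] :=
          (List.dropLast_append_getLast? _ h).symm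
        have hcd : Chain' R l.dropLast := by
          refine hc.tail.prefix ?_
          exact ⟨[inv' a], hld.symm⟩
        obtain ⟨e1, e2, e3⟩ := ih l.dropLast hlen hcd
        rw [cSplit, if_pos h]
        refine ⟨?_, e2, ?_⟩
        · simp only [invRev_cons]
          calc a :: l = a :: (l.dropLast ++ [inv' a]) := by rw [← hld]
            _ = a :: ((cSplit l.dropLast).1 ++ (cSplit l.dropLast).2 ++
                invRev (cSplit l.dropLast).1 ++ [inv' a]) := by rw [← e1]
            _ = _ := by simp [List.append_assoc]
        · intro hv
          exfalso
          have : l.dropLast = [] := e3 hv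
          rw [this] at hld
          rw [hld] at hc
          have : R a (inv' a) := (List.isChain_cons_cons.mp hc).1
          exact this rfl
      · rw [cSplit, if_neg h]
        refine ⟨by simp [invRev], ?_, by simp⟩
        unfold List.Chain'
        rw [List.isChain_append]
        refine ⟨hc, hc, ?_⟩
        intro x hx y hy
        simp only [List.head?_cons, Option.mem_def, Option.some.injEq] at hy
        subst hy
        cases l with
        | nil =>
          simp only [List.getLast?_singleton, Option.mem_def, Option.some.injEq] at hx
          subst hx
          exact R_self a
        | cons b m =>
          have hx' : x ∈ (b :: m).getLast? := by
            simpa using hx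
          intro hcon
          apply h
          rw [Option.mem_def] at hx'
          rw [hx', hcon, inv'_inv']
end PPG
open List FreeGroup

namespace PPG

variable {r : ℕ}

lemma conj_pow' {G : Type*} [Group G] (a b : G) (q : ℕ) :
    (a * b * a⁻¹) ^ q = a * b ^ q * a⁻¹ := by
  induction q with
  | zero => simp
  | succ n ih => rw [pow_succ, pow_succ, ih]; group

lemma flatten_replicate_length {α : Type*} (q : ℕ) (v : List α) :
    ((List.replicate q v).flatten).length = q * v.length := by
  induction q with
  | zero => simp
  | succ n ih => rw [List.replicate_succ, List.flatten_cons, List.length_append, ih]; ring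

lemma flatten_replicate_head? {α : Type*} (q : ℕ) (hq : 1 ≤ q) (v : List α) (hv : v ≠ []) :
    ((List.replicate q v).flatten).head? = v.head? := by
  cases q with
  | zero => omega
  | succ n =>
    rw [List.replicate_succ, List.flatten_cons]
    cases v with
    | nil => exact absurd rfl hv
    | cons a m => simp

lemma flatten_replicate_getLast? {α : Type*} (q : ℕ) (hq : 1 ≤ q) (v : List α) (hv : v ≠ []) :
    ((List.replicate q v).flatten).getLast? = v.getLast? := by
  cases q with
  | zero => omega
  | succ n =>
    rw [List.replicate_succ', List.flatten_append, List.flatten_cons, List.flatten_nil,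
      List.append_nil]
    exact List.getLast?_append_of_ne_nil _ hv

lemma flatten_replicate_ne_nil {α : Type*} (q : ℕ) (hq : 1 ≤ q) (v : List α) (hv : v ≠ []) :
    ((List.replicate q v).flatten) ≠ [] := by
  intro h
  have := congrArg List.length h
  rw [flatten_replicate_length] at this
  simp only [List.length_nil] at this
  rcases Nat.mul_eq_zero.mp this with h' | h'
  · omega
  · exact hv (List.length_eq_zero_iff.mp h')

lemma chain'_flatten_replicate {v : List (A r)} (hv : Chain' R (v ++ v)) (q : ℕ) :
    Chain' R ((List.replicate q v).flatten) := by
  induction q with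
  | zero => simp [List.Chain']
  | succ n ih =>
    unfold List.Chain'
    rw [List.replicate_succ, List.flatten_cons, List.isChain_append]
    refine ⟨hv.prefix ⟨v, rfl⟩, ih, ?_⟩
    intro x hx y hy
    rcases Nat.eq_zero_or_pos n with rfl | hn
    · simp at hy
    have hvne : v ≠ [] := by
      intro h; rw [h] at hy; simp at hy
    rw [flatten_replicate_head? n hn v hvne] at hy
    -- junction from hv : Chain' R (v ++ v)
    have := (List.isChain_append.mp hv).2.2
    exact this x hx y hy

/-- Structure theorem for powers: if `u ≠ 1` and `q ≥ 1`, the reduced word of `u ^ q` is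
`g ++ v^q ++ g⁻¹` where `(g, v)` is the cyclic-reduction split of the word of `u`. -/
theorem power_struct (u : FreeGroup (Fin r)) (q : ℕ) (hq : 1 ≤ q) (hu : u ≠ 1) :
    toWord (u ^ q) =
      (cSplit u.toWord).1 ++ (List.replicate q (cSplit u.toWord).2).flatten
        ++ invRev (cSplit u.toWord).1
    ∧ (cSplit u.toWord).2 ≠ [] := by
  classical
  set l := u.toWord with hl
  obtain ⟨e1, e2, e3⟩ := cSplit_spec l.length l le_rfl (chain'_toWord u)
  set g := (cSplit l).1
  set v := (cSplit l).2
  have hvne : v ≠ [] := by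
    intro h
    exact hu (FreeGroup.toWord_eq_nil_iff.mp (e3 h))
  -- group identity
  have hmk : u = FreeGroup.mk g * FreeGroup.mk v * (FreeGroup.mk g)⁻¹ := by
    conv_lhs => rw [← FreeGroup.mk_toWord (x := u), ← hl, e1]
    rw [FreeGroup.inv_mk, FreeGroup.mul_mk, FreeGroup.mul_mk]
  have hpow : u ^ q = FreeGroup.mk (g ++ (List.replicate q v).flatten ++ invRev g) := by
    rw [hmk, conj_pow', FreeGroup.pow_mk, FreeGroup.inv_mk, FreeGroup.mul_mk, FreeGroup.mul_mk]
  -- chain conditions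
  have hcl : Chain' R (g ++ v ++ invRev g) := by rw [← e1]; exact chain'_toWord u
  unfold List.Chain' at hcl
  rw [List.append_assoc, List.isChain_append] at hcl
  obtain ⟨hcg, hcvi, hjgv⟩ := hcl
  rw [List.isChain_append] at hcvi
  obtain ⟨hcv, hci, hjvi⟩ := hcvi
  have hchain : Chain' R (g ++ (List.replicate q v).flatten ++ invRev g) := by
    unfold List.Chain'
    rw [List.append_assoc, List.isChain_append]
    refine ⟨hcg, ?_, ?_⟩
    · rw [List.isChain_append]
      refine ⟨chain'_flatten_replicate e2 q, hci, ?_⟩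
      intro x hx y hy
      rw [flatten_replicate_getLast? q hq v hvne] at hx
      exact hjvi x hx y hy
    · intro x hx y hy
      rw [List.head?_append_of_ne_nil _ (flatten_replicate_ne_nil q hq v hvne)] at hy
      rw [flatten_replicate_head? q hq v hvne] at hy
      exact hjgv x hx y (List.mem_head?_append_of_mem_head? hy)
  refine ⟨?_, hvne⟩
  rw [hpow, toWord_mk_of_chain' hchain]

end PPG
open List FreeGroup

namespace PPG

variable {r : ℕ}

lemma card_A (r : ℕ) : Fintype.card (A r) = 2 * r := by
  simp [Fintype.card_prod, mul_comm]

lemma exists_avoid (s : Finset (A r)) (m : ℕ) (h : m + s.card ≤ 2 * r) :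
    ∃ f : Fin m → A r, Function.Injective f ∧ ∀ i, f i ∉ s := by
  have hcard : Fintype.card (Fin m) ≤ Fintype.card {x : A r // x ∈ sᶜ} := by
    rw [Fintype.card_fin, Fintype.card_coe, Finset.card_compl, card_A]
    omega
  obtain ⟨e⟩ := Function.Embedding.nonempty_of_card_le hcard
  refine ⟨fun i => (e i).1, ?_, ?_⟩
  · intro i j hij
    exact e.injective (Subtype.ext hij)
  · intro i
    exact Finset.mem_compl.mp (e i).2

noncomputable def nxt (r : ℕ) : A r → Fin (2 * r - 1) → A r := fun a =>
  if h : (2 * r - 1) + 1 ≤ 2 * r then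
    (exists_avoid {inv' a} (2 * r - 1) (by simpa using h)).choose
  else fun _ => a

lemma nxt_inj (hr : 1 ≤ r) (a : A r) : Function.Injective (nxt r a) := by
  have h : (2 * r - 1) + 1 ≤ 2 * r := by omega
  have h' : (2 * r - 1) + ({inv' a} : Finset (A r)).card ≤ 2 * r := by simpa using h
  unfold nxt
  rw [dif_pos h]
  exact (exists_avoid {inv' a} (2 * r - 1) h').choose_spec.1

lemma nxt_avoid (hr : 1 ≤ r) (a : A r) (i : Fin (2 * r - 1)) : nxt r a i ≠ inv' a := by
  have h : (2 * r - 1) + 1 ≤ 2 * r := by omega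
  have := (exists_avoid {inv' a} (2 * r - 1) (by simpa using h)).choose_spec.2 i
  unfold nxt
  rw [dif_pos h]
  simpa using this

lemma nxt_R (hr : 1 ≤ r) (a : A r) (i : Fin (2 * r - 1)) : R a (nxt r a i) :=
  nxt_avoid hr a i

lemma nxt_surj (hr : 1 ≤ r) {a b : A r} (hb : b ≠ inv' a) : ∃ i, nxt r a i = b := by
  classical
  have hinj := nxt_inj hr a
  have himg : (Finset.univ.image (nxt r a)) ⊆ ({inv' a}ᶜ : Finset (A r)) := by
    intro x hx
    simp only [Finset.mem_image] at hx
    obtain ⟨i, _, rfl⟩ := hx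
    simp [nxt_avoid hr a i]
  have hcard : ({inv' a}ᶜ : Finset (A r)).card ≤ (Finset.univ.image (nxt r a)).card := by
    rw [Finset.card_image_of_injective _ hinj, Finset.card_compl, card_A]
    simp
  have := Finset.eq_of_subset_of_card_le himg hcard
  have hbmem : b ∈ Finset.univ.image (nxt r a) := by
    rw [this]
    simpa using hb
  simpa using (Finset.mem_image.mp hbmem).imp (fun i hi => hi.2)

noncomputable def build (r : ℕ) : A r → List (Fin (2 * r - 1)) → List (A r)
  | _, [] => []
  | a, i :: c => nxt r a i :: build r (nxt r a i) c

@[simp] lemma build_nil (a : A r) : build r a [] = [] := rfl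
@[simp] lemma build_cons (a : A r) (i) (c) :
    build r a (i :: c) = nxt r a i :: build r (nxt r a i) c := rfl

@[simp] lemma build_length (a : A r) (c : List (Fin (2 * r - 1))) :
    (build r a c).length = c.length := by
  induction c generalizing a with
  | nil => rfl
  | cons i c ih => simp [ih]

lemma build_chain (hr : 1 ≤ r) (a : A r) (c : List (Fin (2 * r - 1))) :
    List.Chain R a (build r a c) := by
  induction c generalizing a with
  | nil => exact List.Chain.nil
  | cons i c ih => exact List.Chain.cons (nxt_R hr a i) (ih _)

lemma build_chain' (hr : 1 ≤ r) (a : A r) (c : List (Fin (2 * r - 1))) :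
    Chain' R (a :: build r a c) := build_chain hr a c

lemma build_inj (hr : 1 ≤ r) (a : A r) : Function.Injective (build r a) := by
  intro c₁ c₂ h
  induction c₁ generalizing a c₂ with
  | nil =>
    cases c₂ with
    | nil => rfl
    | cons j c => simp at h
  | cons i c ih =>
    cases c₂ with
    | nil => simp at h
    | cons j c' =>
      simp only [build_cons, List.cons.injEq] at h
      obtain ⟨h1, h2⟩ := h
      have hij : i = j := nxt_inj hr a h1
      subst hij
      rw [ih _ h2]

lemma build_surj (hr : 1 ≤ r) : ∀ (l : List (A r)) (a : A r), List.Chain R a l →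
    ∃ c, build r a c = l := by
  intro l
  induction l with
  | nil => exact fun a _ => ⟨[], rfl⟩
  | cons b m ih =>
    intro a hc
    simp only [List.Chain, List.isChain_cons_cons] at hc
    obtain ⟨hab, hm⟩ := hc
    obtain ⟨i, hi⟩ := nxt_surj hr hab
    obtain ⟨c, hcm⟩ := ih b hm
    refine ⟨i :: c, ?_⟩
    rw [build_cons, hi, hcm]

lemma exists_code (hr : 1 ≤ r) (l : List (A r)) (hl : Chain' R l) :
    l = [] ∨ ∃ a cs, l = a :: build r a cs ∧ cs.length = l.length - 1 := by
  cases l with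
  | nil => exact Or.inl rfl
  | cons a m =>
    right
    obtain ⟨c, hc⟩ := build_surj hr m a hl
    exact ⟨a, c, by rw [hc], by have := build_length (r := r) a c; rw [hc] at this; simp [this]⟩

end PPG
open List FreeGroup

namespace PPG

variable {r : ℕ}

abbrev PP (r t : ℕ) := {w : FreeGroup (Fin r) //
    (∃ (u : FreeGroup (Fin r)) (q : ℕ), 2 ≤ q ∧ w = u ^ q) ∧
    (FreeGroup.toWord w).length = t}

instance (t : ℕ) : Finite (PP r t) := by
  haveI := (List.finite_length_eq (A r) t).to_subtype
  exact Finite.of_injective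
    (fun w : PP r t => (⟨FreeGroup.toWord w.1, w.2.2⟩ : {l : List (A r) | l.length = t}))
    (fun w₁ w₂ h => Subtype.ext (FreeGroup.toWord_injective (congrArg Subtype.val h)))

noncomputable def decode (r : ℕ) (c q : ℕ) (a b : A r) (cs : List (Fin (2 * r - 1))) :
    List (A r) :=
  (if c = 0 then [] else a :: build r a (cs.take (c - 1))) ++
    (List.replicate q (b :: build r b (cs.drop (c - 1)))).flatten ++
    invRev (if c = 0 then [] else a :: build r a (cs.take (c - 1)))

lemma card_len_le (β : Type*) [Fintype β] [Nonempty β] (m : ℕ) :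
    Nat.card {l : List β // l.length ≤ m} ≤ (m + 1) * (Fintype.card β) ^ m := by
  classical
  have key : Nat.card {l : List β // l.length ≤ m} ≤
      Nat.card (Fin (m + 1) × List.Vector β m) := by
    haveI : Finite (Fin (m + 1) × List.Vector β m) := by infer_instance
    refine Nat.card_le_card_of_injective
      (fun l => (⟨l.1.length, by omega⟩,
        ⟨l.1 ++ List.replicate (m - l.1.length) Classical.ofNonempty, by
          simp only [List.length_append, List.length_replicate]
          omega⟩)) ?_
    intro l₁ l₂ h
    rw [Prod.ext_iff] at h
    obtain ⟨h1, h2⟩ := h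
    have hlen : l₁.1.length = l₂.1.length := by
      have := congrArg Fin.val h1
      simpa using this
    have hlist := congrArg Subtype.val h2
    simp only at hlist
    exact Subtype.ext (List.append_inj_left hlist hlen)
  calc Nat.card {l : List β // l.length ≤ m} ≤ Nat.card (Fin (m + 1) × List.Vector β m) := key
    _ = (m + 1) * (Fintype.card β) ^ m := by
        rw [Nat.card_prod, Nat.card_eq_fintype_card, Nat.card_eq_fintype_card,
          Fintype.card_fin, card_vector]

theorem card_PP_le (hr : 1 ≤ r) (t : ℕ) (ht : 1 ≤ t) :
    Nat.card (PP r t) ≤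
      (t + 1) * ((t + 1) * ((2 * r) * ((2 * r) *
        ((t / 2 + 1) * (2 * r - 1) ^ (t / 2))))) := by
  classical
  haveI : Nonempty (Fin r) := ⟨⟨0, by omega⟩⟩
  haveI : Finite {cs : List (Fin (2 * r - 1)) // cs.length ≤ t / 2} := by
    haveI := (List.finite_length_le (Fin (2 * r - 1)) (t / 2)).to_subtype
    exact Finite.of_injective
      (fun cs : {cs : List (Fin (2 * r - 1)) // cs.length ≤ t / 2} =>
        (⟨cs.1, cs.2⟩ : {l : List (Fin (2 * r - 1)) | l.length ≤ t / 2}))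
      (fun a b h => Subtype.ext (congrArg Subtype.val h))
  have main : ∀ w : PP r t,
      ∃ p : Fin (t + 1) × Fin (t + 1) × A r × A r ×
          {cs : List (Fin (2 * r - 1)) // cs.length ≤ t / 2},
        FreeGroup.toWord w.1 = decode r p.1 p.2.1 p.2.2.1 p.2.2.2.1 p.2.2.2.2.1 := by
    rintro ⟨w, ⟨u, q, hq, rfl⟩, hlen⟩
    have hu : u ≠ 1 := by
      rintro rfl
      rw [one_pow] at hlen
      rw [FreeGroup.toWord_one] at hlen
      simp at hlen
      omega
    obtain ⟨hword, hvne⟩ := power_struct u q (by omega) hu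
    set g := (cSplit u.toWord).1 with hg
    set v := (cSplit u.toWord).2 with hv
    -- chain facts
    obtain ⟨e1, e2, e3⟩ := cSplit_spec u.toWord.length u.toWord le_rfl (chain'_toWord u)
    have hCg : Chain' R g := (chain'_toWord u).prefix ⟨v ++ invRev g, by
      rw [e1, List.append_assoc]⟩
    have hCv : Chain' R v := (chain'_toWord u).infix ⟨g, invRev g, by rw [e1]⟩
    -- length equation
    rw [hword] at hlen
    simp only [List.length_append, invRev_length, flatten_replicate_length] at hlen
    have hℓ1 : 1 ≤ v.length := List.length_pos_iff.mpr hvne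
    obtain ⟨M, hM⟩ : ∃ M, M = q * v.length := ⟨_, rfl⟩
    have h2ℓ : 2 * v.length ≤ M := by rw [hM]; exact Nat.mul_le_mul_right v.length hq
    have hqM : q ≤ M := by rw [hM]; exact Nat.le_mul_of_pos_right q hℓ1
    rw [← hM] at hlen
    -- hlen : c + (M + c) = t  (roughly)
    -- codes
    obtain ⟨b, csv, hvb, hlcsv⟩ := (exists_code hr v hCv).resolve_left hvne
    have hcsum : g.length + v.length ≤ t / 2 := by
      rw [Nat.le_div_iff_mul_le (by norm_num)]
      omega
    rcases exists_code hr g hCg with hg0 | ⟨a, csg, hga, hlcsg⟩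
    · -- g = []
      refine ⟨(⟨0, by omega⟩, ⟨q, by omega⟩, b, b, ⟨csv, by omega⟩), ?_⟩
      simp only [decode, if_pos rfl, Nat.zero_sub, List.drop_zero]
      rw [hword, hg0, ← hvb]
      simp [invRev_empty]
    · have hcpos : g.length ≠ 0 := by
        rw [hga]
        simp
      have hlg : csg.length = g.length - 1 := hlcsg
      refine ⟨(⟨g.length, by omega⟩, ⟨q, by omega⟩, a, b, ⟨csg ++ csv, by
        rw [List.length_append]
        omega⟩), ?_⟩
      simp only [decode, if_neg hcpos]
      have htake : (csg ++ csv).take (g.length - 1) = csg := by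
        rw [← hlg]
        exact List.take_left
      have hdrop : (csg ++ csv).drop (g.length - 1) = csv := by
        rw [← hlg]
        exact List.drop_left
      rw [htake, hdrop, hword, ← hga, ← hvb]
  choose Φ hΦ using main
  have hinj : Function.Injective Φ := by
    intro w₁ w₂ h
    have : FreeGroup.toWord w₁.1 = FreeGroup.toWord w₂.1 := by
      rw [hΦ w₁, hΦ w₂, h]
    exact Subtype.ext (FreeGroup.toWord_injective this)
  calc Nat.card (PP r t)
      ≤ Nat.card (Fin (t + 1) × Fin (t + 1) × A r × A r ×
          {cs : List (Fin (2 * r - 1)) // cs.length ≤ t / 2}) :=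
        Nat.card_le_card_of_injective Φ hinj
    _ ≤ (t + 1) * ((t + 1) * ((2 * r) * ((2 * r) *
        ((t / 2 + 1) * (2 * r - 1) ^ (t / 2))))) := by
        haveI : Nonempty (Fin (2 * r - 1)) := ⟨⟨0, by omega⟩⟩
        have hbound := card_len_le (Fin (2 * r - 1)) (t / 2)
        rw [Fintype.card_fin] at hbound
        simp only [Nat.card_prod, Nat.card_eq_fintype_card, Fintype.card_fin,
          Fintype.card_bool]
        rw [card_A]
        exact Nat.mul_le_mul_left _ (Nat.mul_le_mul_left _ (Nat.mul_le_mul_left _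
          (Nat.mul_le_mul_left _ hbound)))

end PPG
open List FreeGroup

namespace PPG

variable {r : ℕ}

lemma invRev_head? {l : List (A r)} : (invRev l).head? = l.getLast?.map inv' := by
  unfold FreeGroup.invRev
  rw [List.head?_reverse, List.getLast?_map]
  rfl

lemma card_PP_ge (hr : 2 ≤ r) (t : ℕ) (ht : 8 ≤ t) :
    ∃ e : ℕ, t ≤ 2 * e + 8 ∧ (2 * r - 1) ^ e ≤ Nat.card (PP r t) := by
  classical
  obtain ⟨k, c, hk2, hk3, hct, hc4⟩ : ∃ k c, 2 ≤ k ∧ k ≤ 3 ∧ 2 * c + k = t ∧ 2 ≤ c :=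
    ⟨2 + t % 2, (t - (2 + t % 2)) / 2, by omega, by omega, by omega, by omega⟩
  set x0 : A r := (⟨0, by omega⟩, true) with hx0
  set x1 : A r := (⟨1, by omega⟩, true) with hx1
  refine ⟨c - 2, by omega, ?_⟩
  set P := List.Vector (Fin (2 * r - 1)) (c - 2) with hP
  have hcons : ∀ cs : P, (x1 :: build r x1 cs.1) ≠ [] := fun _ => List.cons_ne_nil _ _
  let b : P → A r := fun cs => (x1 :: build r x1 cs.1).getLast (hcons cs)
  have havoid : ∀ cs : P, ∃ f : Fin 1 → A r, Function.Injective f ∧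
      ∀ i, f i ∉ ({inv' (b cs), x0, inv' x0} : Finset (A r)) := by
    intro cs
    apply exists_avoid
    have h3 : ({inv' (b cs), x0, inv' x0} : Finset (A r)).card ≤ 3 := by
      apply le_trans (Finset.card_insert_le _ _)
      have := Finset.card_insert_le x0 ({inv' x0} : Finset (A r))
      simp only [Finset.card_singleton] at this ⊢
      omega
    omega
  let d : P → A r := fun cs => (havoid cs).choose 0
  have hd : ∀ cs : P, d cs ≠ inv' (b cs) ∧ d cs ≠ x0 ∧ d cs ≠ inv' x0 := by
    intro cs
    have := (havoid cs).choose_spec.2 0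
    simp only [Finset.mem_insert, Finset.mem_singleton, not_or] at this
    exact this
  let g : P → List (A r) := fun cs => x1 :: build r x1 cs.1 ++ [d cs]
  have hglen : ∀ cs : P, (g cs).length = c := by
    intro cs
    show (x1 :: build r x1 cs.1 ++ [d cs]).length = c
    simp only [List.length_append, List.length_cons, build_length, cs.2, List.length_nil]
    omega
  have hgchain : ∀ cs : P, Chain' R (g cs) := by
    intro cs
    show Chain' R (x1 :: build r x1 cs.1 ++ [d cs])
    apply List.isChain_append.mpr
    refine ⟨build_chain' (by omega) x1 cs.1, List.isChain_singleton _, ?_⟩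
    intro x hx y hy
    simp only [List.head?_cons, Option.mem_def, Option.some.injEq] at hy
    subst hy
    rw [List.getLast?_eq_getLast (hcons cs), Option.mem_def, Option.some.injEq] at hx
    subst hx
    exact fun hcon => (hd cs).1 hcon
  have hglast : ∀ cs : P, (g cs).getLast? = some (d cs) := by
    intro cs
    exact List.getLast?_concat
  have hLchain : ∀ cs : P, Chain' R (g cs ++ List.replicate k x0 ++ invRev (g cs)) := by
    intro cs
    unfold List.Chain'
    rw [List.append_assoc, List.isChain_append]
    refine ⟨hgchain cs, ?_, ?_⟩
    · rw [List.isChain_append]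
      refine ⟨List.isChain_replicate_of_rel k (R_self x0), chain'_invRev (hgchain cs), ?_⟩
      intro x hx y hy
      have hrep : (List.replicate k x0).getLast? = some x0 := by
        rw [show k = (k - 1) + 1 by omega, List.replicate_succ', List.getLast?_concat]
      rw [hrep, Option.mem_def, Option.some.injEq] at hx
      subst hx
      rw [invRev_head?, hglast cs, Option.map_some] at hy
      simp only [Option.mem_def, Option.some.injEq] at hy
      subst hy
      intro hcon
      apply (hd cs).2.1
      have := congrArg inv' hcon
      simpa using this
    · intro x hx y hy
      rw [hglast cs, Option.mem_def, Option.some.injEq] at hx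
      subst hx
      have hrep : (List.replicate k x0).head? = some x0 := by
        rw [show k = (k - 1) + 1 by omega, List.replicate_succ, List.head?_cons]
      rw [List.head?_append_of_ne_nil _ (by
        simp only [ne_eq, List.replicate_eq_nil_iff]
        omega), hrep, Option.mem_def, Option.some.injEq] at hy
      subst hy
      intro hcon
      apply (hd cs).2.2
      have := congrArg inv' hcon
      rw [inv'_inv'] at this
      exact this.symm
  let u : P → FreeGroup (Fin r) := fun cs => FreeGroup.mk (g cs ++ [x0] ++ invRev (g cs))
  have hupow : ∀ cs : P,
      (u cs) ^ k = FreeGroup.mk (g cs ++ List.replicate k x0 ++ invRev (g cs)) := by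
    intro cs
    show (FreeGroup.mk (g cs ++ [x0] ++ invRev (g cs))) ^ k = _
    rw [← FreeGroup.mul_mk, ← FreeGroup.mul_mk, ← FreeGroup.inv_mk, conj_pow',
      FreeGroup.pow_mk, List.flatten_replicate_singleton, FreeGroup.inv_mk,
      FreeGroup.mul_mk, FreeGroup.mul_mk]
  have hword : ∀ cs : P, FreeGroup.toWord ((u cs) ^ k)
      = g cs ++ List.replicate k x0 ++ invRev (g cs) := by
    intro cs
    rw [hupow cs, toWord_mk_of_chain' (hLchain cs)]
  have hlen : ∀ cs : P, (FreeGroup.toWord ((u cs) ^ k)).length = t := by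
    intro cs
    rw [hword cs]
    simp only [List.length_append, invRev_length, List.length_replicate, hglen cs]
    omega
  let ψ : P → PP r t := fun cs => ⟨(u cs) ^ k, ⟨u cs, k, hk2, rfl⟩, hlen cs⟩
  have hψinj : Function.Injective ψ := by
    intro cs₁ cs₂ h
    have h1 : FreeGroup.toWord ((u cs₁) ^ k) = FreeGroup.toWord ((u cs₂) ^ k) := by
      rw [congrArg (fun w : PP r t => FreeGroup.toWord w.1) h]
    rw [hword cs₁, hword cs₂] at h1
    have h2 : x1 :: build r x1 cs₁.1 = x1 :: build r x1 cs₂.1 := by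
      have e1 := congrArg (List.take (c - 1)) h1
      show x1 :: build r x1 cs₁.1 = x1 :: build r x1 cs₂.1
      have hsh : ∀ cs : P, (g cs ++ List.replicate k x0 ++ invRev (g cs))
          = x1 :: build r x1 cs.1 ++ ([d cs] ++ List.replicate k x0 ++ invRev (g cs)) := by
        intro cs
        show (x1 :: build r x1 cs.1 ++ [d cs]) ++ List.replicate k x0 ++ invRev (g cs) = _
        simp [List.append_assoc]
      rw [hsh cs₁, hsh cs₂] at e1
      have hlen1 : (x1 :: build r x1 cs₁.1).length = c - 1 := by
        simp only [List.length_cons, build_length, cs₁.2]; omega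
      have hlen2 : (x1 :: build r x1 cs₂.1).length = c - 1 := by
        simp only [List.length_cons, build_length, cs₂.2]; omega
      rw [← hlen1, List.take_left] at e1
      rw [hlen1, ← hlen2, List.take_left] at e1
      exact e1
    have h3 : cs₁.1 = cs₂.1 := by
      have := (List.cons.injEq x1 (build r x1 cs₁.1) x1 (build r x1 cs₂.1)) ▸ h2
      exact build_inj (by omega) x1 this.2
    exact Subtype.ext h3
  calc (2 * r - 1) ^ (c - 2) = Nat.card P := by
        rw [hP, Nat.card_eq_fintype_card, card_vector, Fintype.card_fin]
    _ ≤ Nat.card (PP r t) := Nat.card_le_card_of_injective ψ hψinj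

end PPG
open List FreeGroup Filter Real Topology

namespace PPG

theorem main_tendsto (r : ℕ) (hr : 2 ≤ r) :
    Tendsto (fun t : ℕ => ((Nat.card (PP r t) : ℝ)) ^ ((1 : ℝ) / t)) atTop
      (𝓝 (((2 * r - 1 : ℕ) : ℝ) ^ ((1 : ℝ) / 2))) := by
  set D : ℝ := ((2 * r - 1 : ℕ) : ℝ) with hD
  have hD1 : 1 < D := by
    rw [hD]
    exact_mod_cast (by omega : 1 < 2 * r - 1)
  have hD0 : 0 < D := lt_trans one_pos hD1
  set f : ℕ → ℝ := fun t => ((Nat.card (PP r t) : ℝ)) ^ ((1 : ℝ) / t) with hf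
  -- exponent limits
  have h4t : Tendsto (fun t : ℕ => (4 : ℝ) / t) atTop (𝓝 0) :=
    tendsto_const_div_atTop_nhds_zero_nat 4
  have he1 : Tendsto (fun t : ℕ => (((t : ℝ) - 8) / 2) / t) atTop (𝓝 (1 / 2)) := by
    have base : Tendsto (fun t : ℕ => (1 : ℝ) / 2 - 4 / t) atTop (𝓝 (1 / 2)) := by
      have := (tendsto_const_nhds :
        Tendsto (fun _ : ℕ => (1:ℝ)/2) atTop (𝓝 ((1:ℝ)/2))).sub h4t
      simpa using this
    apply base.congr'
    filter_upwards [eventually_ge_atTop 1] with t ht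
    have ht0 : (t : ℝ) ≠ 0 := by positivity
    field_simp
    try ring
  have he2 : Tendsto (fun t : ℕ => ((t : ℝ) / 2 + 4) / t) atTop (𝓝 (1 / 2)) := by
    have base : Tendsto (fun t : ℕ => (1 : ℝ) / 2 + 4 / t) atTop (𝓝 (1 / 2)) := by
      have := (tendsto_const_nhds :
        Tendsto (fun _ : ℕ => (1:ℝ)/2) atTop (𝓝 ((1:ℝ)/2))).add h4t
      simpa using this
    apply base.congr'
    filter_upwards [eventually_ge_atTop 1] with t ht
    have ht0 : (t : ℝ) ≠ 0 := by positivity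
    field_simp
    try ring
  have hrpow_cont : ∀ (x : ℕ → ℝ), Tendsto x atTop (𝓝 (1 / 2)) →
      Tendsto (fun t => D ^ (x t)) atTop (𝓝 (D ^ ((1:ℝ) / 2))) := by
    intro x hx
    exact (Real.continuousAt_const_rpow hD0.ne').tendsto.comp hx
  -- (t+1)^(3/t) → 1
  have hp : Tendsto (fun t : ℕ => ((t : ℝ) + 1) ^ ((3 : ℝ) / t)) atTop (𝓝 1) := by
    have hlog : Tendsto (fun t : ℕ => Real.log ((t : ℝ) + 1) * ((3 : ℝ) / t)) atTop (𝓝 0) := by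
      have h1 : Tendsto (fun x : ℝ => Real.log x / x) atTop (𝓝 0) := by
        simpa using Real.tendsto_pow_log_div_mul_add_atTop 1 0 1 one_ne_zero
      have hcomp : Tendsto (fun t : ℕ => (t : ℝ) + 1) atTop atTop :=
        tendsto_atTop_add_const_right atTop 1 tendsto_natCast_atTop_atTop
      have h2 : Tendsto (fun t : ℕ => Real.log ((t : ℝ) + 1) / ((t : ℝ) + 1)) atTop (𝓝 0) :=
        h1.comp hcomp
      have h3 : Tendsto (fun t : ℕ => ((t : ℝ) + 1) / t) atTop (𝓝 1) := by
        have base : Tendsto (fun t : ℕ => (1 : ℝ) + 1 / t) atTop (𝓝 1) := by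
          have := (tendsto_const_nhds :
            Tendsto (fun _ : ℕ => (1:ℝ)) atTop (𝓝 (1:ℝ))).add
            (tendsto_const_div_atTop_nhds_zero_nat 1)
          simpa using this
        apply base.congr'
        filter_upwards [eventually_ge_atTop 1] with t ht
        have ht0 : (t : ℝ) ≠ 0 := by positivity
        field_simp
      have h4 : Tendsto (fun t : ℕ =>
          (3 : ℝ) * ((Real.log ((t : ℝ) + 1) / ((t : ℝ) + 1)) * (((t : ℝ) + 1) / t)))
          atTop (𝓝 0) := by
        have := (h2.mul h3).const_mul (3 : ℝ)
        simpa using this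
      apply h4.congr'
      filter_upwards [eventually_ge_atTop 1] with t ht
      have ht0 : (t : ℝ) ≠ 0 := by positivity
      have ht1 : (t : ℝ) + 1 ≠ 0 := by positivity
      field_simp
    have := (Real.continuous_exp.tendsto 0).comp hlog
    rw [Real.exp_zero] at this
    apply this.congr
    intro t
    rw [Real.rpow_def_of_pos (by positivity)]
    rfl
  -- lower bound
  have hlow : ∀ᶠ t : ℕ in atTop, D ^ ((((t : ℝ) - 8) / 2) / t) ≤ f t := by
    filter_upwards [eventually_ge_atTop 8] with t ht
    obtain ⟨e, he8, heb⟩ := card_PP_ge hr t ht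
    have ht0 : (0 : ℝ) < t := by positivity
    have hcast : (((2 * r - 1) ^ e : ℕ) : ℝ) ≤ (Nat.card (PP r t) : ℝ) := by
      exact_mod_cast heb
    have step1 : D ^ ((((t : ℝ) - 8) / 2) / t) ≤ D ^ ((e : ℝ) / t) := by
      apply Real.rpow_le_rpow_of_exponent_le hD1.le
      have hte : (t : ℝ) ≤ 2 * e + 8 := by exact_mod_cast he8
      gcongr
      linarith
    have step2 : D ^ ((e : ℝ) / t) = (((2 * r - 1) ^ e : ℕ) : ℝ) ^ ((1 : ℝ) / t) := by
      rw [Nat.cast_pow, ← hD, ← Real.rpow_natCast D e, ← Real.rpow_mul hD0.le]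
      congr 1
      ring
    have step3 : (((2 * r - 1) ^ e : ℕ) : ℝ) ^ ((1 : ℝ) / t) ≤ f t := by
      apply Real.rpow_le_rpow (by positivity) hcast (by positivity)
    calc D ^ ((((t : ℝ) - 8) / 2) / t) ≤ D ^ ((e : ℝ) / t) := step1
      _ = _ := step2
      _ ≤ f t := step3
  -- upper bound
  have hup : ∀ᶠ t : ℕ in atTop,
      f t ≤ ((t : ℝ) + 1) ^ ((3 : ℝ) / t) * D ^ (((t : ℝ) / 2 + 4) / t) := by
    filter_upwards [eventually_ge_atTop 8] with t ht
    have ht0 : (0 : ℝ) < t := by positivity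
    have h1 := card_PP_le (by omega : 1 ≤ r) t (by omega)
    have h2r : 2 * r ≤ (2 * r - 1) ^ 2 := by
      have h1' : 2 * r ≤ 3 * (2 * r - 1) := by omega
      have h2' : 3 * (2 * r - 1) ≤ (2 * r - 1) * (2 * r - 1) :=
        Nat.mul_le_mul_right _ (by omega)
      calc 2 * r ≤ 3 * (2 * r - 1) := h1'
        _ ≤ (2 * r - 1) * (2 * r - 1) := h2'
        _ = (2 * r - 1) ^ 2 := (sq (2 * r - 1)).symm
    have h2 : Nat.card (PP r t) ≤ (t + 1) ^ 3 * (2 * r - 1) ^ (t / 2 + 4) := by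
      calc Nat.card (PP r t)
          ≤ (t + 1) * ((t + 1) * ((2 * r) * ((2 * r) *
            ((t / 2 + 1) * (2 * r - 1) ^ (t / 2))))) := h1
        _ ≤ (t + 1) * ((t + 1) * (((2 * r - 1) ^ 2) * (((2 * r - 1) ^ 2) *
            ((t + 1) * (2 * r - 1) ^ (t / 2))))) := by
            gcongr <;> omega
        _ = (t + 1) ^ 3 * (2 * r - 1) ^ (t / 2 + 4) := by ring
    -- to the reals
    have hcast : (Nat.card (PP r t) : ℝ) ≤ ((t : ℝ) + 1) ^ (3 : ℕ) * D ^ ((t / 2 + 4 : ℕ) : ℝ) := by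
      rw [Real.rpow_natCast, hD]
      exact_mod_cast h2
    have hexp : ((t / 2 + 4 : ℕ) : ℝ) ≤ (t : ℝ) / 2 + 4 := by
      push_cast
      have := Nat.cast_div_le (α := ℝ) (m := t) (n := 2)
      push_cast at this
      linarith
    have hcast2 : (Nat.card (PP r t) : ℝ) ≤ ((t : ℝ) + 1) ^ (3 : ℕ) * D ^ ((t : ℝ) / 2 + 4) := by
      refine hcast.trans ?_
      have := Real.rpow_le_rpow_of_exponent_le hD1.le hexp
      have h1t : (0:ℝ) ≤ ((t : ℝ) + 1) ^ (3 : ℕ) := by positivity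
      exact mul_le_mul_of_nonneg_left this h1t
    have hmono := Real.rpow_le_rpow (by positivity) hcast2 (by positivity : (0:ℝ) ≤ 1 / (t:ℝ))
    refine hmono.trans_eq ?_
    rw [Real.mul_rpow (by positivity) (by positivity)]
    congr 1
    · rw [← Real.rpow_natCast ((t:ℝ) + 1) 3, ← Real.rpow_mul (by positivity)]
      congr 1
      push_cast
      ring
    · rw [← Real.rpow_mul hD0.le]
      congr 1
      ring
  -- squeeze
  have hlo_t := hrpow_cont _ he1
  have hhi_t : Tendsto (fun t : ℕ => ((t : ℝ) + 1) ^ ((3 : ℝ) / t) * D ^ (((t : ℝ) / 2 + 4) / t))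
      atTop (𝓝 (D ^ ((1:ℝ) / 2))) := by
    have := hp.mul (hrpow_cont _ he2)
    simpa using this
  exact tendsto_of_tendsto_of_tendsto_of_le_of_le' hlo_t hhi_t hlow hup

end PPG

/-- The exponential growth rate of the number of proper powers of reduced word length `t`
in the free group `F_r` (`r ≥ 2`) is `√(2r−1)`. -/
theorem proper_powers_growth_rate (r : ℕ) (hr : 2 ≤ r) :
    Filter.limsup
      (fun t : ℕ =>
        ((Nat.card {w : FreeGroup (Fin r) //
            (∃ (u : FreeGroup (Fin r)) (q : ℕ), 2 ≤ q ∧ w = u ^ q) ∧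
            (FreeGroup.toWord w).length = t} : ℝ)) ^ ((1 : ℝ) / t))
      Filter.atTop = Real.sqrt (2 * (r : ℝ) - 1) := by
  have h := PPG.main_tendsto r hr
  have hs : Real.sqrt (2 * (r : ℝ) - 1) = ((2 * r - 1 : ℕ) : ℝ) ^ ((1 : ℝ) / 2) := by
    rw [Real.sqrt_eq_rpow]
    congr 1
    push_cast [Nat.cast_sub (by omega : 1 ≤ 2 * r)]
    ring
  rw [hs]
  exact h.limsup_eq
end

section
/- Let d = 2r, r ≥ 2, and let S ⊆ F_r be the set of proper powers in the free group F_r, viewed as a subset of the vertices of the 2r-regular tree (the Cayley graph of F_r). Then β(S) = limsup_t b_t(S)^{1/t} = 2√(2r−1), where b_t(S) is the number of (not necessarily reduced) walks of length t from the identity ending at a proper power. -/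
namespace PWGaux

open FreeGroup List

variable {r : ℕ}

abbrev Ltr (r : ℕ) := Fin r × Bool

def linv (x : Ltr r) : Ltr r := (x.1, !x.2)

@[simp] lemma linv_linv (x : Ltr r) : linv (linv x) = x := by simp [linv]

def NC (a b : Ltr r) : Prop := ¬(a.1 = b.1 ∧ a.2 = !b.2)

lemma NC_iff (a b : Ltr r) : NC a b ↔ a ≠ linv b := by
  constructor
  · rintro h rfl; exact h ⟨rfl, rfl⟩
  · rintro h ⟨h1, h2⟩; exact h (Prod.ext h1 h2)

lemma NC_self (a : Ltr r) : NC a a := by rintro ⟨_, h⟩; simp at h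

instance : DecidableRel (NC (r := r)) := fun a b => by unfold NC; infer_instance

def Reduced (L : List (Ltr r)) : Prop := List.IsChain NC L

instance : DecidablePred (Reduced (r := r)) := by
  intro L; unfold Reduced; infer_instance

lemma Reduced.tail' {x : Ltr r} {xs} (h : Reduced (x :: xs)) : Reduced xs :=
  (List.isChain_cons.mp h).2

lemma reduce_eq_self {L : List (Ltr r)} (h : Reduced L) : FreeGroup.reduce L = L := by
  induction L with
  | nil => rfl
  | cons x xs ih =>
    have hx : FreeGroup.reduce xs = xs := ih h.tail'
    rw [FreeGroup.reduce.cons, hx]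
    cases xs with
    | nil => rfl
    | cons y ys =>
      have : NC x y := (List.isChain_cons_cons.mp h).1
      simp only [NC] at this
      simp [this]

lemma reduced_reduce (L : List (Ltr r)) : Reduced (FreeGroup.reduce L) := by
  induction L with
  | nil => exact List.isChain_nil
  | cons x xs ih =>
    rw [FreeGroup.reduce.cons]
    rcases h : FreeGroup.reduce xs with _ | ⟨y, ys⟩
    · exact List.isChain_singleton x
    · rw [h] at ih
      dsimp only
      split
      · exact ih.tail'
      · exact List.isChain_cons_cons.mpr ⟨‹¬_›, ih⟩

lemma reduced_toWord (g : FreeGroup (Fin r)) : Reduced g.toWord := by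
  rw [← FreeGroup.reduce_toWord]; exact reduced_reduce _

lemma mk_cons (x : Ltr r) (L : List (Ltr r)) :
    FreeGroup.mk (x :: L) = FreeGroup.mk [x] * FreeGroup.mk L := by
  rw [FreeGroup.mul_mk]; rfl

@[simp] lemma invRev_cons (x : Ltr r) (L : List (Ltr r)) :
    FreeGroup.invRev (x :: L) = FreeGroup.invRev L ++ [linv x] := by
  simp [FreeGroup.invRev, linv]

@[simp] lemma invRev_singleton (x : Ltr r) : FreeGroup.invRev [x] = [linv x] := by
  simp [FreeGroup.invRev, linv]

lemma mk_inv_letter (x : Ltr r) : (FreeGroup.mk [x])⁻¹ = FreeGroup.mk [linv x] := by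
  rw [FreeGroup.inv_mk, invRev_singleton]

lemma mk_pair_one (x : Ltr r) : FreeGroup.mk [x, linv x] = 1 := by
  have : ([x, linv x] : List (Ltr r)) = [x] ++ [linv x] := rfl
  rw [this, ← FreeGroup.mul_mk, ← mk_inv_letter, mul_inv_cancel]

lemma reduce_eq_nil_iff {L : List (Ltr r)} : FreeGroup.reduce L = [] ↔ FreeGroup.mk L = 1 := by
  rw [← FreeGroup.toWord_mk, FreeGroup.toWord_eq_nil_iff]

lemma reduce_cons_cancel {y : Ltr r} {ys} (x : Ltr r) (h : Reduced (y :: ys))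
    (hc : x.1 = y.1 ∧ x.2 = !y.2) : FreeGroup.reduce (x :: y :: ys) = ys := by
  rw [FreeGroup.reduce.cons, reduce_eq_self h]
  simp [hc]

lemma reduce_cons_noncancel {y : Ltr r} {ys} (x : Ltr r) (h : Reduced (y :: ys))
    (hc : NC x y) : FreeGroup.reduce (x :: y :: ys) = x :: y :: ys := by
  rw [FreeGroup.reduce.cons, reduce_eq_self h]
  simp only [NC] at hc
  simp [hc]

lemma toWord_mul_letter (x : Ltr r) (g : FreeGroup (Fin r)) :
    (FreeGroup.mk [x] * g).toWord = FreeGroup.reduce (x :: g.toWord) := by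
  conv_lhs => rw [← FreeGroup.mk_toWord (x := g)]
  rw [← mk_cons, FreeGroup.toWord_mk]

lemma toWord_mk_reduced {L : List (Ltr r)} (h : Reduced L) : (FreeGroup.mk L).toWord = L := by
  rw [FreeGroup.toWord_mk, reduce_eq_self h]

def cnt (r t : ℕ) (g : FreeGroup (Fin r)) : ℕ :=
  (Finset.univ.filter fun s : Fin t → Ltr r => FreeGroup.mk (List.ofFn s) = g).card

lemma cnt_succ (t : ℕ) (g : FreeGroup (Fin r)) :
    cnt r (t+1) g = ∑ x : Ltr r, cnt r t ((FreeGroup.mk [x])⁻¹ * g) := by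
  classical
  unfold cnt
  rw [Finset.card_eq_sum_card_fiberwise
    (f := fun s : Fin (t+1) → Ltr r => s 0) (t := Finset.univ) (fun _ _ => Finset.mem_univ _)]
  refine Finset.sum_congr rfl fun x _ => ?_
  refine Finset.card_bij' (fun s _ => fun i : Fin t => s i.succ)
    (fun v _ => Fin.cons x v) ?_ ?_ ?_ ?_
  · intro s hs
    simp only [Finset.mem_filter, Finset.mem_univ, true_and] at hs ⊢
    obtain ⟨h1, h2⟩ := hs
    rw [List.ofFn_succ, mk_cons, h2] at h1
    rw [eq_inv_mul_iff_mul_eq]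
    exact h1
  · intro v hv
    simp only [Finset.mem_filter, Finset.mem_univ, true_and] at hv ⊢
    constructor
    · rw [List.ofFn_succ, mk_cons]
      simp only [Fin.cons_zero, Fin.cons_succ]
      show FreeGroup.mk [x] * FreeGroup.mk (List.ofFn v) = g
      rw [hv, mul_inv_cancel_left]
    · simp
  · intro s hs
    simp only [Finset.mem_filter, Finset.mem_univ, true_and] at hs
    funext i
    cases i using Fin.cases with
    | zero => simp [hs.2]
    | succ j => simp
  · intro v _
    funext i
    simp


def linvEquiv (r : ℕ) : Ltr r ≃ Ltr r :=
  ⟨linv, linv, linv_linv, linv_linv⟩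

lemma card_Ltr (r : ℕ) : Fintype.card (Ltr r) = 2 * r := by
  simp [Fintype.card_prod, mul_comm]

variable {r : ℕ}

lemma cnt_le (hr : 2 ≤ r) (t : ℕ) (g : FreeGroup (Fin r)) :
    (cnt r t g : ℝ) ≤ (2 * Real.sqrt (2*(r:ℝ)-1))^t *
      (Real.sqrt (2*(r:ℝ)-1))⁻¹ ^ (g.toWord.length) := by
  have hrR : (2:ℝ) ≤ (r:ℝ) := by exact_mod_cast hr
  have h1 : (1:ℝ) ≤ 2*(r:ℝ)-1 := by linarith
  set σ := Real.sqrt (2*(r:ℝ)-1) with hσdef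
  have hσ1 : 1 ≤ σ := by
    rw [hσdef, show (1:ℝ) = Real.sqrt 1 from (Real.sqrt_one).symm]
    exact Real.sqrt_le_sqrt (by rw [Real.sqrt_one]; linarith)
  have hσ0 : (0:ℝ) < σ := lt_of_lt_of_le one_pos hσ1
  have hne : σ ≠ 0 := hσ0.ne'
  have hσsq : σ^2 = 2*(r:ℝ)-1 := Real.sq_sqrt (by linarith)
  induction t generalizing g with
  | zero =>
    by_cases hg : g = 1
    · subst hg
      have : (cnt r 0 (1 : FreeGroup (Fin r)) : ℝ) ≤ 1 := by
        have := Finset.card_filter_le (Finset.univ : Finset (Fin 0 → Ltr r))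
          (fun s => FreeGroup.mk (List.ofFn s) = (1 : FreeGroup (Fin r)))
        have hcu : (Finset.univ : Finset (Fin 0 → Ltr r)).card = 1 := by simp
        unfold cnt
        exact_mod_cast le_trans this (le_of_eq hcu)
      simpa using this
    · have : cnt r 0 g = 0 := by
        unfold cnt
        rw [Finset.card_eq_zero, Finset.filter_eq_empty_iff]
        intro s _
        rw [List.ofFn_zero]
        rw [← FreeGroup.one_eq_mk]
        exact fun h => hg h.symm
      rw [this]
      push_cast
      positivity
  | succ t ih =>
    rw [cnt_succ]
    push_cast
    have step1 : (∑ x : Ltr r, (cnt r t ((FreeGroup.mk [x])⁻¹ * g) : ℝ)) ≤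
        ∑ x : Ltr r, (2*σ)^t * σ⁻¹ ^ (((FreeGroup.mk [x])⁻¹ * g).toWord.length) :=
      Finset.sum_le_sum fun x _ => ih _
    refine le_trans step1 ?_
    rw [← Finset.mul_sum]
    have reidx : (∑ x : Ltr r, σ⁻¹ ^ (((FreeGroup.mk [x])⁻¹ * g).toWord.length)) =
        ∑ y : Ltr r, σ⁻¹ ^ ((FreeGroup.mk [y] * g).toWord.length) := by
      rw [← Equiv.sum_comp (linvEquiv r) (fun y => σ⁻¹ ^ ((FreeGroup.mk [y] * g).toWord.length))]
      refine Finset.sum_congr rfl fun x _ => ?_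
      rw [mk_inv_letter]
      rfl
    rw [reidx]
    have key : (∑ y : Ltr r, σ⁻¹ ^ ((FreeGroup.mk [y] * g).toWord.length)) ≤
        2*σ * σ⁻¹ ^ g.toWord.length := by
      rcases hW : g.toWord with _ | ⟨yh, ys⟩
      · have hg1 : g = 1 := FreeGroup.toWord_eq_nil_iff.mp hW
        have : ∀ y : Ltr r, (FreeGroup.mk [y] * g).toWord.length = 1 := by
          intro y
          rw [hg1, mul_one, toWord_mk_reduced (List.isChain_singleton y)]
          rfl
        simp only [this]
        rw [Finset.sum_const, Finset.card_univ, card_Ltr]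
        simp only [List.length_nil, pow_zero, mul_one, nsmul_eq_mul, pow_one]
        have : (2*(r:ℝ)) * σ⁻¹ ≤ (2*σ^2) * σ⁻¹ := by
          apply mul_le_mul_of_nonneg_right _ (by positivity)
          rw [hσsq]; linarith
        calc ((2*r : ℕ) : ℝ) * σ⁻¹ = (2*(r:ℝ)) * σ⁻¹ := by push_cast; ring
          _ ≤ (2*σ^2) * σ⁻¹ := this
          _ = 2*σ := by field_simp
      · have hred : Reduced (yh :: ys) := by rw [← hW]; exact reduced_toWord g
        have hlen : ∀ y : Ltr r, (FreeGroup.mk [y] * g).toWord =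
            FreeGroup.reduce (y :: yh :: ys) := by
          intro y; rw [toWord_mul_letter, hW]
        have hc : (FreeGroup.mk [linv yh] * g).toWord.length = ys.length := by
          rw [hlen, reduce_cons_cancel (linv yh) hred ⟨rfl, rfl⟩]
        have hnc : ∀ y : Ltr r, y ≠ linv yh →
            (FreeGroup.mk [y] * g).toWord.length = ys.length + 2 := by
          intro y hy
          rw [hlen, reduce_cons_noncancel y hred ((NC_iff y yh).mpr hy)]
          simp
        rw [← Finset.sum_erase_add _ _ (Finset.mem_univ (linv yh))]
        have hconst : (∑ y ∈ Finset.univ.erase (linv yh),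
            σ⁻¹ ^ ((FreeGroup.mk [y] * g).toWord.length)) =
            ((Finset.univ.erase (linv yh)).card : ℝ) * σ⁻¹ ^ (ys.length + 2) := by
          rw [Finset.sum_congr rfl (fun y hy => by
            rw [hnc y (Finset.ne_of_mem_erase hy)]), Finset.sum_const, nsmul_eq_mul]
        rw [hconst, hc]
        have hcard : (Finset.univ.erase (linv yh)).card = 2*r - 1 := by
          rw [Finset.card_erase_of_mem (Finset.mem_univ _), Finset.card_univ, card_Ltr]
        rw [hcard]
        have hcast : ((2*r-1 : ℕ) : ℝ) = σ^2 := by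
          rw [hσsq]; have h2r : 1 ≤ 2*r := by omega
          push_cast [h2r]; ring
        have hkey : ((2*r-1:ℕ):ℝ) * σ⁻¹ ^ (ys.length + 2) + σ⁻¹ ^ ys.length
            = 2 * σ * σ⁻¹ ^ (ys.length + 1) := by
          rw [hcast]; linear_combination (σ⁻¹ ^ ys.length * (σ * σ⁻¹ - 1)) * mul_inv_cancel₀ hne
        simp only [hW, List.length_cons]
        exact le_of_eq hkey
    calc (2*σ)^t * ∑ y : Ltr r, σ⁻¹ ^ ((FreeGroup.mk [y] * g).toWord.length)
        ≤ (2*σ)^t * (2*σ * σ⁻¹ ^ g.toWord.length) :=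
          mul_le_mul_of_nonneg_left key (by positivity)
      _ = (2*σ)^(t+1) * σ⁻¹ ^ g.toWord.length := by ring


def RW (r n : ℕ) : Finset (List (Ltr r)) :=
  ((Finset.univ : Finset (Fin n → Ltr r)).image List.ofFn).filter Reduced

lemma mem_RW {n : ℕ} {L : List (Ltr r)} : L ∈ RW r n ↔ L.length = n ∧ Reduced L := by
  unfold RW
  rw [Finset.mem_filter, Finset.mem_image]
  constructor
  · rintro ⟨⟨s, _, rfl⟩, h2⟩
    exact ⟨List.length_ofFn, h2⟩
  · rintro ⟨h1, h2⟩
    refine ⟨⟨fun i : Fin n => L.get (i.cast h1.symm), Finset.mem_univ _, ?_⟩, h2⟩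
    apply List.ext_getElem
    · simp [h1]
    · intro i hi1 hi2
      simp [List.getElem_ofFn, Fin.cast]

lemma RW_zero_card : (RW r 0).card ≤ 1 := by
  have : RW r 0 ⊆ {[]} := by
    intro L hL
    rw [mem_RW] at hL
    simp [List.length_eq_zero_iff.mp hL.1]
  exact le_trans (Finset.card_le_card this) (by simp)

lemma RW_one_card : (RW r 1).card ≤ 2 * r := by
  unfold RW
  refine le_trans (Finset.card_filter_le _ _) (le_trans (Finset.card_image_le) ?_)
  rw [Finset.card_univ]
  simp only [Fintype.card_fun, card_Ltr, Fintype.card_fin, pow_one]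
  omega

lemma RW_step (n : ℕ) (hn : 1 ≤ n) : (RW r (n+1)).card ≤ (2*r - 1) * (RW r n).card := by
  classical
  have hsub : RW r (n+1) ⊆ (RW r n).biUnion
      (fun w => (Finset.univ.filter (fun x : Ltr r => Reduced (x :: w))).image
        (fun x => x :: w)) := by
    intro L hL
    rw [mem_RW] at hL
    obtain ⟨h1, h2⟩ := hL
    rcases L with _ | ⟨x, w⟩
    · simp at h1
    · rw [Finset.mem_biUnion]
      refine ⟨w, mem_RW.mpr ⟨by simpa using h1, h2.tail'⟩, ?_⟩
      rw [Finset.mem_image]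
      exact ⟨x, by simp [h2], rfl⟩
  refine le_trans (Finset.card_le_card hsub) (le_trans (Finset.card_biUnion_le) ?_)
  have hb : ∀ w ∈ RW r n,
      ((Finset.univ.filter (fun x : Ltr r => Reduced (x :: w))).image
        (fun x => x :: w)).card ≤ 2*r - 1 := by
    intro w hw
    rw [mem_RW] at hw
    rcases hweq : w with _ | ⟨y, ys⟩
    · exfalso; rw [hweq] at hw; simp at hw; omega
    refine le_trans (Finset.card_image_le) ?_
    have hsub2 : (Finset.univ.filter (fun x : Ltr r => Reduced (x :: y :: ys))) ⊆
        Finset.univ.erase (linv y) := by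
      intro x hx
      rw [Finset.mem_filter] at hx
      rw [Finset.mem_erase]
      refine ⟨?_, Finset.mem_univ _⟩
      have := (List.isChain_cons_cons.mp hx.2).1
      rw [NC_iff] at this
      exact this
    refine le_trans (Finset.card_le_card hsub2) ?_
    rw [Finset.card_erase_of_mem (Finset.mem_univ _), Finset.card_univ, card_Ltr]
  calc (∑ w ∈ RW r n, ((Finset.univ.filter (fun x : Ltr r => Reduced (x :: w))).image
        (fun x => x :: w)).card)
      ≤ ∑ _w ∈ RW r n, (2*r-1) := Finset.sum_le_sum hb
    _ = (RW r n).card * (2*r-1) := by rw [Finset.sum_const, smul_eq_mul]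
    _ = (2*r-1) * (RW r n).card := mul_comm _ _

lemma cardRW (hr1 : 1 ≤ r) : ∀ n, (RW r n).card ≤ 2 * (2*r-1)^n := by
  intro n
  induction n with
  | zero => exact le_trans RW_zero_card (by norm_num)
  | succ n ih =>
    rcases Nat.eq_zero_or_pos n with rfl | hn
    · refine le_trans RW_one_card ?_
      have : 1 ≤ 2*r - 1 := by omega
      calc 2*r ≤ 2*(2*r-1) := by omega
        _ = 2*(2*r-1)^1 := by ring
    · calc (RW r (n+1)).card ≤ (2*r-1) * (RW r n).card := RW_step n hn
        _ ≤ (2*r-1) * (2*(2*r-1)^n) := Nat.mul_le_mul_left _ ih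
        _ = 2*(2*r-1)^(n+1) := by ring

def CycRed (w : List (Ltr r)) : Prop := ∀ a ∈ w.getLast?, ∀ b ∈ w.head?, NC a b

lemma not_NC_linv (x : Ltr r) : ¬ NC x (linv x) := fun h => h ⟨rfl, by simp [linv]⟩

lemma reduced_invRev {c : List (Ltr r)} (hc : Reduced c) : Reduced (FreeGroup.invRev c) := by
  have : FreeGroup.reduce (FreeGroup.invRev c) = FreeGroup.invRev c := by
    rw [FreeGroup.reduce_invRev, reduce_eq_self hc]
  rw [← this]
  exact reduced_reduce _

lemma cyc_decomp_aux : ∀ (n : ℕ) (v : List (Ltr r)), v.length ≤ n → Reduced v →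
    ∃ c w : List (Ltr r), v = c ++ w ++ FreeGroup.invRev c ∧ (w = [] → c = []) ∧ CycRed w := by
  intro n
  induction n with
  | zero =>
    intro v hlen _
    have : v = [] := List.length_eq_zero_iff.mp (Nat.le_zero.mp hlen)
    subst this
    exact ⟨[], [], by simp [FreeGroup.invRev], fun _ => rfl, by intro a ha; simp at ha⟩
  | succ n ih =>
    intro v hlen hv
    rcases v with _ | ⟨x, xs⟩
    · exact ⟨[], [], by simp [FreeGroup.invRev], fun _ => rfl, by intro a ha; simp at ha⟩
    rcases hxs : xs with _ | ⟨z, zs⟩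
    · -- v = [x]
      refine ⟨[], [x], by simp [FreeGroup.invRev], by simp, ?_⟩
      intro a ha b hb
      simp at ha hb
      subst ha; subst hb
      exact NC_self x
    · rw [← hxs]
      have hxs_ne : xs ≠ [] := by rw [hxs]; simp
      set y := xs.getLast hxs_ne with hy
      set mid := xs.dropLast with hmid
      have hxs_eq : mid ++ [y] = xs := List.dropLast_append_getLast hxs_ne
      by_cases hc : y = linv x
      · -- strip
        have hvred : Reduced (x :: mid) := by
          have : Reduced ((x :: mid) ++ [y]) := by
            rw [List.cons_append, hxs_eq]; exact hv
          exact (List.isChain_append.mp this).1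
        have hmidred : Reduced mid := hvred.tail'
        have hmidlen : mid.length ≤ n := by
          have h1 : xs.length = mid.length + 1 := by
            rw [← hxs_eq]; simp
          simp only [List.length_cons] at hlen
          omega
        obtain ⟨c', w, heq, hwc, hcyc⟩ := ih mid hmidlen hmidred
        refine ⟨x :: c', w, ?_, ?_, hcyc⟩
        · rw [invRev_cons]
          have hxx : x :: xs = x :: (mid ++ [y]) := by conv_lhs => rw [← hxs_eq]
          rw [hxx, heq, hc]
          simp [List.append_assoc]
        · intro hw
          exfalso
          have hc'nil : c' = [] := hwc hw
          have hmidnil : mid = [] := by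
            rw [heq, hc'nil, hw]; simp [FreeGroup.invRev]
          have : x :: xs = [x, linv x] := by
            rw [← hxs_eq, hmidnil, hc]; rfl
          rw [this] at hv
          exact not_NC_linv x (List.isChain_cons_cons.mp hv).1
      · -- no strip: whole word cyclically reduced
        refine ⟨[], x :: xs, by simp [FreeGroup.invRev], by simp, ?_⟩
        intro a ha b hb
        simp only [List.head?_cons, Option.mem_some_iff] at hb
        have hglast : (x :: xs).getLast? = some y := by
          have : (x :: xs) = (x :: mid) ++ [y] := by rw [List.cons_append, hxs_eq]
          rw [this, List.getLast?_concat]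
        rw [hglast] at ha
        simp only [Option.mem_some_iff] at ha
        subst ha; subst hb
        exact (NC_iff _ _).mpr hc

lemma pow_reduced (w : List (Ltr r)) (hw : Reduced w) (hne : w ≠ []) (hcyc : CycRed w) :
    ∀ q, 1 ≤ q → ∃ J : List (Ltr r), Reduced J ∧ (FreeGroup.mk w)^q = FreeGroup.mk J ∧
      J.length = q * w.length ∧ J.head? = w.head? ∧ J.getLast? = w.getLast? := by
  intro q hq
  induction q with
  | zero => omega
  | succ q ih =>
    rcases Nat.eq_zero_or_pos q with rfl | hq'
    · exact ⟨w, hw, by simp, by simp, rfl, rfl⟩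
    obtain ⟨J', hJred, hJmk, hJlen, hJh, hJl⟩ := ih hq'
    have hJ'ne : J' ≠ [] := by
      intro h
      rw [h] at hJlen
      simp at hJlen
      rcases hJlen with h1 | h2
      · omega
      · exact hne h2
    refine ⟨w ++ J', ?_, ?_, ?_, ?_, ?_⟩
    · rw [Reduced] at *
      rw [List.isChain_append]
      refine ⟨hw, hJred, ?_⟩
      intro a ha b hb
      rw [hJh] at hb
      exact hcyc a ha b hb
    · rw [pow_succ', hJmk, FreeGroup.mul_mk]
    · simp [hJlen]; ring
    · exact List.head?_append_of_ne_nil _ hne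
    · rw [List.getLast?_append_of_ne_nil _ hJ'ne, hJl]

lemma conj_pow_grp {G : Type*} [Group G] (a b : G) (q : ℕ) :
    (a * b * a⁻¹)^q = a * b^q * a⁻¹ := by
  induction q with
  | zero => simp
  | succ q ih => rw [pow_succ, pow_succ, ih]; group

lemma decomp_exists {n : ℕ} (hn : 1 ≤ n) (L : List (Ltr r)) (hL : L ∈ RW r n)
    (hpp : ∃ (u : FreeGroup (Fin r)) (q : ℕ), 2 ≤ q ∧ FreeGroup.mk L = u ^ q) :
    ∃ p : List (Ltr r) × List (Ltr r) × ℕ, Reduced p.1 ∧ Reduced p.2.1 ∧ p.2.1 ≠ [] ∧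
      2 ≤ p.2.2 ∧ 2*p.1.length + p.2.2*p.2.1.length = n ∧
      FreeGroup.mk L = FreeGroup.mk p.1 * (FreeGroup.mk p.2.1)^p.2.2 * (FreeGroup.mk p.1)⁻¹ := by
  obtain ⟨hlen, hred⟩ := mem_RW.mp hL
  obtain ⟨u, q, hq, hLu⟩ := hpp
  have hu1 : u ≠ 1 := by
    intro h
    rw [h, one_pow] at hLu
    have : L = [] := by
      have := toWord_mk_reduced hred
      rw [hLu, FreeGroup.toWord_one] at this
      exact this.symm
    rw [this] at hlen
    simp at hlen
    omega
  have hvred : Reduced u.toWord := reduced_toWord u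
  have hvne : u.toWord ≠ [] := fun h => hu1 (FreeGroup.toWord_eq_nil_iff.mp h)
  obtain ⟨c, w, heq, hwc, hcyc⟩ := cyc_decomp_aux u.toWord.length u.toWord le_rfl hvred
  have hwne : w ≠ [] := by
    intro h
    have hcnil := hwc h
    rw [hcnil, h] at heq
    simp [FreeGroup.invRev] at heq
    exact hu1 heq
  -- extract reductions and seams
  have hsplit := List.isChain_append.mp (show List.Chain' NC (c ++ w ++ FreeGroup.invRev c) from
    heq ▸ hvred)
  have hsplit2 := List.isChain_append.mp hsplit.1
  have hcred : Reduced c := hsplit2.1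
  have hwred : Reduced w := hsplit2.2.1
  have hseam_cw : ∀ a ∈ c.getLast?, ∀ b ∈ w.head?, NC a b := hsplit2.2.2
  have hseam_wc : ∀ a ∈ w.getLast?, ∀ b ∈ (FreeGroup.invRev c).head?, NC a b := by
    intro a ha b hb
    refine hsplit.2.2 a ?_ b hb
    rw [List.getLast?_append_of_ne_nil _ hwne]
    exact ha
  have hu : u = FreeGroup.mk c * FreeGroup.mk w * (FreeGroup.mk c)⁻¹ := by
    rw [FreeGroup.inv_mk, FreeGroup.mul_mk, FreeGroup.mul_mk, ← heq, FreeGroup.mk_toWord]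
  obtain ⟨J, hJred, hJmk, hJlen, hJh, hJl⟩ := pow_reduced w hwred hwne hcyc q (by omega)
  have hJne : J ≠ [] := by
    intro h
    rw [h] at hJlen
    simp at hJlen
    rcases hJlen with h1 | h2
    · omega
    · exact hwne h2
  have hbig : Reduced (c ++ J ++ FreeGroup.invRev c) := by
    rw [Reduced, List.append_assoc, List.isChain_append]
    refine ⟨hcred, ?_, ?_⟩
    · rw [List.isChain_append]
      refine ⟨hJred, reduced_invRev hcred, ?_⟩
      intro a ha b hb
      rw [hJl] at ha
      exact hseam_wc a ha b hb
    · intro a ha b hb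
      rw [List.head?_append_of_ne_nil _ hJne, hJh] at hb
      exact hseam_cw a ha b hb
  have hmkL : FreeGroup.mk L = FreeGroup.mk c * (FreeGroup.mk w)^q * (FreeGroup.mk c)⁻¹ := by
    rw [hLu, hu, conj_pow_grp]
  have hLbig : L = c ++ J ++ FreeGroup.invRev c := by
    have h1 : FreeGroup.mk L = FreeGroup.mk (c ++ J ++ FreeGroup.invRev c) := by
      rw [hmkL, hJmk, FreeGroup.inv_mk, FreeGroup.mul_mk, FreeGroup.mul_mk]
    have h2 := congrArg FreeGroup.toWord h1
    rw [toWord_mk_reduced hred, toWord_mk_reduced hbig] at h2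
    exact h2
  have hlenJ : L.length = c.length + J.length + c.length := by
    rw [hLbig]; simp [FreeGroup.invRev_length]; ring
  rw [hlen] at hlenJ
  have hlen2 : 2*c.length + q*w.length = n := by
    rw [hJlen] at hlenJ; omega
  exact ⟨(c, w, q), hcred, hwred, hwne, hq, hlen2, hmkL⟩


noncomputable def PPW (r n : ℕ) : Finset (List (Ltr r)) :=
  @Finset.filter _ (fun L => ∃ (u : FreeGroup (Fin r)) (q : ℕ), 2 ≤ q ∧ FreeGroup.mk L = u ^ q)
    (Classical.decPred _) (RW r n)

lemma mem_PPW {n : ℕ} {L : List (Ltr r)} : L ∈ PPW r n ↔ L ∈ RW r n ∧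
    ∃ (u : FreeGroup (Fin r)) (q : ℕ), 2 ≤ q ∧ FreeGroup.mk L = u ^ q := by
  unfold PPW
  exact @Finset.mem_filter _ _ (Classical.decPred _) _ _

lemma card_PPW_le (hr : 2 ≤ r) (n : ℕ) :
    ((PPW r n).card : ℝ) ≤ 4 * (n+1)^3 * (Real.sqrt (2*(r:ℝ)-1))^n := by
  classical
  have hrR : (2:ℝ) ≤ (r:ℝ) := by exact_mod_cast hr
  set σ := Real.sqrt (2*(r:ℝ)-1) with hσdef
  have hσ1 : 1 ≤ σ := by
    rw [hσdef, show (1:ℝ) = Real.sqrt 1 from (Real.sqrt_one).symm]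
    exact Real.sqrt_le_sqrt (by rw [Real.sqrt_one]; linarith)
  have hσ0 : (0:ℝ) < σ := lt_of_lt_of_le one_pos hσ1
  have hσsq : σ^2 = 2*(r:ℝ)-1 := Real.sq_sqrt (by linarith)
  have hcast : ((2*r-1 : ℕ) : ℝ) = σ^2 := by
    rw [hσsq]; have h2r : 1 ≤ 2*r := by omega
    push_cast [h2r]; ring
  rcases Nat.eq_zero_or_pos n with rfl | hn
  · have h1 : (PPW r 0).card ≤ 1 := le_trans (Finset.card_le_card (Finset.filter_subset _ _))
      RW_zero_card
    have h2 : ((PPW r 0).card : ℝ) ≤ 1 := by exact_mod_cast h1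
    refine le_trans h2 (by norm_num)
  · set prp : List (Ltr r) → (List (Ltr r) × List (Ltr r) × ℕ) → Prop := fun L p =>
      Reduced p.1 ∧ Reduced p.2.1 ∧ p.2.1 ≠ [] ∧ 2 ≤ p.2.2 ∧
      2*p.1.length + p.2.2*p.2.1.length = n ∧
      FreeGroup.mk L = FreeGroup.mk p.1 * (FreeGroup.mk p.2.1)^p.2.2 * (FreeGroup.mk p.1)⁻¹
      with hprp
    set φ : List (Ltr r) → List (Ltr r) × List (Ltr r) × ℕ := fun L =>
      if h : ∃ p, prp L p then h.choose else ([], [], 0) with hφ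
    have hspec : ∀ L ∈ PPW r n, prp L (φ L) := by
      intro L hL
      rw [mem_PPW] at hL
      have hex : ∃ p, prp L p := decomp_exists hn L hL.1 hL.2
      simp only [hφ, dif_pos hex]
      exact hex.choose_spec
    have hm1 : ∀ L ∈ PPW r n, 1 ≤ (φ L).2.1.length := by
      intro L hL
      have h3 := (hspec L hL).2.2.1
      rcases hh : (φ L).2.1 with _ | _
      · exact absurd hh h3
      · simp
    set K : Finset (ℕ × ℕ × ℕ) :=
      (Finset.range (n+1)) ×ˢ (Finset.range (n+1)) ×ˢ (Finset.range (n+1)) with hK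
    have hmaps : ∀ L ∈ PPW r n,
        ((φ L).1.length, (φ L).2.1.length, (φ L).2.2) ∈ K := by
      intro L hL
      obtain ⟨_, _, _, h4, h5, _⟩ := hspec L hL
      have := hm1 L hL
      simp only [hK, Finset.mem_product, Finset.mem_range]
      refine ⟨by omega, by nlinarith, by nlinarith⟩
    rw [Finset.card_eq_sum_card_fiberwise hmaps]
    push_cast
    have hfib : ∀ key ∈ K,
        (((PPW r n).filter
          (fun L => ((φ L).1.length, (φ L).2.1.length, (φ L).2.2) = key)).card : ℝ)
          ≤ 4 * σ^n := by
      intro key _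
      set fib := (PPW r n).filter
        (fun L => ((φ L).1.length, (φ L).2.1.length, (φ L).2.2) = key) with hfibdef
      rcases Finset.eq_empty_or_nonempty fib with he | ⟨L0, hL0⟩
      · rw [he]
        simp only [Finset.card_empty, Nat.cast_zero]
        positivity
      · obtain ⟨hL0p, hL0k⟩ := Finset.mem_filter.mp hL0
        obtain ⟨_, _, _, h4, h5, _⟩ := hspec L0 hL0p
        have hm10 := hm1 L0 hL0p
        rw [Prod.ext_iff, Prod.ext_iff] at hL0k
        have hk1 := hL0k.1
        have hk2 := hL0k.2.1
        have hsumle : 2 * (key.1 + key.2.1) ≤ n := by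
          simp only [← hk1, ← hk2]
          nlinarith
        have hinj : fib.card ≤ ((RW r key.1) ×ˢ (RW r key.2.1)).card := by
          refine Finset.card_le_card_of_injOn (fun L => ((φ L).1, (φ L).2.1)) ?_ ?_
          · intro L hL
            obtain ⟨hLp, hLk⟩ := Finset.mem_filter.mp hL
            obtain ⟨p1, p2, _, _, _, _⟩ := hspec L hLp
            rw [Prod.ext_iff, Prod.ext_iff] at hLk
            rw [Finset.mem_coe, Finset.mem_product]
            exact ⟨mem_RW.mpr ⟨hLk.1, p1⟩, mem_RW.mpr ⟨hLk.2.1, p2⟩⟩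
          · intro L hL M hM heq
            obtain ⟨hLp, hLk⟩ := Finset.mem_filter.mp hL
            obtain ⟨hMp, hMk⟩ := Finset.mem_filter.mp hM
            rw [Prod.ext_iff] at heq
            rw [Prod.ext_iff, Prod.ext_iff] at hLk hMk
            have heq1 : (φ L).1 = (φ M).1 := heq.1
            have heq2 : (φ L).2.1 = (φ M).2.1 := heq.2
            have hLk3 : (φ L).2.2 = key.2.2 := hLk.2.2
            have hMk3 : (φ M).2.2 = key.2.2 := hMk.2.2
            have hqeq : (φ L).2.2 = (φ M).2.2 := by omega
            have hmkeq : FreeGroup.mk L = FreeGroup.mk M := by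
              rw [(hspec L hLp).2.2.2.2.2, (hspec M hMp).2.2.2.2.2, heq1, heq2, hqeq]
            have hLred : Reduced L := (mem_RW.mp (mem_PPW.mp hLp).1).2
            have hMred : Reduced M := (mem_RW.mp (mem_PPW.mp hMp).1).2
            have := congrArg FreeGroup.toWord hmkeq
            rwa [toWord_mk_reduced hLred, toWord_mk_reduced hMred] at this
        have hRWbound : (((RW r key.1) ×ˢ (RW r key.2.1)).card : ℝ) ≤ 4 * σ^n := by
          rw [Finset.card_product]
          have b1 := cardRW (by omega : 1 ≤ r) key.1
          have b2 := cardRW (by omega : 1 ≤ r) key.2.1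
          have : ((RW r key.1).card * (RW r key.2.1).card : ℕ) ≤
              (2 * (2*r-1)^key.1) * (2 * (2*r-1)^key.2.1) :=
            Nat.mul_le_mul b1 b2
          have hreal : (((RW r key.1).card * (RW r key.2.1).card : ℕ) : ℝ) ≤
              ((2 * (2*r-1)^key.1) * (2 * (2*r-1)^key.2.1) : ℕ) := by exact_mod_cast this
          refine le_trans hreal ?_
          push_cast [hcast]
          have hpow : (σ^2)^key.1 * (σ^2)^key.2.1 = σ^(2*(key.1 + key.2.1)) := by
            rw [← pow_mul, ← pow_mul, ← pow_add]; ring_nf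
          calc 2*(σ^2)^key.1 * (2*(σ^2)^key.2.1) = 4 * ((σ^2)^key.1 * (σ^2)^key.2.1) := by ring
            _ = 4 * σ^(2*(key.1+key.2.1)) := by rw [hpow]
            _ ≤ 4 * σ^n := by
                have := pow_le_pow_right₀ hσ1 hsumle
                linarith
        calc (fib.card : ℝ) ≤ (((RW r key.1) ×ˢ (RW r key.2.1)).card : ℝ) := by exact_mod_cast hinj
          _ ≤ 4 * σ^n := hRWbound
    calc (∑ key ∈ K, (((PPW r n).filter
          (fun L => ((φ L).1.length, (φ L).2.1.length, (φ L).2.2) = key)).card : ℝ))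
        ≤ ∑ _key ∈ K, 4 * σ^n := Finset.sum_le_sum hfib
      _ = (K.card : ℝ) * (4 * σ^n) := by rw [Finset.sum_const, nsmul_eq_mul]
      _ ≤ 4 * (n+1)^3 * σ^n := by
          have hKcard : K.card = (n+1)^3 := by
            simp only [hK, Finset.card_product, Finset.card_range]; ring
          rw [hKcard]
          push_cast
          ring_nf
          exact le_rfl


noncomputable def btN (r t : ℕ) : ℕ :=
  (@Finset.filter _ (fun s : Fin t → Ltr r =>
      ∃ (u : FreeGroup (Fin r)) (q : ℕ), 2 ≤ q ∧ FreeGroup.mk (List.ofFn s) = u ^ q)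
    (Classical.decPred _) Finset.univ).card

lemma btN_eq_natcard (t : ℕ) :
    Nat.card {s : Fin t → Ltr r // ∃ (u : FreeGroup (Fin r)) (q : ℕ), 2 ≤ q ∧
      FreeGroup.mk (List.ofFn s) = u ^ q} = btN r t := by
  classical
  rw [Nat.card_eq_fintype_card, Fintype.card_subtype, btN]

lemma btN_le (hr : 2 ≤ r) (t : ℕ) :
    (btN r t : ℝ) ≤ 4*(t+1)^4 * (2 * Real.sqrt (2*(r:ℝ)-1))^t := by
  classical
  have hrR : (2:ℝ) ≤ (r:ℝ) := by exact_mod_cast hr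
  set σ := Real.sqrt (2*(r:ℝ)-1) with hσdef
  have hσ1 : 1 ≤ σ := by
    rw [hσdef, show (1:ℝ) = Real.sqrt 1 from (Real.sqrt_one).symm]
    exact Real.sqrt_le_sqrt (by rw [Real.sqrt_one]; linarith)
  have hσ0 : (0:ℝ) < σ := lt_of_lt_of_le one_pos hσ1
  set PPpred : FreeGroup (Fin r) → Prop := fun g => ∃ u q, 2 ≤ q ∧ g = u ^ q with hPPpred
  set G : Finset (FreeGroup (Fin r)) :=
    ((Finset.univ : Finset (Fin t → Ltr r)).image (fun s => FreeGroup.mk (List.ofFn s))).filter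
      PPpred with hG
  have hmaps : ∀ s ∈ (@Finset.filter _ (fun s : Fin t → Ltr r =>
      ∃ (u : FreeGroup (Fin r)) (q : ℕ), 2 ≤ q ∧ FreeGroup.mk (List.ofFn s) = u ^ q)
    (Classical.decPred _) Finset.univ), FreeGroup.mk (List.ofFn s) ∈ G := by
    intro s hs
    rw [Finset.mem_filter] at hs ⊢
    exact ⟨Finset.mem_image.mpr ⟨s, Finset.mem_univ _, rfl⟩, hs.2⟩
  have hsum1 : btN r t = ∑ g ∈ G, cnt r t g := by
    rw [btN, Finset.card_eq_sum_card_fiberwise hmaps]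
    refine Finset.sum_congr rfl fun g hg => ?_
    unfold cnt
    congr 1
    rw [Finset.filter_filter]
    apply Finset.filter_congr
    intro s _
    constructor
    · rintro ⟨_, h⟩; exact h
    · intro h
      refine ⟨?_, h⟩
      have := (Finset.mem_filter.mp hg).2
      rw [hPPpred] at this
      rw [← h] at this
      exact this
  have hlenle : ∀ g ∈ G, g.toWord.length ∈ Finset.range (t+1) := by
    intro g hg
    obtain ⟨himg, _⟩ := Finset.mem_filter.mp hg
    obtain ⟨s, _, rfl⟩ := Finset.mem_image.mp himg
    rw [Finset.mem_range, FreeGroup.toWord_mk]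
    have h1 : (FreeGroup.reduce (List.ofFn s)).length ≤ (List.ofFn s).length :=
      FreeGroup.Red.length_le FreeGroup.reduce.red
    rw [List.length_ofFn] at h1
    omega
  have hsum2 : (∑ g ∈ G, (cnt r t g : ℝ)) ≤
      (2*σ)^t * ∑ g ∈ G, σ⁻¹ ^ g.toWord.length := by
    rw [Finset.mul_sum]
    exact Finset.sum_le_sum fun g _ => cnt_le hr t g
  have hsum3 : (∑ g ∈ G, σ⁻¹ ^ g.toWord.length) =
      ∑ n ∈ Finset.range (t+1), ∑ g ∈ G.filter (fun g => g.toWord.length = n),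
        σ⁻¹ ^ g.toWord.length := (Finset.sum_fiberwise_of_maps_to hlenle _).symm
  have hsum4 : ∀ n ∈ Finset.range (t+1),
      (∑ g ∈ G.filter (fun g => g.toWord.length = n), σ⁻¹ ^ g.toWord.length)
        ≤ 4*((n:ℝ)+1)^3 := by
    intro n _
    have hconst : (∑ g ∈ G.filter (fun g => g.toWord.length = n), σ⁻¹ ^ g.toWord.length)
        = ((G.filter (fun g => g.toWord.length = n)).card : ℝ) * σ⁻¹ ^ n := by
      rw [Finset.sum_congr rfl (fun g hg => by
        rw [(Finset.mem_filter.mp hg).2]), Finset.sum_const, nsmul_eq_mul]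
    rw [hconst]
    have hcardle : (G.filter (fun g => g.toWord.length = n)).card ≤ (PPW r n).card := by
      refine Finset.card_le_card_of_injOn (fun g => g.toWord) ?_ ?_
      · intro g hg
        obtain ⟨hgG, hglen⟩ := Finset.mem_filter.mp hg
        obtain ⟨_, hgPP⟩ := Finset.mem_filter.mp hgG
        rw [Finset.mem_coe, mem_PPW]
        refine ⟨mem_RW.mpr ⟨hglen, reduced_toWord g⟩, ?_⟩
        rw [hPPpred] at hgPP
        rw [FreeGroup.mk_toWord]
        exact hgPP
      · intro g _ h _ hgh
        exact FreeGroup.toWord_injective hgh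
    have hPPWle := card_PPW_le hr n
    have hinvle : σ⁻¹ ^ n ≤ (σ^n)⁻¹ := by rw [← inv_pow]
    calc ((G.filter (fun g => g.toWord.length = n)).card : ℝ) * σ⁻¹ ^ n
        ≤ ((PPW r n).card : ℝ) * σ⁻¹ ^ n := by
          apply mul_le_mul_of_nonneg_right _ (by positivity)
          exact_mod_cast hcardle
      _ ≤ (4*(n+1)^3 * σ^n) * σ⁻¹ ^ n := by
          apply mul_le_mul_of_nonneg_right hPPWle (by positivity)
      _ = 4*(n+1)^3 * (σ * σ⁻¹)^n := by rw [mul_pow]; ring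
      _ = 4*(n+1)^3 := by rw [mul_inv_cancel₀ hσ0.ne', one_pow, mul_one]
  have hsum5 : (∑ n ∈ Finset.range (t+1), (4*((n:ℝ)+1)^3)) ≤ 4*((t:ℝ)+1)^4 := by
    have hterm : ∀ n ∈ Finset.range (t+1), 4*((n:ℝ)+1)^3 ≤ 4*((t:ℝ)+1)^3 := by
      intro n hn
      rw [Finset.mem_range] at hn
      have : (n:ℝ) + 1 ≤ (t:ℝ)+1 := by
        have : (n:ℝ) ≤ t := by exact_mod_cast Nat.lt_succ_iff.mp hn
        linarith
      have h0 : (0:ℝ) ≤ (n:ℝ)+1 := by positivity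
      nlinarith [pow_le_pow_left₀ h0 this 3]
    calc (∑ n ∈ Finset.range (t+1), (4*((n:ℝ)+1)^3))
        ≤ ∑ _n ∈ Finset.range (t+1), 4*((t:ℝ)+1)^3 := Finset.sum_le_sum hterm
      _ = (t+1) * (4*((t:ℝ)+1)^3) := by rw [Finset.sum_const, Finset.card_range, nsmul_eq_mul]; push_cast; ring
      _ = 4*((t:ℝ)+1)^4 := by ring
  have hfinal : (btN r t : ℝ) ≤ (2*σ)^t * (4*((t:ℝ)+1)^4) := by
    rw [hsum1]
    push_cast
    calc (∑ g ∈ G, (cnt r t g : ℝ))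
        ≤ (2*σ)^t * ∑ g ∈ G, σ⁻¹ ^ g.toWord.length := hsum2
      _ = (2*σ)^t * ∑ n ∈ Finset.range (t+1), ∑ g ∈ G.filter (fun g => g.toWord.length = n),
            σ⁻¹ ^ g.toWord.length := by rw [hsum3]
      _ ≤ (2*σ)^t * ∑ n ∈ Finset.range (t+1), (4*((n:ℝ)+1)^3) := by
          apply mul_le_mul_of_nonneg_left _ (by positivity)
          refine Finset.sum_le_sum ?_
          intro n hn
          have := hsum4 n hn
          push_cast at this ⊢
          exact this
      _ ≤ (2*σ)^t * (4*((t:ℝ)+1)^4) := by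
          apply mul_le_mul_of_nonneg_left hsum5 (by positivity)
  calc (btN r t : ℝ) ≤ (2*σ)^t * (4*((t:ℝ)+1)^4) := hfinal
    _ = 4*((t:ℝ)+1)^4 * (2*σ)^t := by ring


def wd : BinaryTree (Ltr r) → List (Ltr r)
  | BinaryTree.nil => []
  | BinaryTree.node a t₁ t₂ => a :: (wd t₁ ++ linv a :: wd t₂)

def Good : Ltr r → BinaryTree (Ltr r) → Prop
  | _, BinaryTree.nil => True
  | f, BinaryTree.node a t₁ t₂ => a ≠ f ∧ Good (linv a) t₁ ∧ Good f t₂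

lemma mk_wd : ∀ T : BinaryTree (Ltr r), FreeGroup.mk (wd T) = 1
  | BinaryTree.nil => rfl
  | BinaryTree.node a t₁ t₂ => by
    show FreeGroup.mk (a :: (wd t₁ ++ linv a :: wd t₂)) = 1
    have e2 : FreeGroup.mk [a] * (FreeGroup.mk (wd t₁) *
        (FreeGroup.mk [linv a] * FreeGroup.mk (wd t₂)))
        = FreeGroup.mk (a :: (wd t₁ ++ linv a :: wd t₂)) := by
      rw [FreeGroup.mul_mk, FreeGroup.mul_mk, FreeGroup.mul_mk]
      rfl
    rw [← e2, mk_wd t₁, mk_wd t₂, ← mk_inv_letter]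
    group

lemma len_wd : ∀ T : BinaryTree (Ltr r), (wd T).length = 2 * T.numNodes
  | BinaryTree.nil => rfl
  | BinaryTree.node a t₁ t₂ => by
    show (a :: (wd t₁ ++ linv a :: wd t₂)).length = 2 * (t₁.numNodes + t₂.numNodes + 1)
    simp [len_wd t₁, len_wd t₂]
    ring

lemma reduce_eq_toWord_mk (L : List (Ltr r)) :
    FreeGroup.reduce L = (FreeGroup.mk L).toWord := (FreeGroup.toWord_mk).symm

lemma prefix_append_cases {α : Type*} {q u v : List α} (h : q <+: u ++ v) :
    q <+: u ∨ ∃ w, w <+: v ∧ q = u ++ w := by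
  rcases le_or_gt q.length u.length with hle | hlt
  · exact Or.inl (List.prefix_of_prefix_length_le h (List.prefix_append u v) hle)
  · right
    have hq : q = (u ++ v).take q.length := List.prefix_iff_eq_take.mp h
    have heq : q = u ++ v.take (q.length - u.length) := by
      conv_lhs => rw [hq]
      rw [List.take_append, List.take_of_length_le (by omega)]
    exact ⟨v.take (q.length - u.length), List.take_prefix _ _, heq⟩

lemma linv_ne_iff {a h : Ltr r} : h ≠ linv a ↔ a ≠ linv h := by
  constructor
  · intro hh hc
    exact hh (by rw [hc, linv_linv])
  · intro hh hc
    exact hh (by rw [hc, linv_linv])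

lemma reduce_cons_of_nil {x : Ltr r} {q : List (Ltr r)} (h : FreeGroup.reduce q = []) :
    FreeGroup.reduce (x :: q) = [x] := by
  rw [FreeGroup.reduce.cons, h]

lemma reduce_cons_of_head {x h : Ltr r} {q tl : List (Ltr r)}
    (hq : FreeGroup.reduce q = h :: tl) (hnc : NC x h) :
    FreeGroup.reduce (x :: q) = x :: h :: tl := by
  rw [FreeGroup.reduce.cons, hq]
  simp only [NC] at hnc
  simp [hnc]

lemma good_prefix_head : ∀ (T : BinaryTree (Ltr r)) (f : Ltr r), Good f T → ∀ q, q <+: wd T →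
    FreeGroup.reduce q = [] ∨ ∃ h tl, FreeGroup.reduce q = h :: tl ∧ h ≠ f := by
  intro T
  induction T with
  | nil =>
    intro f _ q hq
    rw [List.prefix_nil.mp hq]
    exact Or.inl rfl
  | node a t₁ t₂ ih₁ ih₂ =>
    intro f hG q hq
    obtain ⟨haf, hg1, hg2⟩ := hG
    rcases q with _ | ⟨b, q1⟩
    · exact Or.inl rfl
    · rw [show wd (BinaryTree.node a t₁ t₂) = a :: (wd t₁ ++ linv a :: wd t₂) from rfl] at hq
      rw [List.cons_prefix_cons] at hq
      obtain ⟨rfl, hq1⟩ := hq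
      have hcase2 : ∀ q1', q1' <+: wd t₁ → FreeGroup.reduce (b :: q1') = [] ∨
          ∃ h tl, FreeGroup.reduce (b :: q1') = h :: tl ∧ h ≠ f := by
        intro q1' hpre
        rcases ih₁ (linv b) hg1 q1' hpre with hnil | ⟨h, tl, hred, hne⟩
        · exact Or.inr ⟨b, [], reduce_cons_of_nil hnil, haf⟩
        · have hnc : NC b h := (NC_iff b h).mpr (linv_ne_iff.mp hne)
          exact Or.inr ⟨b, h :: tl, reduce_cons_of_head hred hnc, haf⟩
      rcases prefix_append_cases hq1 with hc1 | ⟨w, hw, rfl⟩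
      · exact hcase2 _ hc1
      · rcases w with _ | ⟨c, q2⟩
        · rw [List.append_nil]
          exact hcase2 _ (List.prefix_refl _)
        · rw [List.cons_prefix_cons] at hw
          obtain ⟨rfl, hq2⟩ := hw
          have hmk : FreeGroup.mk (b :: (wd t₁ ++ linv b :: q2)) = FreeGroup.mk q2 := by
            have e2 : FreeGroup.mk [b] * (FreeGroup.mk (wd t₁) *
                (FreeGroup.mk [linv b] * FreeGroup.mk q2))
                = FreeGroup.mk (b :: (wd t₁ ++ linv b :: q2)) := by
              rw [FreeGroup.mul_mk, FreeGroup.mul_mk, FreeGroup.mul_mk]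
              rfl
            rw [← e2, mk_wd t₁, ← mk_inv_letter]
            group
          have hred : FreeGroup.reduce (b :: (wd t₁ ++ linv b :: q2)) = FreeGroup.reduce q2 := by
            rw [reduce_eq_toWord_mk, reduce_eq_toWord_mk, hmk]
          rw [hred]
          exact ih₂ f hg2 q2 hq2

lemma wd_take_small {a : Ltr r} {t₁ t₂ : BinaryTree (Ltr r)} (hg1 : Good (linv a) t₁)
    (i : ℕ) (h1 : 1 ≤ i) (h2 : i ≤ (wd t₁).length + 1) :
    FreeGroup.reduce ((wd (BinaryTree.node a t₁ t₂)).take i) ≠ [] := by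
  obtain ⟨j, rfl⟩ : ∃ j, i = j + 1 := ⟨i-1, by omega⟩
  have h2' : j ≤ (wd t₁).length := by omega
  have htake : (wd (BinaryTree.node a t₁ t₂)).take (j+1) = a :: (wd t₁).take j := by
    show (a :: (wd t₁ ++ linv a :: wd t₂)).take (j+1) = _
    rw [List.take_succ_cons, List.take_append,
      Nat.sub_eq_zero_of_le h2', List.take_zero, List.append_nil]
  rw [htake]
  rcases good_prefix_head t₁ (linv a) hg1 ((wd t₁).take j) (List.take_prefix _ _) with
    hnil | ⟨h, tl, hred, hne⟩
  · rw [reduce_cons_of_nil hnil]; simp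
  · rw [reduce_cons_of_head hred ((NC_iff a h).mpr (linv_ne_iff.mp hne))]; simp

lemma wd_take_zero {a : Ltr r} {t₁ t₂ : BinaryTree (Ltr r)} :
    FreeGroup.reduce ((wd (BinaryTree.node a t₁ t₂)).take ((wd t₁).length + 2)) = [] := by
  have htake : (wd (BinaryTree.node a t₁ t₂)).take ((wd t₁).length + 2)
      = a :: (wd t₁ ++ [linv a]) := by
    show (a :: (wd t₁ ++ linv a :: wd t₂)).take ((wd t₁).length + 2) = _
    rw [show (wd t₁).length + 2 = ((wd t₁).length + 1) + 1 by omega, List.take_succ_cons,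
      List.take_append, List.take_of_length_le (by omega),
      show (wd t₁).length + 1 - (wd t₁).length = 1 by omega]
    rw [show (1 : ℕ) = 0 + 1 by omega, List.take_succ_cons, List.take_zero]
  rw [htake, reduce_eq_nil_iff]
  have e2 : FreeGroup.mk [a] * (FreeGroup.mk (wd t₁) * FreeGroup.mk [linv a])
      = FreeGroup.mk (a :: (wd t₁ ++ [linv a])) := by
    rw [FreeGroup.mul_mk, FreeGroup.mul_mk]
    rfl
  rw [← e2, mk_wd t₁, ← mk_inv_letter]
  group

lemma wd_drop {a : Ltr r} {t₁ t₂ : BinaryTree (Ltr r)} :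
    (wd (BinaryTree.node a t₁ t₂)).drop ((wd t₁).length + 2) = wd t₂ := by
  show (a :: (wd t₁ ++ linv a :: wd t₂)).drop ((wd t₁).length + 2) = _
  rw [show (wd t₁).length + 2 = ((wd t₁).length + 1) + 1 by omega, List.drop_succ_cons,
    List.drop_append, List.drop_of_length_le (by omega),
    show (wd t₁).length + 1 - (wd t₁).length = 1 by omega, List.nil_append,
    List.drop_succ_cons, List.drop_zero]

lemma wd_take_t1 {a : Ltr r} {t₁ t₂ : BinaryTree (Ltr r)} :
    ((wd (BinaryTree.node a t₁ t₂)).drop 1).take ((wd t₁).length) = wd t₁ := by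
  show ((a :: (wd t₁ ++ linv a :: wd t₂)).drop 1).take ((wd t₁).length) = _
  rw [List.drop_succ_cons, List.drop_zero, List.take_left]

lemma wd_inj : ∀ (T : BinaryTree (Ltr r)) {T' : BinaryTree (Ltr r)} {f f' : Ltr r},
    Good f T → Good f' T' → wd T = wd T' → T = T' := by
  intro T
  induction T with
  | nil =>
    intro T' f f' _ _ h
    cases T' with
    | nil => rfl
    | node a' t₁' t₂' => exact absurd h.symm (by simp [wd])
  | node a t₁ t₂ ih₁ ih₂ =>
    intro T' f f' hG hG' h
    cases T' with
    | nil => exact absurd h (by simp [wd])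
    | node a' t₁' t₂' =>
      obtain ⟨haf, hg1, hg2⟩ := hG
      obtain ⟨haf', hg1', hg2'⟩ := hG'
      have ha : a = a' := by
        have := congrArg (fun L => L.head?) h
        simpa [wd] using this
      subst ha
      have hmm : (wd t₁).length = (wd t₁').length := by
        by_contra hne
        rcases Nat.lt_or_ge (wd t₁).length (wd t₁').length with hlt | hge
        · exact wd_take_small hg1' ((wd t₁).length+2) (by omega) (by omega)
            (by rw [← h]; exact wd_take_zero)
        · have hlt' : (wd t₁').length < (wd t₁).length := by omega
          exact wd_take_small hg1 ((wd t₁').length+2) (by omega) (by omega)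
            (by rw [h]; exact wd_take_zero)
      have ht1 : wd t₁ = wd t₁' := by
        have h1 := congrArg (fun L => (L.drop 1).take (wd t₁).length) h
        rw [wd_take_t1] at h1
        rw [hmm] at h1
        rw [wd_take_t1] at h1
        exact h1
      have ht2 : wd t₂ = wd t₂' := by
        have h2 := congrArg (fun L => L.drop ((wd t₁).length + 2)) h
        rw [wd_drop] at h2
        rw [hmm] at h2
        rw [wd_drop] at h2
        exact h2
      rw [ih₁ hg1 hg1' ht1, ih₂ hg2 hg2' ht2]


noncomputable local instance treeDecEq : DecidableEq (BinaryTree (Ltr r)) := Classical.decEq _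

noncomputable def labelings (f : Ltr r) : BinaryTree Unit → Finset (BinaryTree (Ltr r))
  | BinaryTree.nil => {BinaryTree.nil}
  | BinaryTree.node _ s₁ s₂ =>
    (Finset.univ.filter (· ≠ f)).biUnion fun a =>
      ((labelings (linv a) s₁) ×ˢ (labelings f s₂)).image fun p => BinaryTree.node a p.1 p.2

lemma labelings_spec : ∀ (sh : BinaryTree Unit) (f : Ltr r), ∀ T ∈ labelings f sh,
    Good f T ∧ T.numNodes = sh.numNodes ∧ T.map (fun _ => ()) = sh := by
  intro sh
  induction sh with
  | nil =>
    intro f T hT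
    simp only [labelings, Finset.mem_singleton] at hT
    subst hT
    exact ⟨trivial, rfl, rfl⟩
  | node u s₁ s₂ ih₁ ih₂ =>
    intro f T hT
    simp only [labelings, Finset.mem_biUnion, Finset.mem_image, Finset.mem_product,
      Finset.mem_filter, Finset.mem_univ, true_and] at hT
    obtain ⟨a, haf, ⟨p, ⟨hp1, hp2⟩, rfl⟩⟩ := hT
    obtain ⟨hg1, hn1, hm1⟩ := ih₁ (linv a) p.1 hp1
    obtain ⟨hg2, hn2, hm2⟩ := ih₂ f p.2 hp2
    refine ⟨⟨haf, hg1, hg2⟩, ?_, ?_⟩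
    · show p.1.numNodes + p.2.numNodes + 1 = s₁.numNodes + s₂.numNodes + 1
      omega
    · show BinaryTree.node () (p.1.map _) (p.2.map _) = BinaryTree.node u s₁ s₂
      cases u
      rw [hm1, hm2]

lemma labelings_card (hr : 2 ≤ r) : ∀ (sh : BinaryTree Unit) (f : Ltr r),
    (2*r-1)^sh.numNodes ≤ (labelings f sh).card := by
  intro sh
  induction sh with
  | nil => intro f; simp [labelings]
  | node u s₁ s₂ ih₁ ih₂ =>
    intro f
    have hdisj : ∀ a ∈ Finset.univ.filter (· ≠ f), ∀ b ∈ Finset.univ.filter (· ≠ f), a ≠ b →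
        Disjoint (((labelings (linv a) s₁) ×ˢ (labelings f s₂)).image
            fun p => BinaryTree.node a p.1 p.2)
          (((labelings (linv b) s₁) ×ˢ (labelings f s₂)).image
            fun p => BinaryTree.node b p.1 p.2) := by
      intro a _ b _ hab
      rw [Finset.disjoint_left]
      intro T hTa hTb
      obtain ⟨p, _, rfl⟩ := Finset.mem_image.mp hTa
      obtain ⟨q, _, hq⟩ := Finset.mem_image.mp hTb
      exact hab (by injection hq.symm)
    rw [show labelings f (BinaryTree.node u s₁ s₂) = (Finset.univ.filter (· ≠ f)).biUnion fun a =>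
      ((labelings (linv a) s₁) ×ˢ (labelings f s₂)).image fun p => BinaryTree.node a p.1 p.2 from rfl]
    rw [Finset.card_biUnion hdisj]
    have hcard1 : ∀ a, (((labelings (linv a) s₁) ×ˢ (labelings f s₂)).image
        (fun p : BinaryTree (Ltr r) × BinaryTree (Ltr r) => BinaryTree.node a p.1 p.2)).card
        = (labelings (linv a) s₁).card * (labelings f s₂).card := by
      intro a
      rw [Finset.card_image_of_injective _ (fun p q h => by
        injection h with h1 h2 h3
        exact Prod.ext h2 h3), Finset.card_product]
    have hbound : ∀ a ∈ Finset.univ.filter (· ≠ f),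
        (2*r-1)^s₁.numNodes * (2*r-1)^s₂.numNodes ≤
        (((labelings (linv a) s₁) ×ˢ (labelings f s₂)).image
          (fun p : BinaryTree (Ltr r) × BinaryTree (Ltr r) => BinaryTree.node a p.1 p.2)).card := by
      intro a _
      rw [hcard1 a]
      exact Nat.mul_le_mul (ih₁ (linv a)) (ih₂ f)
    have hfcard : (Finset.univ.filter (· ≠ f)).card = 2*r - 1 := by
      rw [Finset.filter_ne', Finset.card_erase_of_mem (Finset.mem_univ _), Finset.card_univ,
        card_Ltr]
    calc (2*r-1)^(BinaryTree.node u s₁ s₂).numNodes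
        = (2*r-1) * ((2*r-1)^s₁.numNodes * (2*r-1)^s₂.numNodes) := by
          show (2*r-1)^(s₁.numNodes + s₂.numNodes + 1) = _
          ring
      _ = ∑ _a ∈ Finset.univ.filter (· ≠ f), ((2*r-1)^s₁.numNodes * (2*r-1)^s₂.numNodes) := by
          rw [Finset.sum_const, hfcard, smul_eq_mul]
      _ ≤ ∑ a ∈ Finset.univ.filter (· ≠ f),
            (((labelings (linv a) s₁) ×ˢ (labelings f s₂)).image
              (fun p : BinaryTree (Ltr r) × BinaryTree (Ltr r) => BinaryTree.node a p.1 p.2)).card :=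
          Finset.sum_le_sum hbound

lemma cnt_lower (hr : 2 ≤ r) (k : ℕ) :
    catalan k * (2*r-1)^k ≤ cnt r (2*k) 1 := by
  classical
  have hr0 : 0 < r := by omega
  set f₀ : Ltr r := (⟨0, hr0⟩, true) with hf₀
  set TT : Finset (BinaryTree (Ltr r)) := (BinaryTree.treesOfNumNodesEq k).biUnion (fun sh => labelings f₀ sh)
    with hTT
  have hdisj : ∀ sh₁ ∈ BinaryTree.treesOfNumNodesEq k, ∀ sh₂ ∈ BinaryTree.treesOfNumNodesEq k, sh₁ ≠ sh₂ →
      Disjoint (labelings f₀ sh₁) (labelings f₀ sh₂) := by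
    intro sh₁ _ sh₂ _ hne
    rw [Finset.disjoint_left]
    intro T h1 h2
    exact hne (((labelings_spec sh₁ f₀ T h1).2.2).symm.trans ((labelings_spec sh₂ f₀ T h2).2.2))
  have hTTcard : catalan k * (2*r-1)^k ≤ TT.card := by
    rw [hTT, Finset.card_biUnion hdisj]
    calc catalan k * (2*r-1)^k = ∑ _sh ∈ BinaryTree.treesOfNumNodesEq k, (2*r-1)^k := by
          rw [Finset.sum_const, BinaryTree.treesOfNumNodesEq_card_eq_catalan, smul_eq_mul]
      _ ≤ ∑ sh ∈ BinaryTree.treesOfNumNodesEq k, (labelings f₀ sh).card := by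
          refine Finset.sum_le_sum fun sh hsh => ?_
          have := labelings_card hr sh f₀
          rwa [(BinaryTree.mem_treesOfNumNodesEq.mp hsh)] at this
  have hlen : ∀ T ∈ TT, (wd T).length = 2*k := by
    intro T hT
    obtain ⟨sh, hsh, hTsh⟩ := Finset.mem_biUnion.mp hT
    rw [len_wd, (labelings_spec sh f₀ T hTsh).2.1, BinaryTree.mem_treesOfNumNodesEq.mp hsh]
  have hgood : ∀ T ∈ TT, Good f₀ T := by
    intro T hT
    obtain ⟨sh, _, hTsh⟩ := Finset.mem_biUnion.mp hT
    exact (labelings_spec sh f₀ T hTsh).1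
  have hofFn : ∀ T ∈ TT, List.ofFn (fun i : Fin (2*k) => (wd T).getD i f₀) = wd T := by
    intro T hT
    apply List.ext_getElem
    · simp [hlen T hT]
    · intro i h1 h2
      simp only [List.getElem_ofFn]
      rw [List.getD_eq_getElem]
  have hinj : TT.card ≤ cnt r (2*k) 1 := by
    unfold cnt
    refine Finset.card_le_card_of_injOn (fun T => fun i : Fin (2*k) => (wd T).getD i f₀) ?_ ?_
    · intro T hT
      rw [Finset.mem_coe, Finset.mem_filter]
      refine ⟨Finset.mem_univ _, ?_⟩
      rw [hofFn T hT, mk_wd]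
    · intro T hT T' hT' heq
      refine wd_inj T (hgood T hT) (hgood T' hT') ?_
      have heq' : (fun i : Fin (2*k) => (wd T).getD i f₀)
          = (fun i : Fin (2*k) => (wd T').getD i f₀) := heq
      rw [← hofFn T hT, ← hofFn T' hT', heq']
  omega


lemma cnt_one_le_btN (t : ℕ) : cnt r t 1 ≤ btN r t := by
  classical
  unfold cnt btN
  apply Finset.card_le_card
  intro s hs
  simp only [Finset.mem_filter] at hs ⊢
  exact ⟨hs.1, 1, 2, le_refl 2, by rw [hs.2, one_pow]⟩

lemma rpow_pow_inv {x : ℝ} (hx : 0 ≤ x) {t : ℕ} (ht : t ≠ 0) :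
    ((x^t : ℝ)) ^ ((1:ℝ)/t) = x := by
  rw [← Real.rpow_natCast x t, ← Real.rpow_mul hx, mul_one_div,
    div_self (by exact_mod_cast ht : (t:ℝ) ≠ 0), Real.rpow_one]


end PWGaux

theorem proper_powers_walk_growth_rate_aux (r : ℕ) (hr : 2 ≤ r) :
    Filter.limsup
      (fun t : ℕ =>
        ((Nat.card {s : Fin t → Fin r × Bool //
            ∃ (u : FreeGroup (Fin r)) (q : ℕ), 2 ≤ q ∧
              FreeGroup.mk (List.ofFn s) = u ^ q} : ℝ)) ^ ((1 : ℝ) / t))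
      Filter.atTop = 2 * Real.sqrt (2 * (r : ℝ) - 1) := by
  classical
  have hrR : (2:ℝ) ≤ (r:ℝ) := by exact_mod_cast hr
  set σ := Real.sqrt (2*(r:ℝ)-1) with hσdef
  have hσ1 : 1 ≤ σ := by
    rw [hσdef, show (1:ℝ) = Real.sqrt 1 from (Real.sqrt_one).symm]
    exact Real.sqrt_le_sqrt (by rw [Real.sqrt_one]; linarith)
  have hσ0 : (0:ℝ) < σ := lt_of_lt_of_le one_pos hσ1
  have hσsq : σ^2 = 2*(r:ℝ)-1 := Real.sq_sqrt (by linarith)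
  have hfun : (fun t : ℕ =>
        ((Nat.card {s : Fin t → Fin r × Bool //
            ∃ (u : FreeGroup (Fin r)) (q : ℕ), 2 ≤ q ∧
              FreeGroup.mk (List.ofFn s) = u ^ q} : ℝ)) ^ ((1 : ℝ) / t))
      = fun t : ℕ => ((PWGaux.btN r t : ℝ)) ^ ((1:ℝ)/t) := by
    funext t
    rw [PWGaux.btN_eq_natcard]
  rw [hfun]
  set u : ℕ → ℝ := fun t => ((PWGaux.btN r t : ℝ)) ^ ((1:ℝ)/t) with hu
  have hu_nonneg : ∀ t, 0 ≤ u t := fun t => Real.rpow_nonneg (Nat.cast_nonneg _) _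
  have hbtN_tot : ∀ t, (PWGaux.btN r t : ℝ) ≤ (2*(r:ℝ))^t := by
    intro t
    have h1 : PWGaux.btN r t ≤ (2*r)^t := by
      unfold PWGaux.btN
      refine le_trans (Finset.card_filter_le _ _) ?_
      rw [Finset.card_univ]
      simp only [Fintype.card_fun, PWGaux.card_Ltr, Fintype.card_fin]
      exact le_rfl
    calc (PWGaux.btN r t : ℝ) ≤ (((2*r)^t : ℕ) : ℝ) := Nat.cast_le.mpr h1
      _ = (2*(r:ℝ))^t := by push_cast; ring
  have hu_le : ∀ t, u t ≤ 2*(r:ℝ) := by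
    intro t
    rcases Nat.eq_zero_or_pos t with rfl | ht
    · show ((PWGaux.btN r 0 : ℝ)) ^ ((1:ℝ)/((0:ℕ):ℝ)) ≤ _
      simp only [Nat.cast_zero, div_zero, Real.rpow_zero]
      linarith
    · have h1 : u t ≤ ((2*(r:ℝ))^t) ^ ((1:ℝ)/t) :=
        Real.rpow_le_rpow (Nat.cast_nonneg _) (hbtN_tot t) (by positivity)
      rwa [PWGaux.rpow_pow_inv (by linarith) (by omega)] at h1
  have hbdd : Filter.IsBoundedUnder (· ≤ ·) Filter.atTop u :=
    ⟨2*(r:ℝ), Filter.eventually_map.mpr (Filter.Eventually.of_forall hu_le)⟩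
  have hcobdd : Filter.IsCoboundedUnder (· ≤ ·) Filter.atTop u :=
    Filter.isCoboundedUnder_le_of_le Filter.atTop hu_nonneg
  apply le_antisymm
  · -- upper bound
    have hup : ∀ c, 2*σ < c → Filter.limsup u Filter.atTop ≤ c := by
      intro c hc
      have hc0 : 0 < c := by linarith
      apply Filter.limsup_le_of_le hcobdd
      have hρ : 1 < c/(2*σ) := (one_lt_div (by positivity)).mpr hc
      have hpoly := tendsto_pow_const_div_const_pow_of_one_lt 5 hρ
      have hev1 : ∀ᶠ t : ℕ in Filter.atTop, ((t:ℝ))^5 / (c/(2*σ))^t ≤ 1 :=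
        hpoly.eventually (eventually_le_nhds (by norm_num))
      have hev2 : ∀ᶠ t : ℕ in Filter.atTop, 4*((t:ℝ)+1)^4 ≤ (t:ℝ)^5 := by
        rw [Filter.eventually_atTop]
        refine ⟨64, fun t ht => ?_⟩
        have htR : (64:ℝ) ≤ (t:ℝ) := by exact_mod_cast ht
        have h2t : ((t:ℝ)+1)^4 ≤ (2*(t:ℝ))^4 :=
          pow_le_pow_left₀ (by positivity) (by linarith) 4
        have h4 : (0:ℝ) ≤ (t:ℝ)^4 := by positivity
        have h5 : (t:ℝ)^5 = (t:ℝ)^4*(t:ℝ) := by ring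
        nlinarith [mul_le_mul_of_nonneg_left htR h4]
      have hev3 : ∀ᶠ t : ℕ in Filter.atTop, 1 ≤ t := Filter.eventually_atTop.mpr ⟨1, fun _ h => h⟩
      filter_upwards [hev1, hev2, hev3] with t h1 h2 h3
      have hρt : (0:ℝ) < (c/(2*σ))^t := by positivity
      have ht5 : ((t:ℝ))^5 ≤ (c/(2*σ))^t := by
        rw [div_le_one hρt] at h1
        exact h1
      have hbt : (PWGaux.btN r t : ℝ) ≤ c^t := by
        calc (PWGaux.btN r t : ℝ) ≤ 4*(t+1)^4 * (2*σ)^t := PWGaux.btN_le hr t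
          _ ≤ (t:ℝ)^5 * (2*σ)^t := by
              apply mul_le_mul_of_nonneg_right h2 (by positivity)
          _ ≤ (c/(2*σ))^t * (2*σ)^t := by
              apply mul_le_mul_of_nonneg_right ht5 (by positivity)
          _ = c^t := by
              rw [← mul_pow]
              congr 1
              field_simp
      have := Real.rpow_le_rpow (Nat.cast_nonneg _) hbt
        (by positivity : (0:ℝ) ≤ (1:ℝ)/t)
      rwa [PWGaux.rpow_pow_inv (le_of_lt hc0) (by omega)] at this
    by_contra hcon
    push_neg at hcon
    have := hup ((2*σ + Filter.limsup u Filter.atTop)/2) (by linarith)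
    linarith
  · -- lower bound
    have hlow : ∀ c, 0 < c → c < 2*σ → c ≤ Filter.limsup u Filter.atTop := by
      intro c hc0 hc
      refine Filter.le_limsup_of_frequently_le ?_ hbdd
      have hρ1 : 1 < 2*σ/c := (one_lt_div hc0).mpr hc
      have hρ : 1 < (2*σ/c)^2 := by nlinarith
      have hpoly := tendsto_pow_const_div_const_pow_of_one_lt 3 hρ
      have hev1 : ∀ᶠ k : ℕ in Filter.atTop, ((k:ℝ))^3 / ((2*σ/c)^2)^k ≤ 1 :=
        hpoly.eventually (eventually_le_nhds (by norm_num))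
      rw [Filter.eventually_atTop] at hev1
      obtain ⟨K, hK⟩ := hev1
      rw [Filter.frequently_atTop]
      intro N
      set k := max (max K 4) N with hk
      have hk4 : 4 ≤ k := le_trans (le_max_right K 4) (le_max_left _ N)
      have hkK : K ≤ k := le_trans (le_max_left K 4) (le_max_left _ N)
      have hkN : N ≤ 2*k := le_trans (le_max_right (max K 4) N)
        (Nat.le_mul_of_pos_left k two_pos)
      refine ⟨2*k, hkN, ?_⟩
      -- counting lower bound
      have hnat : 4^k * (2*r-1)^k ≤ (2*k*(k+1)) * PWGaux.btN r (2*k) := by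
        have h1 : 4^k ≤ 2*k*(k+1)*catalan k := by
          calc 4^k ≤ 2*k*Nat.centralBinom k :=
              Nat.four_pow_le_two_mul_self_mul_centralBinom k (by omega)
            _ = 2*k*((k+1)*catalan k) := by rw [succ_mul_catalan_eq_centralBinom]
            _ = 2*k*(k+1)*catalan k := by ring
        calc 4^k * (2*r-1)^k ≤ (2*k*(k+1)*catalan k) * (2*r-1)^k :=
            Nat.mul_le_mul_right _ h1
          _ = (2*k*(k+1)) * (catalan k * (2*r-1)^k) := by ring
          _ ≤ (2*k*(k+1)) * PWGaux.btN r (2*k) := by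
              apply Nat.mul_le_mul_left
              exact le_trans (PWGaux.cnt_lower hr k) (PWGaux.cnt_one_le_btN (2*k))
      have hreal : ((2*σ)^2)^k ≤ (2*(k:ℝ)*((k:ℝ)+1)) * (PWGaux.btN r (2*k) : ℝ) := by
        have hcast : (((4^k * (2*r-1)^k : ℕ)) : ℝ) = ((2*σ)^2)^k := by
          have h2r : 1 ≤ 2*r := by omega
          push_cast [h2r]
          rw [show (2*σ)^2 = 4*σ^2 by ring, hσsq, mul_pow]
        calc ((2*σ)^2)^k = (((4^k * (2*r-1)^k : ℕ)) : ℝ) := hcast.symm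
          _ ≤ (((2*k*(k+1)) * PWGaux.btN r (2*k) : ℕ) : ℝ) := by exact_mod_cast hnat
          _ = (2*(k:ℝ)*((k:ℝ)+1)) * (PWGaux.btN r (2*k) : ℝ) := by push_cast; ring
      have hkbound : 2*(k:ℝ)*((k:ℝ)+1) ≤ ((2*σ/c)^2)^k := by
        have hk3 := hK k hkK
        have hρk : (0:ℝ) < ((2*σ/c)^2)^k := by positivity
        rw [div_le_one hρk] at hk3
        refine le_trans ?_ hk3
        have hkR : (4:ℝ) ≤ (k:ℝ) := by exact_mod_cast hk4
        nlinarith [sq_nonneg (k:ℝ), hkR]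
      have hbt : c^(2*k) ≤ (PWGaux.btN r (2*k) : ℝ) := by
        have h0 : ((2*σ)^2)^k ≤ ((2*σ/c)^2)^k * (PWGaux.btN r (2*k) : ℝ) := by
          calc ((2*σ)^2)^k ≤ (2*(k:ℝ)*((k:ℝ)+1)) * (PWGaux.btN r (2*k) : ℝ) := hreal
            _ ≤ ((2*σ/c)^2)^k * (PWGaux.btN r (2*k) : ℝ) := by
                apply mul_le_mul_of_nonneg_right hkbound (Nat.cast_nonneg _)
        have key : c^(2*k) * ((2*σ/c)^2)^k = ((2*σ)^2)^k := by
          calc c^(2*k) * ((2*σ/c)^2)^k = (c^2)^k * ((2*σ/c)^2)^k := by rw [pow_mul]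
            _ = (c^2 * (2*σ/c)^2)^k := (mul_pow _ _ k).symm
            _ = ((c*(2*σ/c))^2)^k := by rw [mul_pow c (2*σ/c) 2]
            _ = ((2*σ)^2)^k := by
                congr 2
                field_simp
        have hX : (0:ℝ) < ((2*σ/c)^2)^k := by positivity
        have h0' : c^(2*k) * ((2*σ/c)^2)^k ≤ (PWGaux.btN r (2*k) : ℝ) * ((2*σ/c)^2)^k := by
          rw [key]
          calc ((2*σ)^2)^k ≤ ((2*σ/c)^2)^k * (PWGaux.btN r (2*k) : ℝ) := h0
            _ = (PWGaux.btN r (2*k) : ℝ) * ((2*σ/c)^2)^k := mul_comm _ _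
        exact le_of_mul_le_mul_right h0' hX
      have := Real.rpow_le_rpow (by positivity : (0:ℝ) ≤ c^(2*k)) hbt
        (by positivity : (0:ℝ) ≤ (1:ℝ)/((2*k : ℕ):ℝ))
      rw [PWGaux.rpow_pow_inv (le_of_lt hc0) (by omega : 2*k ≠ 0)] at this
      exact this
    have hσle : σ ≤ Filter.limsup u Filter.atTop := hlow σ hσ0 (by linarith)
    by_contra hcon
    push_neg at hcon
    have := hlow ((Filter.limsup u Filter.atTop + 2*σ)/2) (by linarith) (by linarith)
    linarith



/-- The exponential growth rate of the number of (not necessarily reduced) words of length `t`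
in the generators and their inverses of `F_r` (`r ≥ 2`) representing proper powers is
`2√(2r−1)`. -/
theorem proper_powers_walk_growth_rate (r : ℕ) (hr : 2 ≤ r) :
    Filter.limsup
      (fun t : ℕ =>
        ((Nat.card {s : Fin t → Fin r × Bool //
            ∃ (u : FreeGroup (Fin r)) (q : ℕ), 2 ≤ q ∧
              FreeGroup.mk (List.ofFn s) = u ^ q} : ℝ)) ^ ((1 : ℝ) / t))
      Filter.atTop = 2 * Real.sqrt (2 * (r : ℝ) - 1) :=
  proper_powers_walk_growth_rate_aux r hr
end

section
/- Let 2 ≤ c < d be integers and consider the (c,d)-biregular tree graded so that each vertex has one parent and deg−1 children, with root o at level 0. Group walks into double-steps: each double-step from a vertex has cd options, of which 1 decreases the level by 2, (c−1)+(d−1) keep it fixed, and (c−1)(d−1) increase it by 2. For nonnegative integers x, y, z with z − x > 0, among the multinomial(x+y+z; x,y,z)·((c−1)+(d−1))^y·((c−1)(d−1))^z double-step walks from o with exactly x downward, y horizontal, and z upward double-steps, the proportion that never return to level 0 after time 0 is (z−x)/(x+y+z). -/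
/-- A double-step in the graded `(c,d)`-biregular tree: `1` downward option (level −2),
`(c−1)+(d−1)` horizontal options (level 0), `(c−1)(d−1)` upward options (level +2). -/
def BiregStep (c d : ℕ) : Type := Fin 1 ⊕ (Fin ((c - 1) + (d - 1)) ⊕ Fin ((c - 1) * (d - 1)))

/-- Level change of a double-step. -/
def BiregStep.level {c d : ℕ} : BiregStep c d → ℤ :=
  Sum.elim (fun _ => -2) (Sum.elim (fun _ => 0) (fun _ => 2))

def BiregStep.isDown {c d : ℕ} : BiregStep c d → Bool := Sum.elim (fun _ => true) (fun _ => false)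
def BiregStep.isHoriz {c d : ℕ} : BiregStep c d → Bool :=
  Sum.elim (fun _ => false) (Sum.elim (fun _ => true) (fun _ => false))
def BiregStep.isUp {c d : ℕ} : BiregStep c d → Bool :=
  Sum.elim (fun _ => false) (Sum.elim (fun _ => false) (fun _ => true))


namespace BiregAux

/-- level value of each step type -/
def lv : Fin 3 → ℤ := ![-2, 0, 2]

def cnt {n : ℕ} (v : Fin 3) (t : Fin n → Fin 3) : ℕ :=
  (Finset.univ.filter (fun i => t i = v)).card

def Pos {n : ℕ} (t : Fin n → Fin 3) : Prop :=
  ∀ k : Fin n, 0 < ∑ i ∈ Finset.univ.filter (fun i : Fin n => (i : ℕ) ≤ (k : ℕ)), lv (t i)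

instance {n : ℕ} (t : Fin n → Fin 3) : Decidable (Pos t) := by
  unfold Pos; infer_instance

def tot {n : ℕ} (t : Fin n → Fin 3) : ℤ := ∑ i, lv (t i)

lemma cnt_snoc {m : ℕ} (v v' : Fin 3) (s : Fin m → Fin 3) :
    cnt v' (Fin.snoc s v) = cnt v' s + if v = v' then 1 else 0 := by
  unfold cnt
  rw [Finset.card_filter, Finset.card_filter, Fin.sum_univ_castSucc]
  simp [Fin.snoc_castSucc, Fin.snoc_last]

lemma tot_snoc {m : ℕ} (v : Fin 3) (s : Fin m → Fin 3) :
    tot (Fin.snoc s v) = tot s + lv v := by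
  unfold tot
  rw [Fin.sum_univ_castSucc]
  simp [Fin.snoc_castSucc, Fin.snoc_last]

lemma tot_eq_cnt {n : ℕ} (t : Fin n → Fin 3) :
    tot t = 2 * (cnt 2 t : ℤ) - 2 * (cnt 0 t : ℤ) := by
  unfold tot cnt
  have h : ∀ u : Fin 3, lv u = (if u = 2 then (2:ℤ) else 0) + (if u = 0 then (-2:ℤ) else 0) := by
    decide
  rw [Finset.sum_congr rfl (fun i _ => h (t i)), Finset.sum_add_distrib]
  rw [← Finset.sum_filter, ← Finset.sum_filter, Finset.sum_const, Finset.sum_const]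
  simp [nsmul_eq_mul]
  ring

lemma psum_snoc_castSucc {m : ℕ} (v : Fin 3) (s : Fin m → Fin 3) (k : Fin m) :
    ∑ i ∈ Finset.univ.filter (fun i : Fin (m+1) => (i : ℕ) ≤ ((k.castSucc : Fin (m+1)) : ℕ)),
      lv ((Fin.snoc s v : Fin (m+1) → Fin 3) i)
    = ∑ i ∈ Finset.univ.filter (fun i : Fin m => (i : ℕ) ≤ (k : ℕ)), lv (s i) := by
  rw [Finset.sum_filter, Finset.sum_filter, Fin.sum_univ_castSucc]
  have hlast : ¬ ((Fin.last m : Fin (m+1)) : ℕ) ≤ ((k.castSucc : Fin (m+1)) : ℕ) := by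
    simp
  simp [Fin.snoc_castSucc, Fin.snoc_last, hlast]

lemma psum_last {m : ℕ} (t : Fin (m+1) → Fin 3) :
    ∑ i ∈ Finset.univ.filter (fun i : Fin (m+1) => (i : ℕ) ≤ ((Fin.last m) : ℕ)),
      lv (t i) = tot t := by
  unfold tot
  apply Finset.sum_congr _ (fun _ _ => rfl)
  apply Finset.filter_true_of_mem
  intro i _
  exact Nat.lt_succ_iff.mp i.isLt

lemma pos_snoc {m : ℕ} (v : Fin 3) (s : Fin m → Fin 3) :
    Pos (Fin.snoc s v) ↔ Pos s ∧ 0 < tot s + lv v := by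
  constructor
  · intro h
    constructor
    · intro k
      have := h k.castSucc
      rwa [psum_snoc_castSucc] at this
    · have := h (Fin.last m)
      rwa [psum_last, tot_snoc] at this
  · rintro ⟨h1, h2⟩ k
    induction k using Fin.lastCases with
    | last => rw [psum_last, tot_snoc]; exact h2
    | cast k => rw [psum_snoc_castSucc]; exact h1 k

end BiregAux
namespace BiregAux

def T (n x y z : ℕ) : ℕ :=
  (Finset.univ.filter (fun t : Fin n → Fin 3 =>
    cnt 0 t = x ∧ cnt 1 t = y ∧ cnt 2 t = z)).card

def Pc (n x y z : ℕ) : ℕ :=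
  (Finset.univ.filter (fun t : Fin n → Fin 3 =>
    (cnt 0 t = x ∧ cnt 1 t = y ∧ cnt 2 t = z) ∧ Pos t)).card

def C0 (m x y z : ℕ) : ℕ :=
  (Finset.univ.filter (fun s : Fin m → Fin 3 =>
    cnt 0 s + 1 = x ∧ cnt 1 s = y ∧ cnt 2 s = z)).card
def C1 (m x y z : ℕ) : ℕ :=
  (Finset.univ.filter (fun s : Fin m → Fin 3 =>
    cnt 0 s = x ∧ cnt 1 s + 1 = y ∧ cnt 2 s = z)).card
def C2 (m x y z : ℕ) : ℕ :=
  (Finset.univ.filter (fun s : Fin m → Fin 3 =>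
    cnt 0 s = x ∧ cnt 1 s = y ∧ cnt 2 s + 1 = z)).card

def PC0 (m x y z : ℕ) : ℕ :=
  (Finset.univ.filter (fun s : Fin m → Fin 3 =>
    (cnt 0 s + 1 = x ∧ cnt 1 s = y ∧ cnt 2 s = z) ∧ Pos s)).card
def PC1 (m x y z : ℕ) : ℕ :=
  (Finset.univ.filter (fun s : Fin m → Fin 3 =>
    (cnt 0 s = x ∧ cnt 1 s + 1 = y ∧ cnt 2 s = z) ∧ Pos s)).card
def PC2 (m x y z : ℕ) : ℕ :=
  (Finset.univ.filter (fun s : Fin m → Fin 3 =>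
    (cnt 0 s = x ∧ cnt 1 s = y ∧ cnt 2 s + 1 = z) ∧ Pos s)).card

lemma card_filter_succ {m : ℕ} (Q : (Fin (m+1) → Fin 3) → Prop) [DecidablePred Q] :
    (Finset.univ.filter Q).card
      = ∑ v : Fin 3, (Finset.univ.filter
          (fun s : Fin m → Fin 3 => Q (Fin.snoc s v))).card := by
  rw [Finset.card_eq_sum_card_fiberwise
    (f := fun t => t (Fin.last m)) (t := Finset.univ) (fun _ _ => Finset.mem_univ _)]
  refine Finset.sum_congr rfl (fun v _ => ?_)
  refine Finset.card_bij' (fun t _ => Fin.init t) (fun s _ => Fin.snoc s v) ?_ ?_ ?_ ?_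
  · intro t ht
    simp only [Finset.mem_filter, Finset.mem_univ, true_and] at ht ⊢
    obtain ⟨h1, h2⟩ := ht
    subst h2
    rw [Fin.snoc_init_self t]
    exact h1
  · intro s hs
    simp only [Finset.mem_filter, Finset.mem_univ, true_and] at hs ⊢
    exact ⟨hs, Fin.snoc_last _ _⟩
  · intro t ht
    simp only [Finset.mem_filter, Finset.mem_univ, true_and] at ht
    obtain ⟨h1, h2⟩ := ht
    subst h2
    exact Fin.snoc_init_self t
  · intro s _
    simp

lemma d00 : ((0:Fin 3) = 0) = True := by simp
lemma d01 : ((0:Fin 3) = 1) = False := by simp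
lemma d02 : ((0:Fin 3) = 2) = False := by simp
lemma d10 : ((1:Fin 3) = 0) = False := by simp
lemma d11 : ((1:Fin 3) = 1) = True := by simp
lemma d12 : ((1:Fin 3) = 2) = False := by simp
lemma d20 : ((2:Fin 3) = 0) = False := by simp
lemma d21 : ((2:Fin 3) = 1) = False := by simp
lemma d22 : ((2:Fin 3) = 2) = True := by simp

lemma T_succ (m x y z : ℕ) :
    T (m+1) x y z = C0 m x y z + C1 m x y z + C2 m x y z := by
  rw [T, card_filter_succ, Fin.sum_univ_three, C0, C1, C2]
  congr 1
  · congr 1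
    · refine congrArg Finset.card (Finset.filter_congr ?_)
      intro s _
      simp [cnt_snoc, d00, d01, d02]
    · refine congrArg Finset.card (Finset.filter_congr ?_)
      intro s _
      simp [cnt_snoc, d10, d11, d12]
  · refine congrArg Finset.card (Finset.filter_congr ?_)
    intro s _
    simp [cnt_snoc, d20, d21, d22]

lemma P_succ (m x y z : ℕ) (hxz : x < z) :
    Pc (m+1) x y z = PC0 m x y z + PC1 m x y z + PC2 m x y z := by
  rw [Pc, card_filter_succ, Fin.sum_univ_three, PC0, PC1, PC2]
  have key : ∀ (v : Fin 3) (s : Fin m → Fin 3),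
      (cnt 0 s = x - (if v = 0 then 1 else 0) + 0) → True := fun _ _ _ => trivial
  congr 1
  · congr 1
    · refine congrArg Finset.card (Finset.filter_congr ?_)
      intro s _
      simp only [cnt_snoc, d00, d01, d02, if_true, if_false, add_zero, pos_snoc,
        eq_self_iff_true, true_and]
      constructor
      · rintro ⟨hc, hp, _⟩; exact ⟨hc, hp⟩
      · rintro ⟨⟨hc0, hc1, hc2⟩, hp⟩
        refine ⟨⟨hc0, hc1, hc2⟩, hp, ?_⟩
        rw [tot_eq_cnt, hc2]
        have : (cnt 0 s : ℤ) = (x : ℤ) - 1 := by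
          have := hc0; omega
        rw [this]
        have hlv : lv 0 = -2 := rfl
        rw [hlv]
        omega
    · refine congrArg Finset.card (Finset.filter_congr ?_)
      intro s _
      simp only [cnt_snoc, d10, d11, d12, if_true, if_false, add_zero, pos_snoc,
        eq_self_iff_true, true_and]
      constructor
      · rintro ⟨hc, hp, _⟩; exact ⟨hc, hp⟩
      · rintro ⟨⟨hc0, hc1, hc2⟩, hp⟩
        refine ⟨⟨hc0, hc1, hc2⟩, hp, ?_⟩
        rw [tot_eq_cnt, hc0, hc2]
        have hlv : lv 1 = 0 := rfl
        rw [hlv]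
        omega
  · refine congrArg Finset.card (Finset.filter_congr ?_)
    intro s _
    simp only [cnt_snoc, d20, d21, d22, if_true, if_false, add_zero, pos_snoc,
      eq_self_iff_true, true_and]
    constructor
    · rintro ⟨hc, hp, _⟩; exact ⟨hc, hp⟩
    · rintro ⟨⟨hc0, hc1, hc2⟩, hp⟩
      refine ⟨⟨hc0, hc1, hc2⟩, hp, ?_⟩
      rw [tot_eq_cnt, hc0]
      have : (cnt 2 s : ℤ) = (z : ℤ) - 1 := by
        have := hc2; omega
      rw [this]
      have hlv : lv 2 = 2 := rfl
      rw [hlv]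
      omega

end BiregAux
namespace BiregAux

lemma T000 : T 0 0 0 0 = 1 := by
  rw [T, Finset.filter_true_of_mem]
  · simp [Finset.card_univ]
  · intro t _
    refine ⟨?_, ?_, ?_⟩ <;> simp [cnt]

lemma C0_zero (m y z : ℕ) : C0 m 0 y z = 0 := by
  rw [C0, Finset.card_eq_zero, Finset.filter_eq_empty_iff]
  rintro t - ⟨h, -⟩
  omega

lemma C1_zero (m x z : ℕ) : C1 m x 0 z = 0 := by
  rw [C1, Finset.card_eq_zero, Finset.filter_eq_empty_iff]
  rintro t - ⟨-, h, -⟩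
  omega

lemma C2_zero (m x y : ℕ) : C2 m x y 0 = 0 := by
  rw [C2, Finset.card_eq_zero, Finset.filter_eq_empty_iff]
  rintro t - ⟨-, -, h⟩
  omega

lemma PC0_zero (m y z : ℕ) : PC0 m 0 y z = 0 := by
  rw [PC0, Finset.card_eq_zero, Finset.filter_eq_empty_iff]
  rintro t - ⟨⟨h, -⟩, -⟩
  omega

lemma PC1_zero (m x z : ℕ) : PC1 m x 0 z = 0 := by
  rw [PC1, Finset.card_eq_zero, Finset.filter_eq_empty_iff]
  rintro t - ⟨⟨-, h, -⟩, -⟩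
  omega

lemma PC2_zero (m x y : ℕ) : PC2 m x y 0 = 0 := by
  rw [PC2, Finset.card_eq_zero, Finset.filter_eq_empty_iff]
  rintro t - ⟨⟨-, -, h⟩, -⟩
  omega

lemma C0_succ (m x y z : ℕ) : C0 m (x+1) y z = T m x y z := by
  rw [C0, T]
  refine congrArg Finset.card (Finset.filter_congr ?_)
  intro s _
  constructor
  · rintro ⟨h0, h1, h2⟩; exact ⟨by omega, h1, h2⟩
  · rintro ⟨h0, h1, h2⟩; exact ⟨by omega, h1, h2⟩

lemma C1_succ (m x y z : ℕ) : C1 m x (y+1) z = T m x y z := by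
  rw [C1, T]
  refine congrArg Finset.card (Finset.filter_congr ?_)
  intro s _
  constructor
  · rintro ⟨h0, h1, h2⟩; exact ⟨h0, by omega, h2⟩
  · rintro ⟨h0, h1, h2⟩; exact ⟨h0, by omega, h2⟩

lemma C2_succ (m x y z : ℕ) : C2 m x y (z+1) = T m x y z := by
  rw [C2, T]
  refine congrArg Finset.card (Finset.filter_congr ?_)
  intro s _
  constructor
  · rintro ⟨h0, h1, h2⟩; exact ⟨h0, h1, by omega⟩
  · rintro ⟨h0, h1, h2⟩; exact ⟨h0, h1, by omega⟩

lemma PC0_succ (m x y z : ℕ) : PC0 m (x+1) y z = Pc m x y z := by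
  rw [PC0, Pc]
  refine congrArg Finset.card (Finset.filter_congr ?_)
  intro s _
  constructor
  · rintro ⟨⟨h0, h1, h2⟩, hp⟩; exact ⟨⟨by omega, h1, h2⟩, hp⟩
  · rintro ⟨⟨h0, h1, h2⟩, hp⟩; exact ⟨⟨by omega, h1, h2⟩, hp⟩

lemma PC1_succ (m x y z : ℕ) : PC1 m x (y+1) z = Pc m x y z := by
  rw [PC1, Pc]
  refine congrArg Finset.card (Finset.filter_congr ?_)
  intro s _
  constructor
  · rintro ⟨⟨h0, h1, h2⟩, hp⟩; exact ⟨⟨h0, by omega, h2⟩, hp⟩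
  · rintro ⟨⟨h0, h1, h2⟩, hp⟩; exact ⟨⟨h0, by omega, h2⟩, hp⟩

lemma PC2_succ (m x y z : ℕ) : PC2 m x y (z+1) = Pc m x y z := by
  rw [PC2, Pc]
  refine congrArg Finset.card (Finset.filter_congr ?_)
  intro s _
  constructor
  · rintro ⟨⟨h0, h1, h2⟩, hp⟩; exact ⟨⟨h0, h1, by omega⟩, hp⟩
  · rintro ⟨⟨h0, h1, h2⟩, hp⟩; exact ⟨⟨h0, h1, by omega⟩, hp⟩

lemma T_fact : ∀ n x y z : ℕ, n = x + y + z →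
    T n x y z * (x.factorial * y.factorial * z.factorial) = n.factorial := by
  intro n
  induction n with
  | zero =>
    intro x y z h
    obtain ⟨rfl, rfl, rfl⟩ : x = 0 ∧ y = 0 ∧ z = 0 := by omega
    rw [T000]
    simp [Nat.factorial]
  | succ m ih =>
    intro x y z h
    rw [T_succ]
    have h0 : C0 m x y z * (x.factorial * y.factorial * z.factorial)
        = x * m.factorial := by
      cases x with
      | zero => rw [C0_zero]; simp
      | succ x' =>
        rw [C0_succ]
        calc T m x' y z * ((x'+1).factorial * y.factorial * z.factorial)
            = (x'+1) * (T m x' y z * (x'.factorial * y.factorial * z.factorial)) := by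
              rw [Nat.factorial_succ]; ring
          _ = (x'+1) * m.factorial := by rw [ih x' y z (by omega)]
    have h1 : C1 m x y z * (x.factorial * y.factorial * z.factorial)
        = y * m.factorial := by
      cases y with
      | zero => rw [C1_zero]; simp
      | succ y' =>
        rw [C1_succ]
        calc T m x y' z * (x.factorial * (y'+1).factorial * z.factorial)
            = (y'+1) * (T m x y' z * (x.factorial * y'.factorial * z.factorial)) := by
              rw [Nat.factorial_succ]; ring
          _ = (y'+1) * m.factorial := by rw [ih x y' z (by omega)]
    have h2 : C2 m x y z * (x.factorial * y.factorial * z.factorial)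
        = z * m.factorial := by
      cases z with
      | zero => rw [C2_zero]; simp
      | succ z' =>
        rw [C2_succ]
        calc T m x y z' * (x.factorial * y.factorial * (z'+1).factorial)
            = (z'+1) * (T m x y z' * (x.factorial * y.factorial * z'.factorial)) := by
              rw [Nat.factorial_succ]; ring
          _ = (z'+1) * m.factorial := by rw [ih x y z' (by omega)]
    calc (C0 m x y z + C1 m x y z + C2 m x y z) *
          (x.factorial * y.factorial * z.factorial)
        = C0 m x y z * (x.factorial * y.factorial * z.factorial)
          + C1 m x y z * (x.factorial * y.factorial * z.factorial)
          + C2 m x y z * (x.factorial * y.factorial * z.factorial) := by ring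
      _ = x * m.factorial + y * m.factorial + z * m.factorial := by rw [h0, h1, h2]
      _ = (x + y + z) * m.factorial := by ring
      _ = (m + 1) * m.factorial := by rw [← h]
      _ = (m + 1).factorial := (Nat.factorial_succ m).symm

lemma P_zero (n x y z : ℕ) (hn : 1 ≤ n) (hxz : z ≤ x) : Pc n x y z = 0 := by
  obtain ⟨m, rfl⟩ : ∃ m, n = m + 1 := ⟨n - 1, by omega⟩
  rw [Pc, Finset.card_eq_zero, Finset.filter_eq_empty_iff]
  rintro t - ⟨⟨h0, h1, h2⟩, hp⟩
  have := hp (Fin.last m)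
  rw [psum_last, tot_eq_cnt] at this
  omega

lemma base1 : Pc 1 0 0 1 = T 1 0 0 1 := by
  rw [Pc, T]
  refine congrArg Finset.card (Finset.filter_congr ?_)
  intro t _
  rw [and_iff_left_iff_imp]
  rintro ⟨h0, h1, h2⟩
  have ht : t 0 = 2 := by
    by_contra hne
    have hz : cnt 2 t = 0 := by
      rw [cnt, Finset.card_eq_zero, Finset.filter_eq_empty_iff]
      intro i _
      have : i = 0 := Subsingleton.elim i 0
      rw [this]; exact hne
    omega
  intro k
  have hk : k = 0 := Subsingleton.elim k 0
  subst hk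
  have huniv : Finset.univ.filter (fun i : Fin 1 => (i : ℕ) ≤ ((0 : Fin 1) : ℕ))
      = Finset.univ := by
    apply Finset.filter_true_of_mem
    intro i _
    have : i = 0 := Subsingleton.elim i 0
    rw [this]
  rw [huniv, Fin.sum_univ_one, ht]
  exact (show (0:ℤ) < 2 by norm_num)

lemma P_fact : ∀ n x y z : ℕ, n = x + y + z →
    n * Pc n x y z = (z - x) * T n x y z := by
  intro n
  induction n with
  | zero =>
    intro x y z h
    obtain ⟨rfl, rfl, rfl⟩ : x = 0 ∧ y = 0 ∧ z = 0 := by omega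
    simp
  | succ m ih =>
    intro x y z h
    by_cases hzx : z ≤ x
    · rw [P_zero (m+1) x y z (by omega) hzx, Nat.sub_eq_zero_of_le hzx]
      simp
    push_neg at hzx
    rcases Nat.eq_zero_or_pos m with hm | hm
    · subst hm
      obtain ⟨rfl, rfl, rfl⟩ : x = 0 ∧ y = 0 ∧ z = 1 := by omega
      rw [base1]
    · -- relations from induction hypothesis
      have e0 : m * PC0 m x y z = (z + 1 - x) * C0 m x y z := by
        cases x with
        | zero => rw [PC0_zero, C0_zero]; simp
        | succ x' =>
          rw [PC0_succ, C0_succ]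
          have heq : z + 1 - (x' + 1) = z - x' := by omega
          rw [heq]
          exact ih x' y z (by omega)
      have e1 : m * PC1 m x y z = (z - x) * C1 m x y z := by
        cases y with
        | zero => rw [PC1_zero, C1_zero]; simp
        | succ y' =>
          rw [PC1_succ, C1_succ]
          exact ih x y' z (by omega)
      have e2 : m * PC2 m x y z = (z - 1 - x) * C2 m x y z := by
        cases z with
        | zero => rw [PC2_zero, C2_zero]; simp
        | succ z' =>
          rw [PC2_succ, C2_succ]
          have heq : z' + 1 - 1 - x = z' - x := by omega
          rw [heq]
          exact ih x y z' (by omega)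
      have f0 : C0 m x y z * (x.factorial * y.factorial * z.factorial)
          = x * m.factorial := by
        cases x with
        | zero => rw [C0_zero]; simp
        | succ x' =>
          rw [C0_succ]
          calc T m x' y z * ((x'+1).factorial * y.factorial * z.factorial)
              = (x'+1) * (T m x' y z * (x'.factorial * y.factorial * z.factorial)) := by
                rw [Nat.factorial_succ]; ring
            _ = (x'+1) * m.factorial := by rw [T_fact m x' y z (by omega)]
      have f1 : C1 m x y z * (x.factorial * y.factorial * z.factorial)
          = y * m.factorial := by
        cases y with
        | zero => rw [C1_zero]; simp
        | succ y' =>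
          rw [C1_succ]
          calc T m x y' z * (x.factorial * (y'+1).factorial * z.factorial)
              = (y'+1) * (T m x y' z * (x.factorial * y'.factorial * z.factorial)) := by
                rw [Nat.factorial_succ]; ring
            _ = (y'+1) * m.factorial := by rw [T_fact m x y' z (by omega)]
      have f2 : C2 m x y z * (x.factorial * y.factorial * z.factorial)
          = z * m.factorial := by
        cases z with
        | zero => rw [C2_zero]; simp
        | succ z' =>
          rw [C2_succ]
          calc T m x y z' * (x.factorial * y.factorial * (z'+1).factorial)
              = (z'+1) * (T m x y z' * (x.factorial * y.factorial * z'.factorial)) := by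
                rw [Nat.factorial_succ]; ring
            _ = (z'+1) * m.factorial := by rw [T_fact m x y z' (by omega)]
      have hT1 : T (m+1) x y z * (x.factorial * y.factorial * z.factorial)
          = (m+1).factorial := T_fact (m+1) x y z h
      have hA : (z + 1 - x) * x + (z - x) * y + (z - 1 - x) * z = m * (z - x) := by
        obtain ⟨w, hw⟩ : ∃ w, z = x + w + 1 := ⟨z - x - 1, by omega⟩
        have k1 : z + 1 - x = w + 2 := by omega
        have k2 : z - x = w + 1 := by omega
        have k3 : z - 1 - x = w := by omega
        have km : m = 2 * x + y + w := by omega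
        rw [k1, k2, k3, hw, km]; ring
      have hpos : 0 < m * (x.factorial * y.factorial * z.factorial) := by
        apply Nat.mul_pos hm
        positivity
      apply Nat.eq_of_mul_eq_mul_left hpos
      rw [P_succ m x y z hzx]
      set F := x.factorial * y.factorial * z.factorial with hF
      calc m * F * ((m+1) * (PC0 m x y z + PC1 m x y z + PC2 m x y z))
          = (m+1) * F * (m * PC0 m x y z + m * PC1 m x y z + m * PC2 m x y z) := by
            ring
        _ = (m+1) * F * ((z+1-x) * C0 m x y z + (z-x) * C1 m x y z
              + (z-1-x) * C2 m x y z) := by rw [e0, e1, e2]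
        _ = (m+1) * ((z+1-x) * (C0 m x y z * F) + (z-x) * (C1 m x y z * F)
              + (z-1-x) * (C2 m x y z * F)) := by ring
        _ = (m+1) * ((z+1-x) * (x * m.factorial) + (z-x) * (y * m.factorial)
              + (z-1-x) * (z * m.factorial)) := by rw [f0, f1, f2]
        _ = (m+1) * m.factorial * ((z+1-x) * x + (z-x) * y + (z-1-x) * z) := by ring
        _ = (m+1) * m.factorial * (m * (z-x)) := by rw [hA]
        _ = m * ((z-x) * ((m+1) * m.factorial)) := by ring
        _ = m * ((z-x) * (m+1).factorial) := by rw [← Nat.factorial_succ]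
        _ = m * ((z-x) * (T (m+1) x y z * F)) := by rw [hT1]
        _ = m * F * ((z-x) * T (m+1) x y z) := by ring

end BiregAux
namespace BiregAux

instance instDecEq (c d : ℕ) : DecidableEq (BiregStep c d) :=
  inferInstanceAs (DecidableEq (Fin 1 ⊕ (Fin ((c-1)+(d-1)) ⊕ Fin ((c-1)*(d-1)))))

instance instFT (c d : ℕ) : Fintype (BiregStep c d) :=
  inferInstanceAs (Fintype (Fin 1 ⊕ (Fin ((c-1)+(d-1)) ⊕ Fin ((c-1)*(d-1)))))

def ty {c d : ℕ} : BiregStep c d → Fin 3 :=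
  Sum.elim (fun _ => 0) (Sum.elim (fun _ => 1) (fun _ => 2))

lemma isDown_iff {c d : ℕ} (s : BiregStep c d) : s.isDown = true ↔ ty s = 0 := by
  rcases s with s | s | s <;>
    simp [BiregStep.isDown, ty, d10, d20]

lemma isHoriz_iff {c d : ℕ} (s : BiregStep c d) : s.isHoriz = true ↔ ty s = 1 := by
  rcases s with s | s | s <;>
    simp [BiregStep.isHoriz, ty, d01, d21]

lemma isUp_iff {c d : ℕ} (s : BiregStep c d) : s.isUp = true ↔ ty s = 2 := by
  rcases s with s | s | s <;>
    simp [BiregStep.isUp, ty, d02, d12]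

lemma level_eq {c d : ℕ} (s : BiregStep c d) : s.level = lv (ty s) := by
  rcases s with s | s | s <;> rfl

lemma fib0 (c d : ℕ) :
    (Finset.univ.filter (fun s : BiregStep c d => ty s = 0)).card = 1 := by
  rw [Finset.card_filter]
  rw [show (∑ s : BiregStep c d, if ty s = 0 then 1 else 0)
      = ∑ s : Fin 1 ⊕ (Fin ((c-1)+(d-1)) ⊕ Fin ((c-1)*(d-1))),
          if ty (s : BiregStep c d) = 0 then 1 else 0 from rfl]
  rw [Fintype.sum_sum_type, Fintype.sum_sum_type]
  simp [ty, d10, d20]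

lemma fib1 (c d : ℕ) :
    (Finset.univ.filter (fun s : BiregStep c d => ty s = 1)).card = (c-1)+(d-1) := by
  rw [Finset.card_filter]
  rw [show (∑ s : BiregStep c d, if ty s = 1 then 1 else 0)
      = ∑ s : Fin 1 ⊕ (Fin ((c-1)+(d-1)) ⊕ Fin ((c-1)*(d-1))),
          if ty (s : BiregStep c d) = 1 then 1 else 0 from rfl]
  rw [Fintype.sum_sum_type, Fintype.sum_sum_type]
  simp [ty, d01, d21]

lemma fib2 (c d : ℕ) :
    (Finset.univ.filter (fun s : BiregStep c d => ty s = 2)).card = (c-1)*(d-1) := by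
  rw [Finset.card_filter]
  rw [show (∑ s : BiregStep c d, if ty s = 2 then 1 else 0)
      = ∑ s : Fin 1 ⊕ (Fin ((c-1)+(d-1)) ⊕ Fin ((c-1)*(d-1))),
          if ty (s : BiregStep c d) = 2 then 1 else 0 from rfl]
  rw [Fintype.sum_sum_type, Fintype.sum_sum_type]
  simp [ty, d02, d12]

lemma prod_comp_cnt {n : ℕ} (t : Fin n → Fin 3) (g : Fin 3 → ℕ) :
    ∏ i, g (t i) = g 0 ^ cnt 0 t * g 1 ^ cnt 1 t * g 2 ^ cnt 2 t := by
  rw [← Finset.prod_fiberwise_of_maps_to (g := t) (t := Finset.univ)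
      (fun _ _ => Finset.mem_univ _) (fun i => g (t i))]
  rw [Fin.prod_univ_three]
  have key : ∀ v : Fin 3,
      ∏ i ∈ Finset.univ.filter (fun i => t i = v), g (t i) = g v ^ cnt v t := by
    intro v
    rw [cnt, ← Finset.prod_const]
    refine Finset.prod_congr rfl ?_
    intro i hi
    rw [Finset.mem_filter] at hi
    rw [hi.2]
  rw [key 0, key 1, key 2]

lemma card_comp (c d n x y z : ℕ) (Q : (Fin n → Fin 3) → Prop) [DecidablePred Q]
    (hQ : ∀ t, Q t → cnt 1 t = y ∧ cnt 2 t = z) :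
    (Finset.univ.filter
        (fun w : Fin n → BiregStep c d => Q (fun i => ty (w i)))).card
      = (Finset.univ.filter Q).card * (((c-1)+(d-1)) ^ y * ((c-1)*(d-1)) ^ z) := by
  rw [Finset.card_eq_sum_card_fiberwise
      (f := fun w : Fin n → BiregStep c d => fun i => ty (w i))
      (t := Finset.univ.filter Q)
      (by intro w hw; rw [Finset.mem_coe, Finset.mem_filter] at hw ⊢; exact ⟨Finset.mem_univ _, hw.2⟩)]
  rw [Finset.sum_congr rfl (g := fun _ => ((c-1)+(d-1)) ^ y * ((c-1)*(d-1)) ^ z) ?_]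
  · rw [Finset.sum_const, smul_eq_mul]
  intro t ht
  rw [Finset.mem_filter] at ht
  have hfil : (Finset.univ.filter
        (fun w : Fin n → BiregStep c d => Q (fun i => ty (w i)))).filter
        (fun w => (fun i => ty (w i)) = t)
      = Fintype.piFinset (fun i => Finset.univ.filter
          (fun s : BiregStep c d => ty s = t i)) := by
    ext w
    simp only [Finset.mem_filter, Finset.mem_univ, true_and, Fintype.mem_piFinset,
      funext_iff]
    constructor
    · rintro ⟨-, h⟩; exact h
    · intro h
      have : (fun i => ty (w i)) = t := funext h
      rw [this]
      exact ⟨ht.2, h⟩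
  rw [hfil, Fintype.card_piFinset]
  have := prod_comp_cnt t (fun v => (Finset.univ.filter
      (fun s : BiregStep c d => ty s = v)).card)
  rw [this, fib0, fib1, fib2, (hQ t ht.2).1, (hQ t ht.2).2, one_pow, one_mul]

end BiregAux
/-- Among double-step walks in the graded `(c,d)`-biregular tree with exactly `x` downward,
`y` horizontal and `z` upward double-steps (`z > x`), whose total number is
`multinomial(x+y+z; x,y,z)·((c−1)+(d−1))^y·((c−1)(d−1))^z`, the proportion that stay at
strictly positive level after time `0` is `(z−x)/(x+y+z)`. -/
theorem biregular_positive_walks (c d : ℕ) (hc : 2 ≤ c) (hcd : c < d)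
    (x y z : ℕ) (hzx : x < z) :
    Nat.card {w : Fin (x + y + z) → BiregStep c d //
        (Finset.univ.filter (fun i => (w i).isDown)).card = x ∧
        (Finset.univ.filter (fun i => (w i).isHoriz)).card = y ∧
        (Finset.univ.filter (fun i => (w i).isUp)).card = z} =
      ((x + y + z).factorial / (x.factorial * y.factorial * z.factorial)) *
        ((c - 1) + (d - 1)) ^ y * ((c - 1) * (d - 1)) ^ z ∧
    (x + y + z) * Nat.card {w : Fin (x + y + z) → BiregStep c d //
        ((Finset.univ.filter (fun i => (w i).isDown)).card = x ∧
         (Finset.univ.filter (fun i => (w i).isHoriz)).card = y ∧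
         (Finset.univ.filter (fun i => (w i).isUp)).card = z) ∧
        ∀ k : Fin (x + y + z),
          0 < ∑ i ∈ Finset.univ.filter (fun i : Fin (x + y + z) => (i : ℕ) ≤ (k : ℕ)),
              (w i).level} =
      (z - x) * (((x + y + z).factorial / (x.factorial * y.factorial * z.factorial)) *
        ((c - 1) + (d - 1)) ^ y * ((c - 1) * (d - 1)) ^ z) := by
  classical
  open BiregAux in
  have hcnt : ∀ w : Fin (x + y + z) → BiregStep c d,
      ((Finset.univ.filter (fun i => (w i).isDown)).card = x ∧
       (Finset.univ.filter (fun i => (w i).isHoriz)).card = y ∧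
       (Finset.univ.filter (fun i => (w i).isUp)).card = z) ↔
      (cnt 0 (fun i => ty (w i)) = x ∧ cnt 1 (fun i => ty (w i)) = y ∧
       cnt 2 (fun i => ty (w i)) = z) := by
    intro w
    have h0 : (Finset.univ.filter (fun i => (w i).isDown)).card
        = cnt 0 (fun i => ty (w i)) := by
      rw [BiregAux.cnt]
      exact congrArg Finset.card
        (Finset.filter_congr (fun i _ => by rw [← BiregAux.isDown_iff (w i)]))
    have h1 : (Finset.univ.filter (fun i => (w i).isHoriz)).card
        = cnt 1 (fun i => ty (w i)) := by
      rw [BiregAux.cnt]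
      exact congrArg Finset.card
        (Finset.filter_congr (fun i _ => by rw [← BiregAux.isHoriz_iff (w i)]))
    have h2 : (Finset.univ.filter (fun i => (w i).isUp)).card
        = cnt 2 (fun i => ty (w i)) := by
      rw [BiregAux.cnt]
      exact congrArg Finset.card
        (Finset.filter_congr (fun i _ => by rw [← BiregAux.isUp_iff (w i)]))
    rw [h0, h1, h2]
  have hpos : ∀ w : Fin (x + y + z) → BiregStep c d,
      (∀ k : Fin (x + y + z),
        0 < ∑ i ∈ Finset.univ.filter (fun i : Fin (x + y + z) => (i : ℕ) ≤ (k : ℕ)),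
            (w i).level) ↔ BiregAux.Pos (fun i => ty (w i)) := by
    intro w
    rw [BiregAux.Pos]
    refine forall_congr' fun k => ?_
    rw [Finset.sum_congr rfl (fun i _ => BiregAux.level_eq (w i))]
  have key : ∀ (R : (Fin (x+y+z) → Fin 3) → Prop) (_ : DecidablePred R),
      (∀ t, R t → cnt 1 t = y ∧ cnt 2 t = z) →
      Nat.card {w : Fin (x+y+z) → BiregStep c d // R (fun i => ty (w i))}
        = (Finset.univ.filter R).card *
            (((c-1)+(d-1)) ^ y * ((c-1)*(d-1)) ^ z) := by
    intro R hdec hQ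
    rw [Nat.card_eq_fintype_card, Fintype.card_subtype]
    exact BiregAux.card_comp c d (x+y+z) x y z R hQ
  have hTv := BiregAux.T_fact (x+y+z) x y z rfl
  have hPv := BiregAux.P_fact (x+y+z) x y z rfl
  have hFpos : 0 < x.factorial * y.factorial * z.factorial := by positivity
  have hdiv : (x+y+z).factorial / (x.factorial * y.factorial * z.factorial)
      = BiregAux.T (x+y+z) x y z :=
    Nat.div_eq_of_eq_mul_left hFpos hTv.symm
  constructor
  · have e1 : Nat.card {w : Fin (x + y + z) → BiregStep c d //
        (Finset.univ.filter (fun i => (w i).isDown)).card = x ∧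
        (Finset.univ.filter (fun i => (w i).isHoriz)).card = y ∧
        (Finset.univ.filter (fun i => (w i).isUp)).card = z}
        = Nat.card {w : Fin (x + y + z) → BiregStep c d //
            cnt 0 (fun i => ty (w i)) = x ∧ cnt 1 (fun i => ty (w i)) = y ∧
            cnt 2 (fun i => ty (w i)) = z} :=
      Nat.card_congr (Equiv.subtypeEquivRight hcnt)
    rw [e1, key (fun t => cnt 0 t = x ∧ cnt 1 t = y ∧ cnt 2 t = z)
        (by infer_instance) (fun t ht => ⟨ht.2.1, ht.2.2⟩)]
    rw [show (Finset.univ.filter (fun t : Fin (x+y+z) → Fin 3 =>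
        cnt 0 t = x ∧ cnt 1 t = y ∧ cnt 2 t = z)).card = BiregAux.T (x+y+z) x y z
      from rfl]
    rw [hdiv]
    ring
  · have e2 : Nat.card {w : Fin (x + y + z) → BiregStep c d //
        ((Finset.univ.filter (fun i => (w i).isDown)).card = x ∧
         (Finset.univ.filter (fun i => (w i).isHoriz)).card = y ∧
         (Finset.univ.filter (fun i => (w i).isUp)).card = z) ∧
        ∀ k : Fin (x + y + z),
          0 < ∑ i ∈ Finset.univ.filter (fun i : Fin (x + y + z) => (i : ℕ) ≤ (k : ℕ)),
              (w i).level}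
        = Nat.card {w : Fin (x + y + z) → BiregStep c d //
            (cnt 0 (fun i => ty (w i)) = x ∧ cnt 1 (fun i => ty (w i)) = y ∧
             cnt 2 (fun i => ty (w i)) = z) ∧ BiregAux.Pos (fun i => ty (w i))} := by
      refine Nat.card_congr (Equiv.subtypeEquivRight ?_)
      intro w
      rw [hcnt w, ← hpos w]
    rw [e2, key (fun t => (cnt 0 t = x ∧ cnt 1 t = y ∧ cnt 2 t = z) ∧ BiregAux.Pos t)
        (by infer_instance) (fun t ht => ⟨ht.1.2.1, ht.1.2.2⟩)]
    rw [show (Finset.univ.filter (fun t : Fin (x+y+z) → Fin 3 =>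
        (cnt 0 t = x ∧ cnt 1 t = y ∧ cnt 2 t = z) ∧ BiregAux.Pos t)).card
      = BiregAux.Pc (x+y+z) x y z from rfl]
    rw [hdiv, ← mul_assoc, hPv]
    ring
end

section
/- For integers t ≥ 1 and x, y, z ≥ 0 with x+y+z = t and z > x, the multinomial identity multinomial(t−1; x, y, z−1) − multinomial(t−1; z, y, x−1) = ((z−x)/t)·multinomial(t; x, y, z) holds, where multinomial(m; a,b,c) = m!/(a!b!c!) and a term is 0 if any index is negative. -/
/-- Trinomial coefficient `m!/(a!b!c!)` with integer indices, zero unless all indices are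
nonnegative and sum to `m`. -/
def trinom (m : ℕ) (a b c : ℤ) : ℕ :=
  if 0 ≤ a ∧ 0 ≤ b ∧ 0 ≤ c ∧ a + b + c = m then
    m.factorial / (a.toNat.factorial * b.toNat.factorial * c.toNat.factorial)
  else 0

/-!
Each term of the difference obeys the absorption identity
`t · trinom(t−1; a, b, c−1) = c · trinom(t; a, b, c)` (both sides are `t!/(a! b! (c−1)!)`, and
both vanish when `c = 0`); since `trinom` is symmetric in its outer indices, the two terms
combine to `(z − x) · trinom(t; x, y, z)`.
-/

open Nat

theorem factorial_mul_factorial_mul_factorial_dvd (a b c : ℕ) :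
    a ! * b ! * c ! ∣ (a + b + c)! := by
  rw [mul_assoc, add_assoc]
  exact (mul_dvd_mul_left _ (factorial_mul_factorial_dvd_factorial_add b c)).trans
    (factorial_mul_factorial_dvd_factorial_add a (b + c))

theorem trinom_natCast_mul_factorial (a b c : ℕ) :
    trinom (a + b + c) a b c * (a ! * b ! * c !) = (a + b + c)! := by
  rw [trinom, if_pos (by omega)]
  simpa using Nat.div_mul_cancel (factorial_mul_factorial_mul_factorial_dvd a b c)

theorem trinom_of_neg_right {c : ℤ} (hc : c < 0) (m : ℕ) (a b : ℤ) : trinom m a b c = 0 :=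
  if_neg (by omega)

theorem trinom_comm (m : ℕ) (a b c : ℤ) : trinom m a b c = trinom m c b a := by
  unfold trinom
  congr 1
  · apply propext; omega
  · ring_nf

theorem mul_trinom_sub_one {t : ℕ} {a b c : ℕ} (h : a + b + c = t) :
    t * trinom (t - 1) a b ((c : ℤ) - 1) = c * trinom t a b c := by
  rcases c with _ | k
  · simp [trinom_of_neg_right]
  subst h
  have hk : ((k + 1 : ℕ) : ℤ) - 1 = (k : ℕ) := by push_cast; ring
  rw [hk, show a + b + (k + 1) - 1 = a + b + k by omega]
  apply Nat.eq_of_mul_eq_mul_right (by positivity : 0 < a ! * b ! * (k + 1)!)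
  have hk1 := trinom_natCast_mul_factorial a b (k + 1)
  push_cast at hk1 ⊢
  calc (a + b + (k + 1)) * trinom (a + b + k) a b k * (a ! * b ! * (k + 1)!)
      = (k + 1) * ((a + b + k + 1) * (trinom (a + b + k) a b k * (a ! * b ! * k !))) := by
        rw [factorial_succ k]; ring
    _ = (k + 1) * (trinom (a + b + (k + 1)) a b (k + 1) * (a ! * b ! * (k + 1)!)) := by
        rw [hk1, trinom_natCast_mul_factorial, ← factorial_succ, add_assoc]
    _ = _ := by ring

theorem trinomial_identity_general (t : ℕ) (x y z : ℕ)
    (hsum : x + y + z = t) :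
    (t : ℤ) * ((trinom (t - 1) x y ((z : ℤ) - 1) : ℤ) -
        (trinom (t - 1) z y ((x : ℤ) - 1) : ℤ)) =
      ((z : ℤ) - (x : ℤ)) * (trinom t x y z : ℤ) := by
  have hz : (t : ℤ) * trinom (t - 1) x y ((z : ℤ) - 1) = z * trinom t x y z := by
    exact_mod_cast mul_trinom_sub_one hsum
  have hx : (t : ℤ) * trinom (t - 1) z y ((x : ℤ) - 1) = x * trinom t x y z := by
    rw [trinom_comm t x]
    exact_mod_cast mul_trinom_sub_one (by omega)
  rw [mul_sub, hz, hx, sub_mul]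

/-- The multinomial identity
`multinomial(t−1;x,y,z−1) − multinomial(t−1;z,y,x−1) = ((z−x)/t)·multinomial(t;x,y,z)`,
in the exact form `t·(… − …) = (z−x)·multinomial(t;x,y,z)`. -/
theorem trinomial_identity (t : ℕ) (ht : 1 ≤ t) (x y z : ℕ)
    (hsum : x + y + z = t) (hzx : x < z) :
    (t : ℤ) * ((trinom (t - 1) x y ((z : ℤ) - 1) : ℤ) -
        (trinom (t - 1) z y ((x : ℤ) - 1) : ℤ)) =
      ((z : ℤ) - (x : ℤ)) * (trinom t x y z : ℤ) :=
  trinomial_identity_general t x y z hsum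
end
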